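/- arXiv:2506.04883 — 7 statements merged into one kernel-verified Lean document; each statement's English description precedes it below -/
import Mathlib

section
/- Let f'(n) := ∑_{k=1}^{n} 2^{τ(k)}, where τ(k) is the number of positive divisors of k. Then the sequence of ratios f'(2n)/f'(n) tends to infinity as n → ∞. -/
/-- `τ(n)`: the number of positive divisors of `n`. -/
def tau (n : ℕ) : ℕ := n.divisors.card

/-- `f'(n) = ∑_{k=1}^{n} 2^{τ(k)}`. -/
def f' (n : ℕ) : ℕ := ∑ k ∈ Finset.Icc 1 n, 2 ^ tau k

open Nat Finset Filter

lemma tau_prime_pow {p : ℕ} (pp : p.Prime) (k : ℕ) : tau (p ^ k) = k + 1 := by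
  rw [tau, Nat.divisors_prime_pow pp, Finset.card_map, Finset.card_range]

lemma tau_coprime_mul {m n : ℕ} (h : Nat.Coprime m n) : tau (m * n) = tau m * tau n :=
  Nat.Coprime.card_divisors_mul h

lemma two_pow_omega_le_tau {m : ℕ} (hm : m ≠ 0) : 2 ^ m.primeFactors.card ≤ tau m := by
  rw [tau, Nat.card_divisors hm]
  calc 2 ^ m.primeFactors.card = ∏ _p ∈ m.primeFactors, 2 := (Finset.prod_const 2).symm
    _ ≤ ∏ p ∈ m.primeFactors, (m.factorization p + 1) := by
        apply Finset.prod_le_prod'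
        intro p hp
        have : m.factorization p ≠ 0 := by
          rw [← Finsupp.mem_support_iff, Nat.support_factorization]; exact hp
        omega

lemma tau_le_pow {m n : ℕ} (hm : m ≠ 0) (hmn : m ≤ n) :
    tau m ≤ (Nat.log 2 n + 1) ^ m.primeFactors.card := by
  rw [tau, Nat.card_divisors hm]
  calc ∏ p ∈ m.primeFactors, (m.factorization p + 1)
      ≤ ∏ _p ∈ m.primeFactors, (Nat.log 2 n + 1) := by
        apply Finset.prod_le_prod'
        intro p hp
        have hp2 : 2 ≤ p := (Nat.prime_of_mem_primeFactors hp).two_le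
        have h1 : 2 ^ m.factorization p ≤ p ^ m.factorization p :=
          Nat.pow_le_pow_left hp2 _
        have h2 : p ^ m.factorization p ≤ m := Nat.ordProj_le p hm
        have hn0 : n ≠ 0 := by omega
        have : m.factorization p ≤ Nat.log 2 n :=
          (Nat.le_log_iff_pow_le one_lt_two hn0).2 (le_trans h1 (le_trans h2 hmn))
        omega
    _ = (Nat.log 2 n + 1) ^ m.primeFactors.card := Finset.prod_const _

lemma tau_two_mul {m : ℕ} (hm : m ≠ 0) :
    tau (2 * m) = tau m + tau (ordCompl[2] m) := by
  set a := m.factorization 2 with ha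
  set u := ordCompl[2] m with hu
  have hcop : Nat.Coprime 2 u := Nat.coprime_ordCompl Nat.prime_two hm
  have hmu : 2 ^ a * u = m := Nat.ordProj_mul_ordCompl_eq_self m 2
  have h1 : tau m = (a + 1) * tau u := by
    rw [← hmu, tau_coprime_mul (Nat.Coprime.pow_left _ hcop), tau_prime_pow Nat.prime_two]
  have h2 : tau (2 * m) = (a + 2) * tau u := by
    have : 2 * m = 2 ^ (a + 1) * u := by rw [← hmu]; ring
    rw [this, tau_coprime_mul (Nat.Coprime.pow_left _ hcop), tau_prime_pow Nat.prime_two]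
  rw [h1, h2]; ring

lemma nth_prime_lt (i : ℕ) : Nat.nth Nat.Prime i < 2 ^ (i + 2) := by
  induction i with
  | zero => rw [Nat.nth_prime_zero_eq_two]; norm_num
  | succ i ih =>
    obtain ⟨q, hq, hlt, hle⟩ :=
      Nat.exists_prime_lt_and_le_two_mul (Nat.nth Nat.Prime i) (Nat.prime_nth_prime i).ne_zero
    have hnth : Nat.nth Nat.Prime (i + 1) ≤ q := by
      by_contra h
      push_neg at h
      exact absurd (Nat.le_nth_of_lt_nth_succ h hq) (by omega)
    calc Nat.nth Nat.Prime (i + 1) ≤ q := hnth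
      _ ≤ 2 * Nat.nth Nat.Prime i := hle
      _ < 2 * 2 ^ (i + 2) := by omega
      _ = 2 ^ (i + 1 + 2) := by ring

lemma tau_primes_prod (r : ℕ) :
    tau (∏ i ∈ Finset.range r, Nat.nth Nat.Prime i) = 2 ^ r ∧
      0 < ∏ i ∈ Finset.range r, Nat.nth Nat.Prime i := by
  induction r with
  | zero => simp [tau]
  | succ r ih =>
    rw [Finset.prod_range_succ]
    have hcop : Nat.Coprime (∏ i ∈ Finset.range r, Nat.nth Nat.Prime i) (Nat.nth Nat.Prime r) := by
      apply Nat.Coprime.prod_left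
      intro i hi
      rw [Nat.coprime_primes (Nat.prime_nth_prime i) (Nat.prime_nth_prime r)]
      have : Nat.nth Nat.Prime i < Nat.nth Nat.Prime r :=
        (Nat.nth_lt_nth Nat.infinite_setOf_prime).2 (Finset.mem_range.1 hi)
      omega
    constructor
    · rw [tau_coprime_mul hcop, ih.1]
      have : tau (Nat.nth Nat.Prime r) = 2 := by
        have := tau_prime_pow (Nat.prime_nth_prime r) 1
        rwa [pow_one] at this
      rw [this]; ring
    · exact Nat.mul_pos ih.2 (Nat.prime_nth_prime r).pos

lemma primes_prod_le (r : ℕ) :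
    ∏ i ∈ Finset.range r, Nat.nth Nat.Prime i ≤ 2 ^ (r * (r + 1)) := by
  calc ∏ i ∈ Finset.range r, Nat.nth Nat.Prime i
      ≤ ∏ i ∈ Finset.range r, 2 ^ (i + 2) := by
        apply Finset.prod_le_prod'
        intro i _
        exact le_of_lt (nth_prime_lt i)
    _ = 2 ^ (∑ i ∈ Finset.range r, (i + 2)) := by rw [Finset.prod_pow_eq_pow_sum]
    _ ≤ 2 ^ (r * (r + 1)) := by
        apply Nat.pow_le_pow_right (by norm_num)
        calc ∑ i ∈ Finset.range r, (i + 2) ≤ ∑ _i ∈ Finset.range r, (r + 1) := by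
              apply Finset.sum_le_sum
              intro i hi
              have := Finset.mem_range.1 hi
              omega
          _ = r * (r + 1) := by rw [Finset.sum_const, Finset.card_range, smul_eq_mul]

lemma key_numeric (C t : ℕ) (ht : 4 * C + 100 ≤ t) :
    (t + 1) * (C + t + 4) ≤ 2 ^ (t / 2 - 1) := by
  have h8 : t / 8 + 1 ≤ 2 ^ (t / 8) := Nat.lt_two_pow_self (n := _)
  have hC : C + 4 ≤ 2 ^ (C + 3) := by
    have := Nat.lt_two_pow_self (n := C + 3)
    omega
  have hA : t + 1 ≤ 2 ^ (t / 8 + 3) := by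
    have : t + 1 ≤ 8 * (t / 8 + 1) := by omega
    calc t + 1 ≤ 8 * (t / 8 + 1) := this
      _ ≤ 8 * 2 ^ (t / 8) := by exact Nat.mul_le_mul_left 8 h8
      _ = 2 ^ (t / 8 + 3) := by rw [pow_add]; ring
  have hB : C + t + 4 ≤ 2 ^ (t / 8 + C + 7) := by
    have h1 : 2 ^ (t / 8 + 3) ≤ 2 ^ (t / 8 + C + 6) :=
      Nat.pow_le_pow_right (by norm_num) (by omega)
    have h2 : 2 ^ (C + 3) ≤ 2 ^ (t / 8 + C + 6) :=
      Nat.pow_le_pow_right (by norm_num) (by omega)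
    have h3 : 2 ^ (t / 8 + C + 6) + 2 ^ (t / 8 + C + 6) = 2 ^ (t / 8 + C + 7) := by
      rw [pow_succ]; ring
    omega
  calc (t + 1) * (C + t + 4) ≤ 2 ^ (t / 8 + 3) * 2 ^ (t / 8 + C + 7) :=
        Nat.mul_le_mul hA hB
    _ = 2 ^ (t / 8 + 3 + (t / 8 + C + 7)) := by rw [← pow_add]
    _ ≤ 2 ^ (t / 2 - 1) := Nat.pow_le_pow_right (by norm_num) (by omega)

lemma main_nat (C : ℕ) : ∀ᶠ n : ℕ in Filter.atTop, C * f' n ≤ f' (2 * n) := by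
  have hlog : Filter.Tendsto (fun n : ℕ => Nat.log 2 (Nat.log 2 n)) Filter.atTop Filter.atTop := by
    apply Filter.tendsto_atTop_atTop.2
    intro b
    refine ⟨2 ^ 2 ^ b, fun n hn => ?_⟩
    calc b = Nat.log 2 (Nat.log 2 (2 ^ 2 ^ b)) := by
          rw [Nat.log_pow one_lt_two, Nat.log_pow one_lt_two]
      _ ≤ Nat.log 2 (Nat.log 2 n) :=
          Nat.log_mono_right (Nat.log_mono_right hn)
  filter_upwards [hlog.eventually_ge_atTop (4 * C + 100), Filter.eventually_ge_atTop 2]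
    with n ht hn2
  set L := Nat.log 2 n with hL
  set t := Nat.log 2 L with htdef
  -- basic facts
  have hn0 : n ≠ 0 := by omega
  have hLne : L ≠ 0 := by
    intro h
    have ht0 : t = 0 := by rw [htdef, h]; simp
    omega
  have hLt : 2 ^ t ≤ L := Nat.pow_log_le_self 2 hLne
  have ht2 : 100 ≤ t := by omega
  have hL4 : 4 ≤ L := by
    have : 2 ^ 100 ≤ 2 ^ t := Nat.pow_le_pow_right (by norm_num) ht2
    have h4 : (4 : ℕ) ≤ 2 ^ 100 := by norm_num
    omega
  -- the maximizer
  obtain ⟨k, hk_mem, hk_max⟩ := Finset.exists_max_image (Finset.Icc 1 n) tau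
    ⟨1, by simp; omega⟩
  rw [Finset.mem_Icc] at hk_mem
  have hk0 : k ≠ 0 := by omega
  -- r and the primorial lower bound on tau k
  set r := Nat.sqrt L / 2 with hr
  have hrr : r * (r + 1) ≤ L := by
    have hs2 : 2 ≤ Nat.sqrt L := by
      rw [Nat.le_sqrt]; omega
    have h1 : r ≤ Nat.sqrt L := by omega
    have h2 : r + 1 ≤ Nat.sqrt L := by omega
    calc r * (r + 1) ≤ Nat.sqrt L * Nat.sqrt L := Nat.mul_le_mul h1 h2
      _ ≤ L := by have := Nat.sqrt_le' L; rwa [pow_two] at this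
  have hPle : ∏ i ∈ Finset.range r, Nat.nth Nat.Prime i ≤ n := by
    calc ∏ i ∈ Finset.range r, Nat.nth Nat.Prime i ≤ 2 ^ (r * (r + 1)) := primes_prod_le r
      _ ≤ 2 ^ L := Nat.pow_le_pow_right (by norm_num) hrr
      _ ≤ n := Nat.pow_log_le_self 2 hn0
  have hPpos := (tau_primes_prod r).2
  have htauk_lb : 2 ^ r ≤ tau k := by
    rw [← (tau_primes_prod r).1]
    exact hk_max _ (Finset.mem_Icc.2 ⟨hPpos, hPle⟩)
  -- upper bound on tau k in terms of w
  set w := k.primeFactors.card with hw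
  have htauk_ub : tau k ≤ (L + 1) ^ w := tau_le_pow hk0 hk_mem.2
  -- L + 1 ≤ 2 ^ (t+1)
  have hLpow : L + 1 ≤ 2 ^ (t + 1) := Nat.lt_pow_succ_log_self one_lt_two L
  have hrsw : r ≤ (t + 1) * w := by
    have h1 : 2 ^ r ≤ 2 ^ ((t + 1) * w) := by
      calc 2 ^ r ≤ tau k := htauk_lb
        _ ≤ (L + 1) ^ w := htauk_ub
        _ ≤ (2 ^ (t + 1)) ^ w := Nat.pow_le_pow_left hLpow w
        _ = 2 ^ ((t + 1) * w) := by rw [← pow_mul]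
    exact (Nat.pow_le_pow_iff_right one_lt_two).1 h1
  have hwge : r / (t + 1) ≤ w := by
    have := Nat.div_le_div_right (c := t + 1) hrsw
    rwa [Nat.mul_div_cancel_left w (by omega : 0 < t + 1)] at this
  -- lower bound on r / (t+1)
  have hsqrtL : 2 ^ (t / 2) ≤ Nat.sqrt L := by
    rw [Nat.le_sqrt]
    calc 2 ^ (t / 2) * 2 ^ (t / 2) = 2 ^ (t / 2 + t / 2) := by rw [← pow_add]
      _ ≤ 2 ^ t := Nat.pow_le_pow_right (by norm_num) (by omega)
      _ ≤ L := hLt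
  have hr_lb : 2 ^ (t / 2 - 1) ≤ r := by
    have h1 : 2 ^ (t / 2 - 1) * 2 ≤ Nat.sqrt L := by
      calc 2 ^ (t / 2 - 1) * 2 = 2 ^ (t / 2 - 1 + 1) := by rw [pow_succ]
        _ = 2 ^ (t / 2) := by congr 1; omega
        _ ≤ Nat.sqrt L := hsqrtL
    rw [hr]
    exact (Nat.le_div_iff_mul_le (by norm_num)).2 h1
  have hkey := key_numeric C t ht
  have hdiv : C + t + 4 ≤ r / (t + 1) := by
    have h1 : (C + t + 4) * (t + 1) ≤ r := by
      calc (C + t + 4) * (t + 1) = (t + 1) * (C + t + 4) := by ring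
        _ ≤ 2 ^ (t / 2 - 1) := hkey
        _ ≤ r := hr_lb
    exact (Nat.le_div_iff_mul_le (by omega)).2 h1
  have hw_lb : C + t + 4 ≤ w := le_trans hdiv hwge
  -- odd part
  set u := ordCompl[2] k with hu
  have hu0 : u ≠ 0 := (Nat.ordCompl_pos 2 hk0).ne'
  have homega_u : w - 1 ≤ u.primeFactors.card := by
    have hmu : 2 ^ k.factorization 2 * u = k := Nat.ordProj_mul_ordCompl_eq_self k 2
    have hsub : k.primeFactors ⊆ insert 2 u.primeFactors := by
      intro p hp
      rw [← hmu, Nat.primeFactors_mul (by positivity) hu0] at hp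
      rcases Finset.mem_union.1 hp with h | h
      · have hpp := Nat.prime_of_mem_primeFactors h
        have hdvd := Nat.dvd_of_mem_primeFactors h
        have : p = 2 := (Nat.prime_dvd_prime_iff_eq hpp Nat.prime_two).1
          (hpp.dvd_of_dvd_pow hdvd)
        simp [this]
      · exact Finset.mem_insert_of_mem h
    have := Finset.card_le_card hsub
    have hcard := Finset.card_insert_le 2 u.primeFactors
    omega
  have htau_u : C + L + 1 ≤ tau u := by
    have h1 : 2 ^ (w - 1) ≤ tau u := by
      calc 2 ^ (w - 1) ≤ 2 ^ u.primeFactors.card :=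
            Nat.pow_le_pow_right (by norm_num) homega_u
        _ ≤ tau u := two_pow_omega_le_tau hu0
    have h2 : 2 ^ (C + t + 3) ≤ 2 ^ (w - 1) :=
      Nat.pow_le_pow_right (by norm_num) (by omega)
    have h3 : C + L + 1 ≤ 2 ^ (C + t + 3) := by
      have hC2 : C ≤ 2 ^ (C + t + 2) := by
        have := Nat.lt_two_pow_self (n := C)
        have : 2 ^ C ≤ 2 ^ (C + t + 2) := Nat.pow_le_pow_right (by norm_num) (by omega)
        omega
      have hL2 : L + 1 ≤ 2 ^ (C + t + 2) := by
        have : 2 ^ (t + 1) ≤ 2 ^ (C + t + 2) := Nat.pow_le_pow_right (by norm_num) (by omega)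
        omega
      have : 2 ^ (C + t + 2) + 2 ^ (C + t + 2) = 2 ^ (C + t + 3) := by rw [pow_succ]; ring
      omega
    omega
  -- assemble
  have hfn_ub : f' n ≤ n * 2 ^ tau k := by
    rw [f']
    calc ∑ j ∈ Finset.Icc 1 n, 2 ^ tau j ≤ #(Finset.Icc 1 n) • 2 ^ tau k := by
          apply Finset.sum_le_card_nsmul
          intro j hj
          exact Nat.pow_le_pow_right (by norm_num) (hk_max j hj)
      _ = n * 2 ^ tau k := by rw [Nat.card_Icc, smul_eq_mul, Nat.add_sub_cancel]
  have hf2n_lb : 2 ^ tau (2 * k) ≤ f' (2 * n) := by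
    rw [f']
    apply Finset.single_le_sum (f := fun j => 2 ^ tau j) (fun i _ => Nat.zero_le _)
    rw [Finset.mem_Icc]
    omega
  have hCn : C * n ≤ 2 ^ (C + L + 1) := by
    have h1 : C ≤ 2 ^ C := le_of_lt (Nat.lt_two_pow_self (n := C))
    have h2 : n < 2 ^ (L + 1) := Nat.lt_pow_succ_log_self one_lt_two n
    calc C * n ≤ 2 ^ C * 2 ^ (L + 1) := Nat.mul_le_mul h1 (le_of_lt h2)
      _ = 2 ^ (C + L + 1) := by rw [← pow_add, add_assoc]
  calc C * f' n ≤ C * (n * 2 ^ tau k) := Nat.mul_le_mul_left C hfn_ub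
    _ = (C * n) * 2 ^ tau k := by ring
    _ ≤ 2 ^ (C + L + 1) * 2 ^ tau k := Nat.mul_le_mul_right _ hCn
    _ ≤ 2 ^ tau u * 2 ^ tau k := by
        apply Nat.mul_le_mul_right
        exact Nat.pow_le_pow_right (by norm_num) htau_u
    _ = 2 ^ (tau k + tau u) := by rw [← pow_add]; congr 1; omega
    _ = 2 ^ tau (2 * k) := by rw [tau_two_mul hk0]
    _ ≤ f' (2 * n) := hf2n_lb

lemma f'_pos {n : ℕ} (hn : 1 ≤ n) : 0 < f' n := by
  have : (2 : ℕ) ^ tau 1 ≤ f' n := by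
    rw [f']
    apply Finset.single_le_sum (f := fun j => 2 ^ tau j) (fun i _ => Nat.zero_le _)
    rw [Finset.mem_Icc]; omega
  exact lt_of_lt_of_le (Nat.pow_pos (by norm_num)) this

/-- The ratios `f'(2n)/f'(n)` tend to infinity as `n → ∞`. -/
theorem fprime_ratio_tendsto_atTop :
    Filter.Tendsto (fun n : ℕ => (f' (2 * n) : ℝ) / (f' n : ℝ))
      Filter.atTop Filter.atTop := by
  rw [Filter.tendsto_atTop]
  intro b
  obtain ⟨C, hC⟩ := exists_nat_ge b
  filter_upwards [main_nat C, Filter.eventually_ge_atTop 1] with n hn hn1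
  have hpos : (0 : ℝ) < (f' n : ℝ) := by
    exact_mod_cast f'_pos hn1
  have h1 : (C : ℝ) * (f' n : ℝ) ≤ (f' (2 * n) : ℝ) := by
    exact_mod_cast hn
  calc b ≤ (C : ℝ) := hC
    _ ≤ (f' (2 * n) : ℝ) / (f' n : ℝ) := by
        rw [le_div_iff₀ hpos]
        exact h1
end

section
/- Assume that τ(2^N + 1)/N tends to infinity as N tends to infinity along the set of indices of highly composite Mersenne numbers (i.e., for every real C there are only finitely many indices N of highly composite Mersenne numbers with τ(2^N + 1)/N ≤ C). Then f(2n)/f(n) → ∞ as n → ∞, where f(n) := ∑_{k=1}^{n} τ(2^k − 1). -/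
/-- `f(n) = ∑_{k=1}^{n} τ(2^k - 1)`. -/
def f (n : ℕ) : ℕ := ∑ k ∈ Finset.Icc 1 n, tau (2 ^ k - 1)

/-- `N` is an index of a highly composite Mersenne number:
`τ(2^N - 1) > τ(2^m - 1)` for all `1 ≤ m < N`. -/
def IsHCMIndex (N : ℕ) : Prop :=
  0 < N ∧ ∀ m : ℕ, 1 ≤ m → m < N → tau (2 ^ m - 1) < tau (2 ^ N - 1)

lemma tau_le_of_dvd {a b : ℕ} (hb : b ≠ 0) (hab : a ∣ b) : tau a ≤ tau b :=
  Finset.card_le_card (Nat.divisors_subset_of_dvd hb hab)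

lemma two_pow_sub_one_dvd {m k : ℕ} (h : m ∣ k) : 2 ^ m - 1 ∣ 2 ^ k - 1 := by
  obtain ⟨t, rfl⟩ := h
  simpa only [one_pow, ← pow_mul] using Nat.sub_dvd_pow_sub_pow (2 ^ m) 1 t

lemma two_pow_sub_one_ne_zero {k : ℕ} (hk : 1 ≤ k) : 2 ^ k - 1 ≠ 0 := by
  have h : 2 ^ 1 ≤ 2 ^ k := Nat.pow_le_pow_right (by norm_num) hk
  simp at h; omega

lemma tau_pos {m : ℕ} (hm : m ≠ 0) : 1 ≤ tau m :=
  Finset.card_pos.2 ⟨1, Nat.one_mem_divisors.2 hm⟩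

lemma coprime_mersenne {N : ℕ} (hN : 1 ≤ N) :
    Nat.Coprime (2 ^ N - 1) (2 ^ N + 1) := by
  have h2 : 2 ^ 1 ≤ 2 ^ N := Nat.pow_le_pow_right (by norm_num) hN
  simp only [pow_one] at h2
  have hdvd : (2 : ℕ) ∣ 2 ^ N := dvd_pow_self 2 (by omega)
  have hodd : ¬ (2 : ℕ) ∣ (2 ^ N - 1) := by omega
  have hg : Nat.gcd (2 ^ N - 1) (2 ^ N + 1) ∣ 2 := by
    have h1 := Nat.gcd_dvd_left (2 ^ N - 1) (2 ^ N + 1)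
    have h2' := Nat.gcd_dvd_right (2 ^ N - 1) (2 ^ N + 1)
    have h3 := Nat.dvd_sub h2' h1
    have heq : 2 ^ N + 1 - (2 ^ N - 1) = 2 := by omega
    rwa [heq] at h3
  rcases (Nat.dvd_prime Nat.prime_two).1 hg with h | h
  · exact h
  · have hg2 := Nat.gcd_dvd_left (2 ^ N - 1) (2 ^ N + 1)
    rw [h] at hg2
    exact absurd hg2 hodd

lemma tau_double {N : ℕ} (hN : 1 ≤ N) :
    tau (2 ^ (2 * N) - 1) = tau (2 ^ N - 1) * tau (2 ^ N + 1) := by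
  have hb : 1 ≤ 2 ^ N := Nat.one_le_two_pow
  obtain ⟨b, hbb⟩ : ∃ b, 2 ^ N = b + 1 := ⟨2 ^ N - 1, by omega⟩
  have heq : 2 ^ (2 * N) - 1 = (2 ^ N - 1) * (2 ^ N + 1) := by
    have hp : 2 ^ (2 * N) = 2 ^ N * 2 ^ N := by rw [two_mul, pow_add]
    apply Nat.sub_eq_of_eq_add
    rw [hp, hbb]
    simp only [Nat.add_sub_cancel]
    ring
  rw [heq]
  exact (coprime_mersenne hN).card_divisors_mul

lemma tau_le_tau_mersenne {k : ℕ} (hk : 1 ≤ k) : tau k ≤ tau (2 ^ k - 1) := by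
  apply Finset.card_le_card_of_injOn (fun d => 2 ^ d - 1)
  · intro d hd
    rw [Finset.mem_coe, Nat.mem_divisors] at hd ⊢
    exact ⟨two_pow_sub_one_dvd hd.1, two_pow_sub_one_ne_zero hk⟩
  · intro a ha b hb hab
    have h1 : (1 : ℕ) ≤ 2 ^ a := Nat.one_le_two_pow
    have h2 : (1 : ℕ) ≤ 2 ^ b := Nat.one_le_two_pow
    simp only at hab
    have : (2 : ℕ) ^ a = 2 ^ b := by omega
    exact Nat.pow_right_injective le_rfl this

lemma exists_record (n : ℕ) (hn : 1 ≤ n) :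
    ∃ N, 1 ≤ N ∧ N ≤ n ∧ IsHCMIndex N ∧
      ∀ m, 1 ≤ m → m ≤ n → tau (2 ^ m - 1) ≤ tau (2 ^ N - 1) := by
  classical
  have hne : (Finset.Icc 1 n).Nonempty := ⟨1, Finset.mem_Icc.2 ⟨le_refl 1, hn⟩⟩
  obtain ⟨k0, hk0, hmax⟩ :=
    Finset.exists_max_image (Finset.Icc 1 n) (fun k => tau (2 ^ k - 1)) hne
  have hP : ∃ k, 1 ≤ k ∧ k ≤ n ∧
      ∀ m, 1 ≤ m → m ≤ n → tau (2 ^ m - 1) ≤ tau (2 ^ k - 1) := by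
    obtain ⟨h1, h2⟩ := Finset.mem_Icc.1 hk0
    exact ⟨k0, h1, h2, fun m hm1 hm2 => hmax m (Finset.mem_Icc.2 ⟨hm1, hm2⟩)⟩
  obtain ⟨hN1, hNn, hNmax⟩ := Nat.find_spec hP
  refine ⟨Nat.find hP, hN1, hNn, ⟨hN1, fun m hm1 hmN => ?_⟩, hNmax⟩
  by_contra hcon
  push_neg at hcon
  exact Nat.find_min hP hmN
    ⟨hm1, le_trans hmN.le hNn, fun j hj1 hj2 => le_trans (hNmax j hj1 hj2) hcon⟩

lemma tau_two_pow (j : ℕ) : tau (2 ^ j) = j + 1 := by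
  rw [tau, Nat.divisors_prime_pow Nat.prime_two, Finset.card_map, Finset.card_range]

set_option maxHeartbeats 1000000 in
/-- If `τ(2^N + 1)/N → ∞` along indices of highly composite Mersenne numbers,
then `f(2n)/f(n) → ∞`. -/
theorem f_ratio_tendsto_atTop_of_hcm_conjecture
    (h : ∀ C : ℝ,
      {N : ℕ | IsHCMIndex N ∧ (tau (2 ^ N + 1) : ℝ) / (N : ℝ) ≤ C}.Finite) :
    Filter.Tendsto (fun n : ℕ => (f (2 * n) : ℝ) / (f n : ℝ))
      Filter.atTop Filter.atTop := by
  rw [Filter.tendsto_atTop]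
  intro C
  set C' : ℝ := max C 1 with hC'def
  have hC'pos : (0 : ℝ) < C' := lt_of_lt_of_le one_pos (le_max_right _ _)
  obtain ⟨B, hB⟩ := (h (2 * C')).bddAbove
  set T : ℕ := (Finset.Icc 1 B).sup (fun m => tau (2 ^ m - 1)) with hT
  set K : ℕ := 2 ^ (T + 1) with hKdef
  have hK1 : 1 ≤ K := Nat.one_le_two_pow
  have hKtau : T < tau (2 ^ K - 1) := by
    have h1 : tau K = T + 2 := by rw [hKdef, tau_two_pow]
    have h2 := tau_le_tau_mersenne hK1
    omega
  filter_upwards [Filter.eventually_ge_atTop K] with n hn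
  have hn1 : 1 ≤ n := le_trans hK1 hn
  obtain ⟨N, hN1, hNn, hHCM, hNmax⟩ := exists_record n hn1
  have hNB : B < N := by
    by_contra hle
    push_neg at hle
    have h1 : tau (2 ^ N - 1) ≤ T :=
      Finset.le_sup (f := fun m => tau (2 ^ m - 1)) (Finset.mem_Icc.2 ⟨hN1, hle⟩)
    have h2 : tau (2 ^ K - 1) ≤ tau (2 ^ N - 1) := hNmax K hK1 hn
    omega
  have hNS : ¬ ((tau (2 ^ N + 1) : ℝ) / (N : ℝ) ≤ 2 * C') := fun hcon =>
    absurd (hB (Set.mem_setOf.2 ⟨hHCM, hcon⟩)) (not_le.2 hNB)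
  push_neg at hNS
  have hNpos : (0 : ℝ) < (N : ℝ) := by exact_mod_cast hN1
  have hτ2 : 2 * C' * (N : ℝ) < (tau (2 ^ N + 1) : ℝ) := by
    rwa [lt_div_iff₀ hNpos] at hNS
  -- upper bound for f n
  have hfn : f n ≤ n * tau (2 ^ N - 1) := by
    calc f n ≤ ∑ _k ∈ Finset.Icc 1 n, tau (2 ^ N - 1) :=
          Finset.sum_le_sum fun k hk =>
            hNmax k (Finset.mem_Icc.1 hk).1 (Finset.mem_Icc.1 hk).2
      _ = n * tau (2 ^ N - 1) := by
          rw [Finset.sum_const, Nat.card_Icc, smul_eq_mul, Nat.add_sub_cancel]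
  -- lower bound for f (2n)
  set q : ℕ := n / N with hqdef
  have hNpos' : 0 < N := hN1
  have hq1 : 1 ≤ q := (Nat.one_le_div_iff hNpos').2 hNn
  have hqN : q * N ≤ n := Nat.div_mul_le_self n N
  have hn2q : n ≤ 2 * q * N := by
    have h2 : N * q + n % N = n := by rw [hqdef]; exact Nat.div_add_mod n N
    have h3 : n % N < N := Nat.mod_lt _ hNpos'
    have h4 : N ≤ q * N := by
      rw [mul_comm]; exact Nat.le_mul_of_pos_right N hq1
    have h5 : N * q = q * N := mul_comm N q
    linarith [h2, h3, h4, h5]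
  have hf2n : q * (tau (2 ^ N - 1) * tau (2 ^ N + 1)) ≤ f (2 * n) := by
    have key : ∀ j ∈ Finset.Icc 1 q,
        tau (2 ^ N - 1) * tau (2 ^ N + 1) ≤ tau (2 ^ (2 * N * j) - 1) := by
      intro j hj
      obtain ⟨hj1, _⟩ := Finset.mem_Icc.1 hj
      rw [← tau_double hN1]
      have hpos : 1 ≤ 2 * N * j := by nlinarith
      exact tau_le_of_dvd (two_pow_sub_one_ne_zero hpos)
        (two_pow_sub_one_dvd ⟨j, rfl⟩)
    have hinj : Set.InjOn (fun j => 2 * N * j) (Finset.Icc 1 q) := by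
      intro a _ b _ hab
      simp only at hab
      exact Nat.eq_of_mul_eq_mul_left (by omega) hab
    have hsub : (Finset.Icc 1 q).image (fun j => 2 * N * j) ⊆ Finset.Icc 1 (2 * n) := by
      intro k hk
      obtain ⟨j, hj, rfl⟩ := Finset.mem_image.1 hk
      obtain ⟨hj1, hjq⟩ := Finset.mem_Icc.1 hj
      refine Finset.mem_Icc.2 ⟨by nlinarith, ?_⟩
      have : N * j ≤ N * q := Nat.mul_le_mul_left N hjq
      nlinarith
    calc q * (tau (2 ^ N - 1) * tau (2 ^ N + 1))
        = ∑ _j ∈ Finset.Icc 1 q, tau (2 ^ N - 1) * tau (2 ^ N + 1) := by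
          rw [Finset.sum_const, Nat.card_Icc, smul_eq_mul, Nat.add_sub_cancel]
      _ ≤ ∑ j ∈ Finset.Icc 1 q, tau (2 ^ (2 * N * j) - 1) := Finset.sum_le_sum key
      _ = ∑ k ∈ (Finset.Icc 1 q).image (fun j => 2 * N * j), tau (2 ^ k - 1) :=
          (Finset.sum_image (f := fun k => tau (2 ^ k - 1)) (g := fun j => 2 * N * j)
            fun a ha b hb hab => hinj ha hb hab).symm
      _ ≤ f (2 * n) := Finset.sum_le_sum_of_subset hsub
  -- positivity of f n
  have hfpos : (0 : ℝ) < (f n : ℝ) := by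
    have h1 : tau (2 ^ 1 - 1) ≤ f n :=
      Finset.single_le_sum (f := fun k => tau (2 ^ k - 1))
        (fun i _ => Nat.zero_le _) (Finset.mem_Icc.2 ⟨le_refl 1, hn1⟩)
    have h2 : tau (2 ^ 1 - 1) = 1 := by simp [tau]
    have : 1 ≤ f n := h2 ▸ h1
    exact_mod_cast Nat.lt_of_lt_of_le Nat.zero_lt_one this
  rw [le_div_iff₀ hfpos]
  have R1 : (f n : ℝ) ≤ (n : ℝ) * (tau (2 ^ N - 1) : ℝ) := by exact_mod_cast hfn
  have R2 : (q : ℝ) * ((tau (2 ^ N - 1) : ℝ) * (tau (2 ^ N + 1) : ℝ)) ≤ (f (2 * n) : ℝ) := by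
    exact_mod_cast hf2n
  have R3 : (n : ℝ) ≤ 2 * (q : ℝ) * (N : ℝ) := by exact_mod_cast hn2q
  have R4 : (1 : ℝ) ≤ (tau (2 ^ N - 1) : ℝ) := by
    exact_mod_cast tau_pos (two_pow_sub_one_ne_zero hN1)
  have hqpos : (0 : ℝ) ≤ (q : ℝ) := Nat.cast_nonneg q
  calc C * (f n : ℝ) ≤ C' * (f n : ℝ) :=
        mul_le_mul_of_nonneg_right (le_max_left _ _) hfpos.le
    _ ≤ C' * ((n : ℝ) * (tau (2 ^ N - 1) : ℝ)) := by
        apply mul_le_mul_of_nonneg_left R1 hC'pos.le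
    _ ≤ C' * ((2 * (q : ℝ) * (N : ℝ)) * (tau (2 ^ N - 1) : ℝ)) := by
        apply mul_le_mul_of_nonneg_left
          (mul_le_mul_of_nonneg_right R3 (by linarith)) hC'pos.le
    _ = (q : ℝ) * ((tau (2 ^ N - 1) : ℝ) * (2 * C' * (N : ℝ))) := by ring
    _ ≤ (q : ℝ) * ((tau (2 ^ N - 1) : ℝ) * (tau (2 ^ N + 1) : ℝ)) := by
        apply mul_le_mul_of_nonneg_left
          (mul_le_mul_of_nonneg_left hτ2.le (by linarith)) hqpos
    _ ≤ (f (2 * n) : ℝ) := R2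
end

section
/- Assume there exists an integer d₀ ≥ 2 such that ω(Φ_d(2)) ≤ 10·log d holds for every integer d ≥ d₀. Then τ(2^N + 1)/N tends to infinity as N tends to infinity along the set of indices of highly composite Mersenne numbers; that is, for every real C there are only finitely many indices N of highly composite Mersenne numbers with τ(2^N + 1)/N ≤ C. -/
/-- `ω(n)`: the number of distinct prime factors of `n`. -/
def omega (n : ℕ) : ℕ := n.primeFactors.card

/-- `Φ_d(2)`: the value of the `d`-th cyclotomic polynomial at `2`, as a natural number. -/
noncomputable def Phi2 (d : ℕ) : ℕ := ((Polynomial.cyclotomic d ℤ).eval 2).toNat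

open Polynomial Finset

lemma phi2_pos (d : ℕ) : 0 < Phi2 d := by
  have h : (0:ℤ) < (Polynomial.cyclotomic d ℤ).eval 2 :=
    Polynomial.cyclotomic_pos' d (by norm_num)
  unfold Phi2
  omega

lemma phi2_cast (d : ℕ) : ((Phi2 d : ℤ)) = (Polynomial.cyclotomic d ℤ).eval 2 := by
  have h : (0:ℤ) < (Polynomial.cyclotomic d ℤ).eval 2 :=
    Polynomial.cyclotomic_pos' d (by norm_num)
  unfold Phi2
  exact Int.toNat_of_nonneg h.le

lemma two_le_phi2 {d : ℕ} (hd : 2 ≤ d) : 2 ≤ Phi2 d := by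
  have h := Polynomial.sub_one_pow_totient_lt_natAbs_cyclotomic_eval (n := d) (q := 2)
    (by omega) (by norm_num)
  have h2 : ((Polynomial.cyclotomic d ℤ).eval 2).natAbs = Phi2 d := by
    have hpos : (0:ℤ) ≤ (Polynomial.cyclotomic d ℤ).eval 2 :=
      (Polynomial.cyclotomic_pos' d (by norm_num)).le
    unfold Phi2
    omega
  simp only [Nat.cast_ofNat] at h
  rw [h2] at h
  have : (2 - 1 : ℕ) ^ d.totient = 1 := by simp
  omega

lemma prod_phi2 {n : ℕ} (hn : 0 < n) : ∏ d ∈ n.divisors, Phi2 d = 2 ^ n - 1 := by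
  have h := Polynomial.prod_cyclotomic_eq_X_pow_sub_one hn ℤ
  have h2 : ((∏ d ∈ n.divisors, Phi2 d : ℕ) : ℤ) = ((2:ℕ) ^ n - 1 : ℕ) := by
    push_cast [phi2_cast]
    rw [← Polynomial.eval_prod, h]
    simp
  exact_mod_cast h2

lemma phi2_dvd {d n : ℕ} (hn : 0 < n) (hd : d ∣ n) : Phi2 d ∣ 2 ^ n - 1 := by
  rw [← prod_phi2 hn]
  exact Finset.dvd_prod_of_mem _ (Nat.mem_divisors.mpr ⟨hd, hn.ne'⟩)

lemma phi2_mul_dvd {m n e : ℕ} (hm : 0 < m) (hn : 0 < n) (hmn : m ∣ n) (he : e ∣ n)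
    (hem : ¬ e ∣ m) : Phi2 e * (2 ^ m - 1) ∣ 2 ^ n - 1 := by
  have hsub : insert e m.divisors ⊆ n.divisors := by
    intro x hx
    rcases Finset.mem_insert.mp hx with rfl | hx
    · exact Nat.mem_divisors.mpr ⟨he, hn.ne'⟩
    · exact Nat.mem_divisors.mpr ⟨(Nat.mem_divisors.mp hx).1.trans hmn, hn.ne'⟩
  have hnotmem : e ∉ m.divisors := fun hx => hem (Nat.mem_divisors.mp hx).1
  have := Finset.prod_dvd_prod_of_subset _ _ Phi2 hsub
  rwa [Finset.prod_insert hnotmem, prod_phi2 hm, prod_phi2 hn] at this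

lemma dvd_iff_zmod {q n : ℕ} (hq : q.Prime) (hn : 0 < n) :
    q ∣ 2 ^ n - 1 ↔ (2 : ZMod q) ^ n = 1 := by
  have h1 : (1:ℕ) ≤ 2 ^ n := Nat.one_le_two_pow
  rw [← ZMod.natCast_eq_zero_iff]
  rw [Nat.cast_sub h1]
  push_cast
  constructor
  · intro h; linear_combination (norm := ring_nf) h
  · intro h; rw [h]; ring

lemma order_facts {q : ℕ} (hq : q.Prime) (hq2 : q ≠ 2) :
    0 < orderOf (2 : ZMod q) ∧ ¬ q ∣ orderOf (2 : ZMod q) ∧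
      q ∣ 2 ^ orderOf (2 : ZMod q) - 1 := by
  haveI := Fact.mk hq
  have h2 : (2 : ZMod q) ≠ 0 := by
    intro h
    have := (ZMod.natCast_eq_zero_iff 2 q).mp (by exact_mod_cast h)
    rcases (Nat.prime_dvd_prime_iff_eq hq Nat.prime_two).mp this with rfl
    exact hq2 rfl
  have hfin : (2 : ZMod q) ^ (q - 1) = 1 := ZMod.pow_card_sub_one_eq_one h2
  have hq1 : 0 < q - 1 := by have := hq.two_le; omega
  have hord : IsOfFinOrder (2 : ZMod q) := isOfFinOrder_iff_pow_eq_one.mpr ⟨q - 1, hq1, hfin⟩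
  have hpos : 0 < orderOf (2 : ZMod q) := hord.orderOf_pos
  have hdvd : orderOf (2 : ZMod q) ∣ q - 1 := orderOf_dvd_of_pow_eq_one hfin
  have hlt : orderOf (2 : ZMod q) < q := by
    have := Nat.le_of_dvd hq1 hdvd; omega
  refine ⟨hpos, fun h => by have := Nat.le_of_dvd hpos h; omega, ?_⟩
  exact (dvd_iff_zmod hq hpos).mpr (pow_orderOf_eq_one _)

lemma phi2_order {q d : ℕ} (hq : q.Prime) (hd : 0 < d) (hdvd : q ∣ Phi2 d) :
    d = orderOf (2 : ZMod q) * q ^ (d.factorization q) := by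
  have hq2d : q ∣ 2 ^ d - 1 := hdvd.trans (phi2_dvd hd dvd_rfl)
  have hq2 : q ≠ 2 := by
    rintro rfl
    have h1 : (1:ℕ) ≤ 2 ^ d := Nat.one_le_two_pow
    have h2 : (2:ℕ) ∣ 2 ^ d := dvd_pow_self 2 hd.ne'
    omega
  haveI := Fact.mk hq
  obtain ⟨hepos, hqe, hqdvd2e⟩ := order_facts hq hq2
  set e := orderOf (2 : ZMod q) with he
  have hed : e ∣ d := orderOf_dvd_of_pow_eq_one ((dvd_iff_zmod hq hd).mp hq2d)
  obtain ⟨k, hk⟩ := hed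
  have hk0 : 0 < k := by
    rcases Nat.eq_zero_or_pos k with rfl|h
    · simp at hk; omega
    · exact h
  have hw : ordCompl[q] k = 1 := by
    by_contra hw
    have hwpos : 0 < ordCompl[q] k := Nat.ordCompl_pos q hk0.ne'
    have hw2 : 2 ≤ ordCompl[q] k := by omega
    obtain ⟨r, hrprime, hrw⟩ : ∃ r : ℕ, r.Prime ∧ r ∣ ordCompl[q] k :=
      ⟨_, Nat.minFac_prime (by omega), Nat.minFac_dvd _⟩
    have hrk : r ∣ k := hrw.trans (Nat.ordCompl_dvd k q)
    have hrq : r ≠ q := by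
      rintro rfl
      exact Nat.not_dvd_ordCompl hq hk0.ne' hrw
    obtain ⟨k', hk'⟩ := hrk
    have hk'0 : 0 < k' := by
      rcases Nat.eq_zero_or_pos k' with rfl|h
      · simp at hk'; omega
      · exact h
    have hDpos : 0 < e * k' := Nat.mul_pos hepos hk'0
    have hDdvd : e * k' ∣ d := ⟨r, by rw [hk, hk']; ring⟩
    have hDlt : e * k' < d := by
      have hd' : d = e * k' * r := by rw [hk, hk']; ring
      have hr2 : 2 ≤ r := hrprime.two_le
      nlinarith
    have hnd : ¬ d ∣ e * k' := fun h => absurd (Nat.le_of_dvd hDpos h) (by omega)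
    have hqodd : Odd q := hq.odd_of_ne_two hq2
    have hx : ¬ q ∣ 2 ^ e := by
      intro h
      rcases (Nat.prime_dvd_prime_iff_eq hq Nat.prime_two).mp (hq.dvd_of_dvd_pow h) with rfl
      exact hq2 rfl
    have hA := Nat.emultiplicity_pow_sub_pow hq hqodd hqdvd2e hx k
    have hB := Nat.emultiplicity_pow_sub_pow hq hqodd hqdvd2e hx k'
    rw [← pow_mul, one_pow, ← hk] at hA
    rw [← pow_mul, one_pow] at hB
    have hkk' : emultiplicity q k = emultiplicity q k' := by
      rw [hk', emultiplicity_mul hq.prime]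
      have h0 : emultiplicity q r = 0 := by
        rw [emultiplicity_eq_zero]
        intro h
        exact hrq ((Nat.prime_dvd_prime_iff_eq hq hrprime).mp h).symm
      rw [h0, zero_add]
    have heq : emultiplicity q (2 ^ d - 1) = emultiplicity q (2 ^ (e * k') - 1) := by
      rw [hA, hB, hkk']
    have hdd := phi2_mul_dvd hDpos hd hDdvd dvd_rfl hnd
    have hle : emultiplicity q (Phi2 d) + emultiplicity q (2 ^ (e * k') - 1)
        ≤ emultiplicity q (2 ^ d - 1) := by
      rw [← emultiplicity_mul hq.prime]
      exact emultiplicity_le_emultiplicity_of_dvd_right hdd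
    rw [heq] at hle
    have hfin : emultiplicity q (2 ^ (e * k') - 1) ≠ ⊤ := by
      rw [Ne, emultiplicity_eq_top, Classical.not_not]
      exact Nat.finiteMultiplicity_iff.2 ⟨hq.ne_one, by
        have h1 : (1:ℕ) < 2 ^ (e * k') := Nat.one_lt_two_pow hDpos.ne'
        omega⟩
    have hzero : emultiplicity q (Phi2 d) = 0 := by
      have h0 : emultiplicity q (Phi2 d) + emultiplicity q (2 ^ (e * k') - 1) ≤
          0 + emultiplicity q (2 ^ (e * k') - 1) := by rwa [zero_add]
      exact le_antisymm ((WithTop.add_le_add_iff_right hfin).mp h0) (zero_le)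
    rw [emultiplicity_eq_zero] at hzero
    exact hzero hdvd
  have hkq : k = q ^ (k.factorization q) := by
    conv_lhs => rw [← Nat.ordProj_mul_ordCompl_eq_self k q]
    rw [hw, mul_one]
  have hfz : d.factorization q = k.factorization q := by
    rw [hk, Nat.factorization_mul hepos.ne' hk0.ne']
    simp [Nat.factorization_eq_zero_of_not_dvd hqe]
  rw [hfz, ← hkq, ← hk]

/-- fiber counting lemma -/
lemma card_le_of_phi2_dvd {S : Finset ℕ} {M K : ℕ} (hK : 0 < K) (hM : 0 < M)
    (hS : ∀ d ∈ S, 2 ≤ d ∧ d ≤ M ∧ Phi2 d ∣ K) :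
    S.card ≤ (Nat.log 2 M + 1) * omega K := by
  classical
  have hmain := Finset.card_le_mul_card_image (f := fun d => (Phi2 d).minFac) S
    (Nat.log 2 M + 1) ?_
  · refine hmain.trans ?_
    apply Nat.mul_le_mul_left
    apply Finset.card_le_card
    intro q hq
    obtain ⟨d, hd, rfl⟩ := Finset.mem_image.mp hq
    obtain ⟨hd2, hdM, hdvd⟩ := hS d hd
    have hphi2 : 2 ≤ Phi2 d := two_le_phi2 hd2
    have hqp : (Phi2 d).minFac.Prime := Nat.minFac_prime (by omega)
    exact Nat.mem_primeFactors.mpr ⟨hqp, (Nat.minFac_dvd _).trans hdvd, hK.ne'⟩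
  · intro q hq
    -- fiber has card ≤ log + 1
    have hcard : #(S.filter (fun d => (Phi2 d).minFac = q)) ≤ #(Finset.range (Nat.log 2 M + 1)) := by
      apply Finset.card_le_card_of_injOn (fun d => d.factorization q)
      · intro d hd
        simp only [Finset.mem_coe, Finset.mem_filter] at hd
        obtain ⟨hdS, hfq⟩ := hd
        obtain ⟨hd2, hdM, hdvd⟩ := hS d hdS
        have hphi2 : 2 ≤ Phi2 d := two_le_phi2 hd2
        have hqp : q.Prime := hfq ▸ Nat.minFac_prime (by omega)
        have hqdvd : q ∣ Phi2 d := hfq ▸ Nat.minFac_dvd _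
        have hord := phi2_order hqp (by omega) hqdvd
        have hpow : q ^ (d.factorization q) ≤ d := by
          calc q ^ (d.factorization q) ≤ orderOf (2 : ZMod q) * q ^ (d.factorization q) := by
                have : 0 < orderOf (2 : ZMod q) := by
                  by_contra h
                  push_neg at h
                  interval_cases h' : orderOf (2 : ZMod q)
                  · simp at hord; omega
                nlinarith [Nat.one_le_two_pow (n := d.factorization q)]
            _ = d := hord.symm
        have h2pow : 2 ^ (d.factorization q) ≤ M :=
          le_trans (le_trans (Nat.pow_le_pow_left hqp.two_le _) hpow) hdM
        have : d.factorization q ≤ Nat.log 2 M := (Nat.le_log_iff_pow_le one_lt_two hM.ne').mpr h2pow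
        simp only [Finset.mem_coe, Finset.mem_range]
        omega
      · intro d hd d' hd' heq
        simp only [Finset.mem_coe, Finset.mem_filter] at hd hd'
        obtain ⟨hdS, hfq⟩ := hd
        obtain ⟨hd'S, hfq'⟩ := hd'
        obtain ⟨hd2, hdM, hdvd⟩ := hS d hdS
        obtain ⟨hd'2, hd'M, hd'dvd⟩ := hS d' hd'S
        have hphi2 : 2 ≤ Phi2 d := two_le_phi2 hd2
        have hphi2' : 2 ≤ Phi2 d' := two_le_phi2 hd'2
        have hqp : q.Prime := hfq ▸ Nat.minFac_prime (by omega)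
        have hord := phi2_order hqp (by omega) (hfq ▸ Nat.minFac_dvd _)
        have hord' := phi2_order hqp (by omega) (hfq' ▸ Nat.minFac_dvd _)
        simp only at heq
        exact hord.trans (by rw [heq, ← hord'])
    simpa using hcard

lemma two_pow_omega_le_tau_s4 {K : ℕ} (hK : K ≠ 0) : 2 ^ omega K ≤ tau K := by
  rw [tau, Nat.card_divisors hK, omega]
  apply Finset.pow_card_le_prod
  intro p hp
  have h := Nat.Prime.factorization_pos_of_dvd (Nat.prime_of_mem_primeFactors hp) hK
    (Nat.dvd_of_mem_primeFactors hp)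
  omega

lemma tau_le_pow_s4 {K : ℕ} (hK : K ≠ 0) : tau K ≤ (Nat.log 2 K + 1) ^ omega K := by
  rw [tau, Nat.card_divisors hK, omega]
  rw [← Finset.prod_const]
  apply Finset.prod_le_prod'
  intro p hp
  have hprime := Nat.prime_of_mem_primeFactors hp
  have hdvd : p ^ K.factorization p ∣ K := Nat.ordProj_dvd K p
  have h1 : 2 ^ K.factorization p ≤ K :=
    le_trans (Nat.pow_le_pow_left hprime.two_le _) (Nat.le_of_dvd (Nat.pos_of_ne_zero hK) hdvd)
  have := (Nat.le_log_iff_pow_le one_lt_two hK).mpr h1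
  omega

lemma omega_le_log {K : ℕ} (hK : K ≠ 0) : omega K ≤ Nat.log 2 K := by
  have h1 : 2 ^ omega K ≤ ∏ p ∈ K.primeFactors, p := by
    rw [omega, ← Finset.prod_const]
    apply Finset.prod_le_prod'
    intro p hp
    exact (Nat.prime_of_mem_primeFactors hp).two_le
  have h2 : (∏ p ∈ K.primeFactors, p) ≤ K :=
    Nat.le_of_dvd (Nat.pos_of_ne_zero hK) (Nat.prod_primeFactors_dvd K)
  exact (Nat.le_log_iff_pow_le one_lt_two hK).mpr (h1.trans h2)

lemma omega_prod_le {s : Finset ℕ} {f : ℕ → ℕ} (hf : ∀ i ∈ s, f i ≠ 0) :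
    omega (∏ i ∈ s, f i) ≤ ∑ i ∈ s, omega (f i) := by
  classical
  induction s using Finset.induction_on with
  | empty => simp [omega]
  | insert a s hnotmem ih =>
    rw [Finset.prod_insert hnotmem, Finset.sum_insert hnotmem]
    have ha : f a ≠ 0 := hf a (Finset.mem_insert_self a s)
    have hs : (∏ i ∈ s, f i) ≠ 0 := Finset.prod_ne_zero_iff.mpr fun i hi =>
      hf i (Finset.mem_insert_of_mem hi)
    have := Nat.primeFactors_mul ha hs
    rw [omega, this]
    exact le_trans (Finset.card_union_le _ _)
      (Nat.add_le_add le_rfl (ih fun i hi => hf i (Finset.mem_insert_of_mem hi)))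

lemma tau_factor_two {N : ℕ} (hN : N ≠ 0) :
    tau N = (N.factorization 2 + 1) * tau (ordCompl[2] N) := by
  have h := Nat.ordProj_mul_ordCompl_eq_self N 2
  have hcop : Nat.Coprime (2 ^ N.factorization 2) (ordCompl[2] N) :=
    Nat.Coprime.pow_left _ (Nat.coprime_ordCompl Nat.prime_two hN)
  have htau2 : tau (2 ^ N.factorization 2) = N.factorization 2 + 1 := by
    rw [tau, Nat.divisors_prime_pow Nat.prime_two]
    simp
  calc tau N = tau (2 ^ N.factorization 2 * ordCompl[2] N) := by rw [h]
    _ = tau (2 ^ N.factorization 2) * tau (ordCompl[2] N) := Nat.Coprime.card_divisors_mul hcop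
    _ = (N.factorization 2 + 1) * tau (ordCompl[2] N) := by rw [htau2]

lemma exists_primes (r : ℕ) : ∃ s : Finset ℕ, s.card = r ∧ ∀ p ∈ s, p.Prime := by
  induction r with
  | zero => exact ⟨∅, by simp⟩
  | succ n ih =>
    obtain ⟨s, hcard, hprime⟩ := ih
    obtain ⟨p, hple, hp⟩ := Nat.exists_infinite_primes (s.sup id + 1)
    have hnotmem : p ∉ s := fun hmem => by
      have : p ≤ s.sup id := Finset.le_sup (f := id) hmem
      omega
    exact ⟨insert p s, by rw [Finset.card_insert_of_notMem hnotmem, hcard],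
      fun q hq => (Finset.mem_insert.mp hq).elim (fun h => h ▸ hp) (hprime q)⟩

lemma tau_prime_pow_prod {s : Finset ℕ} (hs : ∀ p ∈ s, p.Prime) (a : ℕ) (ha : a ≠ 0) :
    tau ((∏ p ∈ s, p) ^ a) = (a + 1) ^ s.card := by
  classical
  have hP0 : (∏ p ∈ s, p) ≠ 0 := Finset.prod_ne_zero_iff.mpr fun p hp => (hs p hp).pos.ne'
  have hm0 : (∏ p ∈ s, p) ^ a ≠ 0 := pow_ne_zero a hP0
  rw [tau, Nat.card_divisors hm0]
  have hpf : ((∏ p ∈ s, p) ^ a).primeFactors = s := by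
    rw [Nat.primeFactors_pow _ ha, Nat.primeFactors_prod hs]
  rw [hpf]
  rw [← Finset.prod_const]
  apply Finset.prod_congr rfl
  intro p hp
  have : ((∏ q ∈ s, q) ^ a).factorization p = a := by
    rw [Nat.factorization_pow]
    have h1 : (∏ q ∈ s, q).factorization p = 1 := by
      rw [Nat.factorization_prod (fun q hq => (hs q hq).pos.ne')]
      rw [Finset.sum_apply']
      rw [Finset.sum_eq_single p]
      · rw [(hs p hp).factorization]; simp
      · intro q hq hqp
        rw [(hs q hq).factorization]
        simp [hqp]
      · intro h; exact absurd hp h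
    simp [h1]
  rw [this]

lemma sq_sub_one (N : ℕ) : (2 ^ N - 1) * (2 ^ N + 1) = 2 ^ (2 * N) - 1 := by
  have h1 : (1:ℕ) ≤ 2 ^ N := Nat.one_le_two_pow
  obtain ⟨b, hb⟩ : ∃ b, 2 ^ N = b + 1 := ⟨2 ^ N - 1, by omega⟩
  rw [two_mul, pow_add, hb]
  simp only [Nat.add_sub_cancel]
  have : b * (b + 1 + 1) + 1 = (b + 1) * (b + 1) := by ring
  omega

lemma tau_pos_s4 {n : ℕ} (hn : n ≠ 0) : 0 < tau n := by
  rw [tau]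
  rw [Finset.card_pos]
  exact ⟨1, Nat.mem_divisors.mpr ⟨one_dvd n, hn⟩⟩

set_option maxHeartbeats 2000000 in
/-- The main contradiction step. -/
lemma key_step {d₀ : ℕ} (hd₀2 : 2 ≤ d₀)
    (hω : ∀ d : ℕ, d₀ ≤ d → (omega (Phi2 d) : ℝ) ≤ 10 * Real.log d)
    {s : Finset ℕ} (hscard : s.card = 7) (hsprime : ∀ p ∈ s, p.Prime)
    {C' : ℝ} (hC'1 : 1 ≤ C') {N : ℕ}
    (hHCM : IsHCMIndex N) (htau : (tau (2 ^ N + 1) : ℝ) ≤ C' * N)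
    (hNP : (∏ p ∈ s, p) + 2 ≤ N)
    (hx4 : 4 ≤ Real.log N) (hxC : Real.log C' ≤ Real.log N)
    (hxc : Real.log ((∏ p ∈ s, p : ℕ) : ℝ) + 1 ≤ Real.log N)
    (hfinal : 4 * ((d₀:ℝ)^2 + 160) * (Real.log N)^6 + 1
      < ((Real.log N - 1) / Real.log ((∏ p ∈ s, p : ℕ) : ℝ))^7) :
    False := by
  obtain ⟨hNpos, hrec⟩ := hHCM
  set P : ℕ := ∏ p ∈ s, p with hP
  set x : ℝ := Real.log N with hxdef
  set c₁ : ℝ := Real.log P with hc₁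
  have hP2 : 2 ≤ P := by
    have h2 : 2 ^ s.card ≤ P := Finset.pow_card_le_prod s _ _ (fun p hp => (hsprime p hp).two_le)
    rw [hscard] at h2
    calc (2:ℕ) ≤ 2 ^ 7 := by norm_num
      _ ≤ P := h2
  have hlog2 : (0.6931471803 : ℝ) < Real.log 2 := Real.log_two_gt_d9
  have hlog2' : Real.log 2 ≤ 1 := by
    have := Real.log_le_sub_one_of_pos (by norm_num : (0:ℝ) < 2)
    linarith
  have hc₁pos : (0:ℝ) < c₁ := by
    rw [hc₁]
    apply Real.log_pos
    exact_mod_cast by omega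
  have hxpos : (0:ℝ) < x := by linarith
  -- L and its bound
  set L : ℕ := Nat.log 2 (2 * N) + 1 with hLdef
  have hLpos : 0 < L := by omega
  have hLreal : (L : ℝ) ≤ 2 * x := by
    have h1 : 2 ^ Nat.log 2 (2 * N) ≤ 2 * N := Nat.pow_log_le_self 2 (by omega)
    have h2 : ((2:ℝ)) ^ Nat.log 2 (2 * N) ≤ 2 * N := by exact_mod_cast h1
    have h3 : (Nat.log 2 (2 * N) : ℝ) * Real.log 2 ≤ Real.log (2 * N) := by
      rw [← Real.log_pow]
      apply Real.log_le_log (by positivity) h2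
    have h4 : Real.log (2 * (N:ℝ)) = Real.log 2 + x := by
      rw [Real.log_mul (by norm_num) (by exact_mod_cast hNpos.ne')]
    have h5 : (Nat.log 2 (2 * N) : ℝ) ≤ (Real.log 2 + x) / Real.log 2 := by
      rw [le_div_iff₀ (by linarith)]
      rw [h4] at h3
      linarith
    have h6 : (Real.log 2 + x) / Real.log 2 = 1 + x / Real.log 2 := by
      field_simp
    have h7 : x / Real.log 2 ≤ 1.5 * x := by
      rw [div_le_iff₀ (by linarith)]
      nlinarith
    have : (L:ℝ) = (Nat.log 2 (2*N) : ℝ) + 1 := by rw [hLdef]; push_cast; ring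
    rw [this]
    linarith
  -- Step 1 : tau N₁ ≤ L * omega (2^N+1)
  set v : ℕ := N.factorization 2 with hv
  set N₁ : ℕ := ordCompl[2] N with hN₁
  have hN₁pos : 0 < N₁ := Nat.ordCompl_pos 2 hNpos.ne'
  have h2N : (0:ℕ) < 2 * N := by omega
  have hS1 : tau N₁ ≤ L * omega (2 ^ N + 1) := by
    have hinj : Function.Injective (fun e : ℕ => 2 ^ (v + 1) * e) :=
      fun a b hab => by
        simp only at hab
        exact Nat.eq_of_mul_eq_mul_left (Nat.pow_pos (by norm_num)) hab
    have hcard : (N₁.divisors.image (fun e => 2 ^ (v + 1) * e)).card = N₁.divisors.card :=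
      Finset.card_image_of_injective _ hinj
    rw [tau, ← hcard]
    apply card_le_of_phi2_dvd (K := 2 ^ N + 1) (M := 2 * N) (by positivity) h2N
    intro d hd
    obtain ⟨e, he, rfl⟩ := Finset.mem_image.mp hd
    obtain ⟨hedvd, -⟩ := Nat.mem_divisors.mp he
    have hepos : 0 < e := Nat.pos_of_mem_divisors he
    have hd2N : 2 ^ (v + 1) * e ∣ 2 * N := by
      have h1 : 2 * N = 2 ^ (v + 1) * N₁ := by
        rw [hN₁, pow_succ]
        have := Nat.ordProj_mul_ordCompl_eq_self N 2
        rw [hv]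
        calc 2 * N = 2 * (2 ^ N.factorization 2 * ordCompl[2] N) := by rw [this]
          _ = 2 ^ N.factorization 2 * 2 * ordCompl[2] N := by ring
      rw [h1]
      exact Nat.mul_dvd_mul_left _ hedvd
    refine ⟨?_, Nat.le_of_dvd h2N hd2N, ?_⟩
    · have : 2 ≤ 2 ^ (v + 1) := by
        calc (2:ℕ) = 2 ^ 1 := by norm_num
          _ ≤ 2 ^ (v + 1) := Nat.pow_le_pow_right (by norm_num) (by omega)
      nlinarith
    · -- Phi2 d ∣ 2^N + 1
      have hndvd : ¬ 2 ^ (v + 1) * e ∣ N := by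
        intro hcon
        have h2v1 : 2 ^ (v + 1) ∣ N := (dvd_mul_right _ _).trans hcon
        have := (Nat.Prime.pow_dvd_iff_le_factorization Nat.prime_two hNpos.ne').mp h2v1
        omega
      have hdvd2N : 2 ^ (v + 1) * e ∣ 2 * N := hd2N
      have h := phi2_mul_dvd hNpos h2N (dvd_mul_left N 2) hdvd2N hndvd
      rw [← sq_sub_one N] at h
      have h' : (2 ^ N - 1) * Phi2 (2 ^ (v + 1) * e) ∣ (2 ^ N - 1) * (2 ^ N + 1) := by
        rwa [mul_comm (Phi2 _) _] at h
      have h2N1 : (2:ℕ) ^ N - 1 ≠ 0 := by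
        have : (1:ℕ) < 2 ^ N := Nat.one_lt_two_pow hNpos.ne'
        omega
      exact (mul_dvd_mul_iff_left h2N1).mp h'
  -- Step 2 : tau N ≤ L * tau N₁
  have hS2 : tau N ≤ L * tau N₁ := by
    have h1 : tau N = (v + 1) * tau N₁ := tau_factor_two hNpos.ne'
    have h2 : v + 1 ≤ L := by
      have h3 : 2 ^ v ∣ N := Nat.ordProj_dvd N 2
      have h4 : 2 ^ v ≤ 2 * N := le_trans (Nat.le_of_dvd hNpos h3) (by omega)
      have := (Nat.le_log_iff_pow_le one_lt_two (by omega : 2 * N ≠ 0)).mpr h4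
      omega
    rw [h1]
    exact Nat.mul_le_mul_right _ h2
  -- Step 3 : real bound on omega (2^N+1)
  have hS3 : (omega (2 ^ N + 1) : ℝ) * Real.log 2 ≤ Real.log C' + x := by
    have h1 : (2:ℕ) ^ omega (2 ^ N + 1) ≤ tau (2 ^ N + 1) :=
      two_pow_omega_le_tau_s4 (by positivity)
    have h2 : ((2:ℝ)) ^ omega (2 ^ N + 1) ≤ C' * N := by
      calc ((2:ℝ)) ^ omega (2 ^ N + 1) = ((2 ^ omega (2 ^ N + 1) : ℕ) : ℝ) := by push_cast; ring
        _ ≤ (tau (2 ^ N + 1) : ℝ) := by exact_mod_cast h1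
        _ ≤ C' * N := htau
    have h3 := Real.log_le_log (by positivity) h2
    rw [Real.log_pow, Real.log_mul (by linarith) (by exact_mod_cast hNpos.ne')] at h3
    exact_mod_cast h3
  -- Step 4 : omega (2^N - 1) real bound
  have h2N1pos : (0:ℕ) < 2 ^ N - 1 := by
    have : (1:ℕ) < 2 ^ N := Nat.one_lt_two_pow hNpos.ne'
    omega
  have hS4 : (omega (2 ^ N - 1) : ℝ) ≤ (d₀:ℝ) ^ 2 + (tau N : ℝ) * (10 * x) := by
    have h1 : omega (2 ^ N - 1) ≤ ∑ d ∈ N.divisors, omega (Phi2 d) := by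
      rw [← prod_phi2 hNpos]
      exact omega_prod_le (fun d _ => (phi2_pos d).ne')
    have h2 : ((∑ d ∈ N.divisors, omega (Phi2 d) : ℕ) : ℝ)
        ≤ (d₀:ℝ) ^ 2 + (tau N : ℝ) * (10 * x) := by
      push_cast
      rw [← Finset.sum_filter_add_sum_filter_not N.divisors (fun d => d < d₀)]
      have hfirst : ∑ d ∈ N.divisors.filter (fun d => d < d₀), ((omega (Phi2 d)):ℝ)
          ≤ (d₀:ℝ) ^ 2 := by
        have hterm : ∀ d ∈ N.divisors.filter (fun d => d < d₀), ((omega (Phi2 d)):ℝ) ≤ (d₀:ℝ) := by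
          intro d hd
          obtain ⟨hddvd, hdlt⟩ := Finset.mem_filter.mp hd
          have hdpos : 0 < d := Nat.pos_of_mem_divisors hddvd
          have hphi : Phi2 d ≤ 2 ^ d - 1 :=
            Nat.le_of_dvd (by have : (1:ℕ) < 2 ^ d := Nat.one_lt_two_pow hdpos.ne'; omega)
              (phi2_dvd hdpos dvd_rfl)
          have hlog : omega (Phi2 d) ≤ Nat.log 2 (Phi2 d) := omega_le_log (phi2_pos d).ne'
          have hlog2d : Nat.log 2 (Phi2 d) < d := by
            apply Nat.log_lt_of_lt_pow (phi2_pos d).ne'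
            have : (1:ℕ) ≤ 2 ^ d := Nat.one_le_two_pow
            omega
          have : omega (Phi2 d) ≤ d₀ := by omega
          exact_mod_cast this
        calc ∑ d ∈ N.divisors.filter (fun d => d < d₀), ((omega (Phi2 d)):ℝ)
            ≤ ∑ d ∈ N.divisors.filter (fun d => d < d₀), (d₀:ℝ) := Finset.sum_le_sum hterm
          _ = ((N.divisors.filter (fun d => d < d₀)).card : ℝ) * (d₀:ℝ) := by
              rw [Finset.sum_const, nsmul_eq_mul]
          _ ≤ (d₀:ℝ) * (d₀:ℝ) := by
              have hsub : N.divisors.filter (fun d => d < d₀) ⊆ Finset.range d₀ := by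
                intro d hd
                exact Finset.mem_range.mpr (Finset.mem_filter.mp hd).2
              have := Finset.card_le_card hsub
              rw [Finset.card_range] at this
              have hcast : ((N.divisors.filter (fun d => d < d₀)).card : ℝ) ≤ (d₀:ℝ) :=
                by exact_mod_cast this
              have : (0:ℝ) ≤ (d₀:ℝ) := by positivity
              nlinarith
          _ = (d₀:ℝ) ^ 2 := by ring
      have hsecond : ∑ d ∈ N.divisors.filter (fun d => ¬ d < d₀), ((omega (Phi2 d)):ℝ)
          ≤ (tau N : ℝ) * (10 * x) := by
        have hterm : ∀ d ∈ N.divisors.filter (fun d => ¬ d < d₀),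
            ((omega (Phi2 d)):ℝ) ≤ 10 * x := by
          intro d hd
          obtain ⟨hddvd, hdge⟩ := Finset.mem_filter.mp hd
          push_neg at hdge
          refine (hω d hdge).trans ?_
          have hdN : d ≤ N := Nat.le_of_dvd hNpos (Nat.mem_divisors.mp hddvd).1
          have hlog : Real.log d ≤ x := by
            rw [hxdef]
            apply Real.log_le_log (by exact_mod_cast by omega : (0:ℝ) < (d:ℝ))
            exact_mod_cast hdN
          linarith
        calc ∑ d ∈ N.divisors.filter (fun d => ¬ d < d₀), ((omega (Phi2 d)):ℝ)
            ≤ ∑ d ∈ N.divisors.filter (fun d => ¬ d < d₀), (10 * x) := Finset.sum_le_sum hterm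
          _ = ((N.divisors.filter (fun d => ¬ d < d₀)).card : ℝ) * (10 * x) := by
              rw [Finset.sum_const, nsmul_eq_mul]
          _ ≤ (tau N : ℝ) * (10 * x) := by
              apply mul_le_mul_of_nonneg_right _ (by linarith)
              have := Finset.card_le_card (Finset.filter_subset (fun d => ¬ d < d₀) N.divisors)
              exact_mod_cast this
      linarith
    calc (omega (2 ^ N - 1) : ℝ) ≤ ((∑ d ∈ N.divisors, omega (Phi2 d) : ℕ) : ℝ) := by
          exact_mod_cast h1
      _ ≤ _ := h2
  -- Step 5 : log tau (2^N - 1) ≤ omega (2^N-1) * x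
  have hS5 : Real.log (tau (2 ^ N - 1)) ≤ (omega (2 ^ N - 1) : ℝ) * x := by
    have h1 : tau (2 ^ N - 1) ≤ (Nat.log 2 (2 ^ N - 1) + 1) ^ omega (2 ^ N - 1) :=
      tau_le_pow_s4 h2N1pos.ne'
    have h2 : Nat.log 2 (2 ^ N - 1) + 1 ≤ N := by
      have : Nat.log 2 (2 ^ N - 1) < N := by
        apply Nat.log_lt_of_lt_pow h2N1pos.ne'
        have : (1:ℕ) ≤ 2 ^ N := Nat.one_le_two_pow
        omega
      omega
    have h3 : tau (2 ^ N - 1) ≤ N ^ omega (2 ^ N - 1) :=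
      h1.trans (Nat.pow_le_pow_left h2 _)
    have h4 : (tau (2 ^ N - 1) : ℝ) ≤ ((N:ℝ)) ^ omega (2 ^ N - 1) := by exact_mod_cast h3
    have h5 := Real.log_le_log (by exact_mod_cast tau_pos_s4 h2N1pos.ne') h4
    rwa [Real.log_pow] at h5
  -- Step 6 : the witness m = P ^ a
  have hN1ne : N - 1 ≠ 0 := by omega
  set a : ℕ := Nat.log P (N - 1) with ha
  have ha1 : 1 ≤ a := by
    have h1 : P ^ 1 ≤ N - 1 := by
      rw [pow_one]; omega
    exact (Nat.le_log_iff_pow_le (by omega) hN1ne).mpr h1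
  set m : ℕ := P ^ a with hm
  have hmN1 : m ≤ N - 1 := Nat.pow_log_le_self P hN1ne
  have hmlt : m < N := by omega
  have hm2 : 2 ≤ m := by
    calc (2:ℕ) ≤ P := hP2
      _ = P ^ 1 := (pow_one P).symm
      _ ≤ P ^ a := Nat.pow_le_pow_right (by omega) ha1
  have hmpos : 0 < m := by omega
  have htauM : tau m = (a + 1) ^ 7 := by
    rw [hm, hP]
    rw [tau_prime_pow_prod hsprime a (by omega)]
    rw [hscard]
  -- tau m - 1 ≤ L * omega (2 ^ m - 1)
  have h2m1pos : (0:ℕ) < 2 ^ m - 1 := by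
    have : (1:ℕ) < 2 ^ m := Nat.one_lt_two_pow hmpos.ne'
    omega
  have hS6 : tau m - 1 ≤ L * omega (2 ^ m - 1) := by
    have hmem1 : (1:ℕ) ∈ m.divisors := Nat.mem_divisors.mpr ⟨one_dvd m, hmpos.ne'⟩
    have hcard : (m.divisors.erase 1).card = tau m - 1 := by
      rw [Finset.card_erase_of_mem hmem1]; rfl
    rw [← hcard]
    apply card_le_of_phi2_dvd (K := 2 ^ m - 1) (M := 2 * N) h2m1pos h2N
    intro d hd
    have hdne1 : d ≠ 1 := Finset.ne_of_mem_erase hd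
    have hddvd : d ∣ m := (Nat.mem_divisors.mp (Finset.mem_of_mem_erase hd)).1
    have hdpos : 0 < d := Nat.pos_of_dvd_of_pos hddvd hmpos
    exact ⟨by omega, le_trans (Nat.le_of_dvd hmpos hddvd) (by omega), phi2_dvd hmpos hddvd⟩
  -- Step 7 : HCM comparison
  have hS7 : tau (2 ^ m - 1) < tau (2 ^ N - 1) := hrec m (by omega) hmlt
  have hS7' : (omega (2 ^ m - 1) : ℝ) * Real.log 2 ≤ Real.log (tau (2 ^ N - 1)) := by
    have h1 : (2:ℕ) ^ omega (2 ^ m - 1) ≤ tau (2 ^ N - 1) :=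
      le_trans (two_pow_omega_le_tau_s4 h2m1pos.ne') hS7.le
    have h2 : ((2:ℝ)) ^ omega (2 ^ m - 1) ≤ (tau (2 ^ N - 1) : ℝ) := by exact_mod_cast h1
    have h3 := Real.log_le_log (by positivity) h2
    rwa [Real.log_pow] at h3
  -- Step 8 : assemble
  set y : ℝ := (x - 1) / c₁ with hy
  have hy1 : 1 ≤ y := by
    rw [hy, le_div_iff₀ hc₁pos]
    rw [hc₁, hP]
    linarith [hxc]
  have hax : (x - 1) / c₁ ≤ (a:ℝ) + 1 := by
    have h1 : N - 1 < P ^ (a + 1) := Nat.lt_pow_succ_log_self (by omega) (N - 1)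
    have h2 : ((N:ℝ) - 1) ≤ (P:ℝ) ^ (a + 1) := by
      have : ((N - 1 : ℕ):ℝ) ≤ ((P ^ (a+1) : ℕ):ℝ) := by exact_mod_cast h1.le
      push_cast at this
      rw [Nat.cast_sub (by omega)] at this
      push_cast at this
      linarith
    have h3 : Real.log ((N:ℝ) - 1) ≤ ((a:ℝ) + 1) * c₁ := by
      calc Real.log ((N:ℝ) - 1) ≤ Real.log ((P:ℝ) ^ (a + 1)) := by
            apply Real.log_le_log _ h2
            have : (2:ℝ) ≤ (N:ℝ) - 1 := by
              have : (P:ℝ) + 2 ≤ N := by exact_mod_cast hNP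
              have hP2' : (2:ℝ) ≤ P := by exact_mod_cast hP2
              linarith
            linarith
        _ = ((a:ℝ) + 1) * c₁ := by rw [Real.log_pow]; push_cast; ring
    have h4 : x - 1 ≤ Real.log ((N:ℝ) - 1) := by
      have hhalf : (N:ℝ) / 2 ≤ (N:ℝ) - 1 := by
        have : (2:ℝ) ≤ N := by
          have : (P:ℝ) + 2 ≤ N := by exact_mod_cast hNP
          have hP2' : (0:ℝ) ≤ P := by positivity
          linarith
        linarith
      calc x - 1 ≤ x - Real.log 2 := by linarith
        _ = Real.log ((N:ℝ) / 2) := by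
            rw [hxdef, Real.log_div (by exact_mod_cast hNpos.ne') (by norm_num)]
        _ ≤ Real.log ((N:ℝ) - 1) := by
            apply Real.log_le_log _ hhalf
            have : (2:ℝ) ≤ N := by
              have : (P:ℝ) + 2 ≤ N := by exact_mod_cast hNP
              have hP2' : (0:ℝ) ≤ P := by positivity
              linarith
            linarith
    rw [div_le_iff₀ hc₁pos]
    linarith
  -- tau m ≥ y^7
  have htauy : y ^ 7 ≤ (tau m : ℝ) := by
    rw [htauM]
    have h1 : y ≤ (a:ℝ) + 1 := hax
    have h2 : (0:ℝ) ≤ y := by linarith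
    calc y ^ 7 ≤ ((a:ℝ) + 1) ^ 7 := by
          apply pow_le_pow_left₀ h2 h1
      _ = (((a + 1) ^ 7 : ℕ) : ℝ) := by push_cast; ring
  -- lower bound for log tau (2^N-1)
  have hLc : ((Nat.log 2 (2 * N) : ℕ):ℝ) + 1 = (L:ℝ) := by rw [hLdef]; push_cast; ring
  have hlow : (y ^ 7 - 1) / (2 * x) * Real.log 2 ≤ Real.log (tau (2 ^ N - 1)) := by
    have h1 : (tau m : ℝ) - 1 ≤ (L:ℝ) * (omega (2 ^ m - 1) : ℝ) := by
      have htm1 : 1 ≤ tau m := tau_pos_s4 hmpos.ne'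
      have : ((tau m - 1 : ℕ) : ℝ) ≤ ((L * omega (2 ^ m - 1) : ℕ) : ℝ) := by exact_mod_cast hS6
      rw [Nat.cast_sub htm1] at this
      push_cast at this
      rw [← hLc]
      rw [hLc]; linarith
    have h2 : y ^ 7 - 1 ≤ 2 * x * (omega (2 ^ m - 1) : ℝ) := by
      have hωnonneg : (0:ℝ) ≤ (omega (2 ^ m - 1) : ℝ) := by positivity
      have : (L:ℝ) * (omega (2 ^ m - 1) : ℝ) ≤ 2 * x * (omega (2 ^ m - 1) : ℝ) :=
        mul_le_mul_of_nonneg_right hLreal hωnonneg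
      linarith
    have h3 : (y ^ 7 - 1) / (2 * x) ≤ (omega (2 ^ m - 1) : ℝ) := by
      rw [div_le_iff₀ (by linarith)]
      linarith [h2]
    calc (y ^ 7 - 1) / (2 * x) * Real.log 2 ≤ (omega (2 ^ m - 1) : ℝ) * Real.log 2 := by
          apply mul_le_mul_of_nonneg_right h3 (by linarith)
      _ ≤ Real.log (tau (2 ^ N - 1)) := hS7'
  -- upper bound for log tau (2^N-1)
  have hup : Real.log (tau (2 ^ N - 1)) ≤ ((d₀:ℝ) ^ 2 + 160 * x ^ 4) * x := by
    have homega4 : (omega (2 ^ N + 1) : ℝ) ≤ 4 * x := by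
      have h1 : (omega (2 ^ N + 1) : ℝ) * Real.log 2 ≤ 2 * x := by
        calc (omega (2 ^ N + 1) : ℝ) * Real.log 2 ≤ Real.log C' + x := hS3
          _ ≤ 2 * x := by linarith
      have h2 : (omega (2 ^ N + 1) : ℝ) * (1/2) ≤ (omega (2 ^ N + 1) : ℝ) * Real.log 2 := by
        apply mul_le_mul_of_nonneg_left (by linarith) (by positivity)
      linarith
    have htauN : (tau N : ℝ) ≤ 16 * x ^ 3 := by
      have h1 : (tau N : ℝ) ≤ (L:ℝ) * ((L:ℝ) * (omega (2 ^ N + 1) : ℝ)) := by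
        have h0 : tau N ≤ L * (L * omega (2 ^ N + 1)) :=
          hS2.trans (Nat.mul_le_mul_left L hS1)
        exact_mod_cast h0
      have hLnonneg : (0:ℝ) ≤ (L:ℝ) := by positivity
      have hωnonneg : (0:ℝ) ≤ (omega (2 ^ N + 1) : ℝ) := by positivity
      calc (tau N : ℝ) ≤ (L:ℝ) * ((L:ℝ) * (omega (2 ^ N + 1) : ℝ)) := h1
        _ ≤ (2*x) * ((2*x) * (4*x)) := by
            apply mul_le_mul hLreal _ (by positivity) (by linarith)
            apply mul_le_mul hLreal homega4 hωnonneg (by linarith)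
        _ = 16 * x ^ 3 := by ring
    have h2 : (omega (2 ^ N - 1) : ℝ) ≤ (d₀:ℝ) ^ 2 + 160 * x ^ 4 := by
      calc (omega (2 ^ N - 1) : ℝ) ≤ (d₀:ℝ) ^ 2 + (tau N : ℝ) * (10 * x) := hS4
        _ ≤ (d₀:ℝ) ^ 2 + 16 * x ^ 3 * (10 * x) := by
            have : (tau N : ℝ) * (10 * x) ≤ 16 * x ^ 3 * (10 * x) := by
              apply mul_le_mul_of_nonneg_right htauN (by linarith)
            linarith
        _ = (d₀:ℝ) ^ 2 + 160 * x ^ 4 := by ring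
    calc Real.log (tau (2 ^ N - 1)) ≤ (omega (2 ^ N - 1) : ℝ) * x := hS5
      _ ≤ ((d₀:ℝ) ^ 2 + 160 * x ^ 4) * x := by
          apply mul_le_mul_of_nonneg_right h2 (by linarith)
  -- final contradiction
  have hchain : (y ^ 7 - 1) / (2 * x) * Real.log 2 ≤ ((d₀:ℝ) ^ 2 + 160 * x ^ 4) * x :=
    hlow.trans hup
  have hfinal' : 4 * ((d₀:ℝ)^2 + 160) * x ^ 6 + 1 < y ^ 7 := by
    rw [hy, hc₁, hP]
    exact hfinal
  have hcontra : ((d₀:ℝ) ^ 2 + 160 * x ^ 4) * x < (y ^ 7 - 1) / (2 * x) * Real.log 2 := by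
    have hlog2half : (1/2:ℝ) ≤ Real.log 2 := by linarith
    have hxbig : (1:ℝ) ≤ x := by linarith
    have h1 : ((d₀:ℝ) ^ 2 + 160 * x ^ 4) * x ≤ ((d₀:ℝ)^2 + 160) * x ^ 5 := by
      have hd0 : (0:ℝ) ≤ (d₀:ℝ)^2 := by positivity
      have hx5 : x ≤ x ^ 5 := by
        calc x = x ^ 1 := (pow_one x).symm
          _ ≤ x ^ 5 := pow_le_pow_right₀ hxbig (by norm_num)
      nlinarith [mul_nonneg hd0 (sub_nonneg.mpr hx5)]
    have h2 : 4 * ((d₀:ℝ)^2 + 160) * x ^ 6 < y ^ 7 - 1 := by linarith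
    have h3 : ((d₀:ℝ)^2 + 160) * x ^ 5 * (2 * x) * 2 < (y ^ 7 - 1) := by
      calc ((d₀:ℝ)^2 + 160) * x ^ 5 * (2 * x) * 2 = 4 * ((d₀:ℝ)^2 + 160) * x ^ 6 := by ring
        _ < y ^ 7 - 1 := h2
    have h4 : ((d₀:ℝ)^2 + 160) * x ^ 5 < (y ^ 7 - 1) / (2 * x) * (1/2) := by
      have h4' : ((d₀:ℝ)^2 + 160) * x ^ 5 * 2 < (y ^ 7 - 1) / (2 * x) := by
        rw [lt_div_iff₀ (by linarith : (0:ℝ) < 2 * x)]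
        calc ((d₀:ℝ)^2 + 160) * x ^ 5 * 2 * (2 * x)
            = ((d₀:ℝ)^2 + 160) * x ^ 5 * (2 * x) * 2 := by ring
          _ < y ^ 7 - 1 := h3
      linarith
    have h5 : (y ^ 7 - 1) / (2 * x) * (1/2) ≤ (y ^ 7 - 1) / (2 * x) * Real.log 2 := by
      apply mul_le_mul_of_nonneg_left hlog2half
      apply div_nonneg _ (by linarith)
      nlinarith [one_le_pow₀ hy1 (n := 7)]
    linarith
  linarith

set_option maxHeartbeats 1000000 in
/-- If `ω(Φ_d(2)) ≤ 10 log d` for all sufficiently large `d`, then `τ(2^N + 1)/N → ∞`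
along the indices of highly composite Mersenne numbers. -/
theorem hcm_conjecture_of_cyclotomic_conjecture
    (h : ∃ d₀ : ℕ, 2 ≤ d₀ ∧
      ∀ d : ℕ, d₀ ≤ d → (omega (Phi2 d) : ℝ) ≤ 10 * Real.log d) :
    ∀ C : ℝ,
      {N : ℕ | IsHCMIndex N ∧ (tau (2 ^ N + 1) : ℝ) / (N : ℝ) ≤ C}.Finite := by
  obtain ⟨d₀, hd₀2, hω⟩ := h
  intro C
  obtain ⟨s, hscard, hsprime⟩ := exists_primes 7
  set C' : ℝ := max C 1 with hC'
  have hC'1 : (1:ℝ) ≤ C' := le_max_right _ _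
  set P : ℕ := ∏ p ∈ s, p with hP
  have hP2 : 2 ≤ P := by
    have h2 : 2 ^ s.card ≤ P := Finset.pow_card_le_prod s _ _ (fun p hp => (hsprime p hp).two_le)
    rw [hscard] at h2
    calc (2:ℕ) ≤ 2 ^ 7 := by norm_num
      _ ≤ P := h2
  set c₁ : ℝ := Real.log P with hc₁
  have hlog2 : (0.6931471803 : ℝ) < Real.log 2 := Real.log_two_gt_d9
  have hc₁half : (1/2:ℝ) ≤ c₁ := by
    have : Real.log 2 ≤ c₁ := Real.log_le_log (by norm_num) (by exact_mod_cast hP2)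
    linarith
  have hc₁pos : (0:ℝ) < c₁ := by linarith
  set K : ℝ := 4 * ((d₀:ℝ)^2 + 160) with hK
  have hKpos : (1:ℝ) ≤ K := by
    have : (0:ℝ) ≤ (d₀:ℝ)^2 := by positivity
    rw [hK]; linarith
  set A : ℝ := (2*c₁)^7 with hA
  have hA1 : (1:ℝ) ≤ A := by
    rw [hA]
    apply one_le_pow₀
    linarith
  set X₀ : ℝ := max (max 4 (Real.log C')) (max (c₁ + 1) (A * (K + 1) + 1)) with hX₀
  set N₀ : ℕ := max (P + 2) (Nat.ceil (Real.exp X₀) + 1) with hN₀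
  apply Set.Finite.subset (Set.finite_Iio N₀)
  intro N hN
  obtain ⟨hHCM, hdiv⟩ := hN
  simp only [Set.mem_Iio]
  by_contra hcon
  have hNge : N₀ ≤ N := not_lt.mp hcon
  have hNpos := hHCM.1
  have htau : (tau (2 ^ N + 1) : ℝ) ≤ C' * N := by
    have hNr : (0:ℝ) < N := by exact_mod_cast hNpos
    rw [div_le_iff₀ hNr] at hdiv
    calc (tau (2 ^ N + 1) : ℝ) ≤ C * N := hdiv
      _ ≤ C' * N := mul_le_mul_of_nonneg_right (le_max_left _ _) hNr.le
  have hNP : P + 2 ≤ N := le_trans (le_max_left _ _) hNge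
  have hxX : X₀ ≤ Real.log N := by
    have h1 : Nat.ceil (Real.exp X₀) + 1 ≤ N := le_trans (le_max_right _ _) hNge
    have h2 : Real.exp X₀ ≤ N := by
      calc Real.exp X₀ ≤ (Nat.ceil (Real.exp X₀) : ℝ) := Nat.le_ceil _
        _ ≤ N := by exact_mod_cast (by omega : Nat.ceil (Real.exp X₀) ≤ N)
    have h3 := Real.log_le_log (Real.exp_pos _) h2
    rwa [Real.log_exp] at h3
  set x := Real.log N with hx
  have hx4 : (4:ℝ) ≤ x := le_trans (le_trans (le_max_left _ _) (le_max_left _ _)) hxX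
  have hxC : Real.log C' ≤ x := le_trans (le_trans (le_max_right _ _) (le_max_left _ _)) hxX
  have hxc1 : c₁ + 1 ≤ x := le_trans (le_trans (le_max_left _ _) (le_max_right _ _)) hxX
  have hxK : A * (K + 1) + 1 ≤ x := le_trans (le_trans (le_max_right _ _) (le_max_right _ _)) hxX
  -- final inequality
  have hfinal : K * x^6 + 1 < ((x - 1)/c₁)^7 := by
    have hx2 : (2:ℝ) ≤ x := by linarith
    have hx6 : (1:ℝ) ≤ x^6 := one_le_pow₀ (by linarith)
    have h1 : x/(2*c₁) ≤ (x-1)/c₁ := by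
      rw [div_le_div_iff₀ (by linarith) hc₁pos]
      nlinarith
    have h0 : (0:ℝ) ≤ x/(2*c₁) := by positivity
    have h2 : (x/(2*c₁))^7 ≤ ((x-1)/c₁)^7 := pow_le_pow_left₀ h0 h1 7
    have h3 : K * x^6 + 1 < (x/(2*c₁))^7 := by
      have hpow : (x/(2*c₁))^7 = x^7 / A := by rw [hA, div_pow]
      rw [hpow, lt_div_iff₀ (by linarith : (0:ℝ) < A)]
      have hb1 : (A * (K + 1) + 1) * x^6 ≤ x * x^6 :=
        mul_le_mul_of_nonneg_right (by linarith) (by linarith)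
      have hb2 : A * 1 ≤ A * x^6 := mul_le_mul_of_nonneg_left hx6 (by linarith)
      have hx7 : x * x^6 = x^7 := by ring
      nlinarith
    linarith
  exact key_step hd₀2 hω hscard hsprime hC'1 hHCM htau hNP hx4 hxC
    (by rw [← hP, ← hc₁]; exact hxc1) (by rw [← hP, ← hc₁, ← hx, ← hK]; exact hfinal)
end

section
/- For every positive integer k, the number of distinct prime factors of 2^k − 1 is at least τ(k) − 2, i.e., ω(2^k − 1) ≥ τ(k) − 2. -/
open Polynomial Finset

lemma aux_two_pow_pos (d : ℕ) : 1 ≤ 2 ^ d := Nat.one_le_two_pow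

lemma aux_dvd_iff {p : ℕ} [Fact p.Prime] {d : ℕ} :
    p ∣ 2 ^ d - 1 ↔ (2 : ZMod p) ^ d = 1 := by
  rw [← ZMod.natCast_eq_zero_iff, Nat.cast_sub Nat.one_le_two_pow]
  push_cast
  rw [sub_eq_zero]

lemma aux_cyclo_natAbs_dvd (n : ℕ) : ((cyclotomic n ℤ).eval 2).natAbs ∣ 2 ^ n - 1 := by
  have h := eval_dvd (x := (2:ℤ)) (cyclotomic.dvd_X_pow_sub_one n ℤ)
  simp only [eval_sub, eval_pow, eval_X, eval_one] at h
  have h2 : ((2:ℤ) ^ n - 1) = ((2 ^ n - 1 : ℕ) : ℤ) := by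
    push_cast [Nat.one_le_two_pow]; ring
  rw [h2] at h
  simpa only [Int.natAbs_natCast] using Int.natAbs_dvd_natAbs.mpr h

lemma aux_struct {n p : ℕ} (hn : 2 ≤ n) (hp : p.Prime)
    (hdvd : p ∣ ((cyclotomic n ℤ).eval 2).natAbs)
    (hne : orderOf (2 : ZMod p) ≠ n) :
    p ≠ 2 ∧ 1 ≤ n.factorization p ∧
      n = p ^ n.factorization p * orderOf (2 : ZMod p) ∧
      orderOf (2 : ZMod p) ∣ p - 1 := by
  haveI : Fact p.Prime := ⟨hp⟩
  have hpm : p ∣ 2 ^ n - 1 := hdvd.trans (aux_cyclo_natAbs_dvd n)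
  have hp2 : p ≠ 2 := by
    rintro rfl
    have h1 : (1:ℕ) ≤ 2 ^ n := Nat.one_le_two_pow
    have h2 : 2 ∣ 2 ^ n := dvd_pow_self 2 (by omega)
    omega
  have h2ne : (2 : ZMod p) ≠ 0 := by
    have : ¬ p ∣ 2 := fun hd => hp2 ((Nat.prime_dvd_prime_iff_eq hp Nat.prime_two).mp hd)
    rw [← ZMod.natCast_eq_zero_iff] at this
    simpa using this
  have hroot : IsRoot (cyclotomic n (ZMod p)) 2 := by
    have h1 : ((p : ℤ)) ∣ (cyclotomic n ℤ).eval 2 :=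
      (Int.natCast_dvd_natCast.mpr hdvd).trans (Int.natAbs_dvd.mpr dvd_rfl)
    have h2 := cyclotomic.eval_apply (2 : ℤ) n (Int.castRingHom (ZMod p))
    have h3 : ((Int.castRingHom (ZMod p)) (2:ℤ)) = (2 : ZMod p) := by
      simp
    rw [IsRoot.def, ← h3, h2]
    simpa [ZMod.intCast_zmod_eq_zero_iff_dvd] using h1
  set a := n.factorization p with ha
  set m := n / p ^ a with hmdef
  have hmn : n = p ^ a * m := (Nat.ordProj_mul_ordCompl_eq_self n p).symm
  have hpm' : ¬ p ∣ m := Nat.not_dvd_ordCompl hp (by omega)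
  haveI : NeZero (m : ZMod p) := ⟨by rwa [Ne, ZMod.natCast_eq_zero_iff]⟩
  have hprim : IsPrimitiveRoot (2 : ZMod p) m := by
    rw [hmn] at hroot
    exact (isRoot_cyclotomic_prime_pow_mul_iff_of_charP).mp hroot
  have hord : orderOf (2 : ZMod p) = m := hprim.eq_orderOf.symm
  have ha1 : 1 ≤ a := by
    rcases Nat.eq_zero_or_pos a with h0 | h
    · exfalso
      apply hne
      rw [hord]
      rw [h0, pow_zero, one_mul] at hmn
      exact hmn.symm
    · exact h
  have hdvd2 : orderOf (2 : ZMod p) ∣ p - 1 := by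
    apply orderOf_dvd_of_pow_eq_one
    exact ZMod.pow_card_sub_one_eq_one h2ne
  exact ⟨hp2, ha1, by rw [hord]; exact hmn, hdvd2⟩


lemma aux_le_two_pow : ∀ m : ℕ, m + 4 ≤ 2 ^ (m + 2)
  | 0 => by norm_num
  | (m+1) => by
    have := aux_le_two_pow m
    have h2 : (2:ℕ) ^ (m + 2) ≥ 1 := Nat.one_le_two_pow
    calc m + 1 + 4 ≤ 2 ^ (m+2) + 2 ^ (m+2) := by omega
      _ = 2 ^ (m + 1 + 2) := by ring

lemma aux_ineq_main {p Y : ℕ} (hp : 4 ≤ p) (hY : 2 ≤ Y) : p * (Y + 1) < Y ^ p := by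
  have h1 : p ≤ 2 ^ (p - 2) := by
    have := aux_le_two_pow (p - 4)
    have e1 : p - 4 + 4 = p := by omega
    have e2 : p - 4 + 2 = p - 2 := by omega
    rw [e2] at this; omega
  have h2 : (2:ℕ) ^ (p-2) ≤ Y ^ (p-2) := Nat.pow_le_pow_left hY _
  have h3 : Y + 1 < Y ^ 2 := by nlinarith
  calc p * (Y+1) ≤ Y ^ (p-2) * (Y+1) :=
        Nat.mul_le_mul_right _ (h1.trans h2)
    _ < Y ^ (p-2) * Y ^ 2 := by
        have hpos : 0 < Y ^ (p-2) := Nat.pow_pos (by omega)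
        exact Nat.mul_lt_mul_of_le_of_lt (le_refl _) h3 hpos
    _ = Y ^ p := by rw [← pow_add]; congr 1; omega

lemma aux_ineq3 {Y : ℕ} (hY : 3 ≤ Y) : 3 * (Y + 1) < Y ^ 3 := by
  have h9 : 9 ≤ Y * Y := Nat.mul_le_mul hY hY
  have h3 : Y ^ 3 = Y * Y * Y := by ring
  nlinarith

lemma aux_shift {p : ℕ} (hp : p.Prime) (h : ℕ) :
    ∀ a : ℕ, 1 ≤ a → ∀ x : ℤ, (cyclotomic (p ^ a * h) ℤ).eval x
      = (cyclotomic (p * h) ℤ).eval (x ^ p ^ (a - 1))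
  | 1, _, x => by simp
  | (a+2), _, x => by
    have hd : p ∣ p ^ (a+1) * h := Dvd.dvd.mul_right (dvd_pow_self p (by omega)) h
    have key := cyclotomic_expand_eq_cyclotomic hp hd ℤ
    have e1 : p ^ (a+2) * h = (p ^ (a+1) * h) * p := by ring
    have e2 : p * p ^ (a + 1 - 1) = p ^ (a + 2 - 1) := by
      have : a + 1 - 1 = a := by omega
      have h2 : a + 2 - 1 = a + 1 := by omega
      rw [this, h2]
      exact (pow_succ' p a).symm
    rw [e1, ← key, expand_eval, aux_shift hp h (a+1) (by omega) (x ^ p), ← pow_mul, e2]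

theorem bang_two (n : ℕ) (hn : 2 ≤ n) (h6 : n ≠ 6) :
    ∃ p : ℕ, p.Prime ∧ orderOf (2 : ZMod p) = n := by
  by_contra hcon
  push_neg at hcon
  set c := ((cyclotomic n ℤ).eval 2).natAbs with hcdef
  have hc1 : 1 < c := by
    have := sub_one_lt_natAbs_cyclotomic_eval (n := n) (q := 2) (by omega) (by norm_num)
    norm_num at this
    exact this
  set p := c.minFac with hpdef
  have hp : p.Prime := Nat.minFac_prime (by omega)
  haveI : Fact p.Prime := ⟨hp⟩
  have hpc : p ∣ c := Nat.minFac_dvd c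
  obtain ⟨hp2, ha1, hstruct, hdvd1⟩ := aux_struct hn hp hpc (hcon p hp)
  set a := n.factorization p with hadef
  set h := orderOf (2 : ZMod p) with hhdef
  have hp3 : 3 ≤ p := by have := hp.two_le; omega
  have hh1 : 1 ≤ h := by
    rcases Nat.eq_zero_or_pos h with h0 | h1
    · rw [h0, mul_zero] at hstruct; omega
    · exact h1
  have hhp : h < p := by
    have := Nat.le_of_dvd (by omega) hdvd1
    omega
  -- n = m * p with m = p^(a-1) * h
  set m := p ^ (a-1) * h with hmdef
  have hm : n = m * p := by
    rw [hstruct, hmdef]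
    have : p ^ a = p ^ (a - 1) * p := by
      conv_lhs => rw [show a = (a-1) + 1 by omega]
      rw [pow_succ]
    rw [this]; ring
  have hm1 : 1 ≤ m := by
    have : 0 < p ^ (a-1) := Nat.pow_pos (by omega)
    exact Nat.one_le_iff_ne_zero.mpr (by positivity)
  have hhm : h ∣ m := ⟨p ^ (a-1), by rw [hmdef]; ring⟩
  -- p² ∤ c
  have hpsq : ¬ (p ^ 2 ∣ c) := by
    intro hsq
    set N : ℤ := 2 ^ m with hNdef
    set S : ℤ := ∑ i ∈ Finset.range p, N ^ i with hSdef
    have hgeom : (N - 1) * S = 2 ^ n - 1 := by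
      rw [hSdef, mul_geom_sum, hNdef, ← pow_mul, ← hm]
    -- c ∣ S
    have hdd : (X ^ m - 1 : ℤ[X]) * cyclotomic n ℤ ∣ X ^ n - 1 := by
      apply X_pow_sub_one_mul_cyclotomic_dvd_X_pow_sub_one_of_dvd ℤ
      rw [Nat.mem_properDivisors]
      constructor
      · exact ⟨p, hm⟩
      · calc m = m * 1 := (mul_one m).symm
          _ < m * p := by
            apply Nat.mul_lt_mul_of_le_of_lt (le_refl m) (by omega) (by omega)
          _ = n := hm.symm
    have hdd2 := eval_dvd (x := (2:ℤ)) hdd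
    simp only [eval_mul, eval_sub, eval_pow, eval_X, eval_one] at hdd2
    rw [← hgeom] at hdd2
    have hNne : (N - 1) ≠ 0 := by
      have : (2:ℤ) ≤ N := by
        rw [hNdef]
        calc (2:ℤ) = 2 ^ 1 := (pow_one 2).symm
          _ ≤ 2 ^ m := pow_le_pow_right₀ (by norm_num) hm1
      omega
    have heS : (cyclotomic n ℤ).eval 2 ∣ S := by
      have : (N - 1) * (cyclotomic n ℤ).eval 2 ∣ (N - 1) * S := by
        have : ((2:ℤ) ^ m - 1) = N - 1 := by rw [hNdef]
        rwa [this] at hdd2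
      exact (mul_dvd_mul_iff_left hNne).mp this
    have hcS : (c:ℤ) ∣ S := (Int.natAbs_dvd.mpr heS)
    -- p ∣ N - 1
    have hpN : (p:ℤ) ∣ N - 1 := by
      have h1 : p ∣ 2 ^ m - 1 := by
        rw [aux_dvd_iff]
        exact orderOf_dvd_iff_pow_eq_one.mp (hhdef ▸ hhm)
      have h2 : ((2 ^ m - 1 : ℕ) : ℤ) = N - 1 := by
        push_cast [Nat.one_le_two_pow]
        rw [hNdef]
      rw [← h2]
      exact_mod_cast Int.natCast_dvd_natCast.mpr h1
    -- decomposition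
    set T : ℤ := ∑ i ∈ Finset.range p, ∑ j ∈ Finset.range i, N ^ j with hTdef
    have hdec : S - p = (N - 1) * T := by
      rw [hTdef, Finset.mul_sum]
      have e1 : S - p = ∑ i ∈ Finset.range p, (N ^ i - 1) := by
        rw [Finset.sum_sub_distrib, Finset.sum_const, Finset.card_range]
        simp [hSdef]
      rw [e1]
      apply Finset.sum_congr rfl
      intro i _
      exact (mul_geom_sum N i).symm
    have hpT : (p:ℤ) ∣ T := by
      rw [← ZMod.intCast_zmod_eq_zero_iff_dvd, hTdef]
      push_cast
      have hN1 : ((N : ℤ) : ZMod p) = 1 := by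
        have := hpN
        rw [← ZMod.intCast_zmod_eq_zero_iff_dvd] at this
        push_cast at this
        rwa [sub_eq_zero] at this
      rw [hN1]
      simp only [one_pow, Finset.sum_const, Finset.card_range, nsmul_eq_mul, mul_one]
      rw [← Nat.cast_sum]
      obtain ⟨k, hk⟩ : 2 ∣ p - 1 := by
        have := hp.eq_two_or_odd
        omega
      have hsum : (∑ i ∈ Finset.range p, i) = p * k := by
        apply Nat.eq_of_mul_eq_mul_right (show 0 < 2 by norm_num)
        rw [Finset.sum_range_id_mul_two p, hk]
        ring
      rw [hsum]
      simp [ZMod.natCast_self]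
    have hfin : (p:ℤ) ^ 2 ∣ (p:ℤ) := by
      have h1 : (p:ℤ) ^ 2 ∣ S := by
        refine dvd_trans ?_ hcS
        exact_mod_cast Int.natCast_dvd_natCast.mpr hsq
      have h2 : (p:ℤ) ^ 2 ∣ (N - 1) * T := by
        rw [sq]
        exact mul_dvd_mul hpN hpT
      have h4 := dvd_sub h1 h2
      have h3 : S - (N - 1) * T = (p:ℤ) := by linarith [hdec]
      rwa [h3] at h4
    have : (p:ℤ) ^ 2 ≤ p := Int.le_of_dvd (by positivity) hfin
    nlinarith [hp3]
  -- all primes of c equal p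
  have huniq : ∀ q, q.Prime → q ∣ c → q = p := by
    intro q hq hqc
    by_contra hne
    obtain ⟨hq2, hb1, hqstruct, hqdvd1⟩ := aux_struct hn hq hqc (hcon q hq)
    have hpn : p ∣ n := by
      rw [hstruct]
      exact Dvd.dvd.mul_right (dvd_pow_self p (by omega)) h
    have hqn : q ∣ n := by
      rw [hqstruct]
      exact Dvd.dvd.mul_right (dvd_pow_self q (by omega)) _
    have hplt : p < q := by
      have h1 : p ∣ q ^ n.factorization q * orderOf (2 : ZMod q) := hqstruct ▸ hpn
      rcases (Nat.Prime.dvd_mul hp).mp h1 with h2 | h2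
      · exact absurd ((Nat.prime_dvd_prime_iff_eq hp hq).mp (hp.dvd_of_dvd_pow h2)) (fun e => hne e.symm)
      · have h3 : p ∣ q - 1 := h2.trans hqdvd1
        have := Nat.le_of_dvd (by have := hq.two_le; omega) h3
        omega
    have hqlt : q < p := by
      have h1 : q ∣ p ^ a * h := hstruct ▸ hqn
      rcases (Nat.Prime.dvd_mul hq).mp h1 with h2 | h2
      · exact absurd ((Nat.prime_dvd_prime_iff_eq hq hp).mp (hq.dvd_of_dvd_pow h2)) hne
      · have h3 : q ∣ p - 1 := h2.trans hdvd1
        have := Nat.le_of_dvd (by omega) h3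
        omega
    omega
  -- c = p
  have hcp : c = p := by
    have hc0 : c ≠ 0 := by omega
    have hex := Nat.eq_prime_pow_of_unique_prime_dvd hc0 (fun hd hdc => huniq _ hd hdc)
    obtain ⟨tt, htt⟩ : ∃ tt, c = p ^ tt := ⟨_, hex⟩
    match tt, htt with
    | 0, htt => simp at htt; omega
    | 1, htt => simpa using htt
    | (t'+2), htt =>
      exfalso
      apply hpsq
      rw [htt]
      exact pow_dvd_pow p (by omega)
  -- size contradiction
  set Y : ℕ := 2 ^ p ^ (a - 1) with hYdef
  have hY2 : 2 ≤ Y := by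
    rw [hYdef]
    calc (2:ℕ) = 2 ^ 1 := (pow_one 2).symm
      _ ≤ 2 ^ p ^ (a-1) := Nat.pow_le_pow_right (by norm_num) (Nat.pow_pos (by omega))
  have hshift : (cyclotomic n ℤ).eval 2 = (cyclotomic (p * h) ℤ).eval (Y:ℤ) := by
    rw [hstruct]
    rw [aux_shift hp h a ha1 2]
    congr 1
  set B : ℤ := (cyclotomic (p * h) ℤ).eval (Y:ℤ) with hBdef
  have hBpos : 0 < B := by
    rw [hBdef]
    apply cyclotomic_pos' (p * h)
    exact_mod_cast (by omega : (1:ℕ) < Y)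
  have hcB : (c : ℤ) = B := by
    rw [hcdef, hshift]
    exact Int.natAbs_of_nonneg hBpos.le
  -- show p < B in all cases
  have hfinal : (p : ℤ) < B := by
    rcases Nat.lt_or_ge h 3 with hh3 | hh3
    · interval_cases h
      · -- h = 1 : B = sum of powers
        have hB1 : B = ∑ i ∈ Finset.range p, (Y:ℤ) ^ i := by
          rw [hBdef, mul_one, cyclotomic_prime ℤ p]
          simp [eval_geom_sum]
        have hsplit : ∑ i ∈ Finset.range p, (Y:ℤ) ^ i
            = (∑ i ∈ Finset.range (p-1), (Y:ℤ) ^ i) + (Y:ℤ) ^ (p-1) := by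
          conv_lhs => rw [show p = (p-1) + 1 by omega]
          rw [Finset.sum_range_succ]
        have h1 : ((p:ℤ) - 1) ≤ ∑ i ∈ Finset.range (p-1), (Y:ℤ) ^ i := by
          calc ((p:ℤ) - 1) = ((p - 1 : ℕ) : ℤ) := by omega
            _ = ∑ _i ∈ Finset.range (p-1), (1:ℤ) := by simp
            _ ≤ _ := Finset.sum_le_sum (fun i _ => one_le_pow₀ (by exact_mod_cast (show (1:ℕ) ≤ Y by omega)))
        have h2 : (2:ℤ) ≤ (Y:ℤ) ^ (p-1) := by
          calc (2:ℤ) ≤ (Y:ℤ) := by exact_mod_cast hY2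
            _ ≤ (Y:ℤ) ^ (p-1) := le_self_pow₀ (by exact_mod_cast (by omega : (1:ℕ) ≤ Y)) (by omega)
        rw [hB1, hsplit]
        linarith
      · -- h = 2 : B * (Y+1) = Y^p + 1
        have hnp2 : ¬ p ∣ 2 := fun hd => hp2 ((Nat.prime_dvd_prime_iff_eq hp Nat.prime_two).mp hd)
        have key := cyclotomic_expand_eq_cyclotomic_mul hp hnp2 ℤ
        have hev := congrArg (eval (Y:ℤ)) key
        rw [expand_eval, eval_mul, cyclotomic_two] at hev
        simp only [eval_add, eval_X, eval_one] at hev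
        have hBev : (Y:ℤ) ^ p + 1 = B * ((Y:ℤ) + 1) := by
          rw [hBdef, mul_comm p 2]
          exact hev
        have hineq : (p:ℤ) * ((Y:ℤ) + 1) < (Y:ℤ) ^ p := by
          rcases Nat.lt_or_ge p 4 with hp4 | hp4
          · -- p = 3 : then a ≥ 2 since n ≠ 6, so Y ≥ 8
            have hp3' : p = 3 := by omega
            have ha2 : 2 ≤ a := by
              rcases Nat.lt_or_ge a 2 with ha' | ha'
              · exfalso; apply h6
                have : a = 1 := by omega
                rw [hstruct, this, hp3']
                norm_num
              · exact ha'
            have hY8 : 3 ≤ Y := by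
              rw [hYdef]
              have : 1 ≤ p ^ (a-1) → 2 ≤ p ^ (a - 1) → 3 ≤ 2 ^ p ^ (a-1) := by
                intro _ h2'
                calc (3:ℕ) ≤ 2 ^ 2 := by norm_num
                  _ ≤ 2 ^ p ^ (a-1) := Nat.pow_le_pow_right (by norm_num) h2'
              apply this (Nat.pow_pos (by omega))
              calc (2:ℕ) ≤ p := by omega
                _ = p ^ 1 := (pow_one p).symm
                _ ≤ p ^ (a-1) := Nat.pow_le_pow_right (by omega) (by omega)
            have := aux_ineq3 hY8
            rw [hp3']
            exact_mod_cast this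
          · have := aux_ineq_main hp4 hY2
            exact_mod_cast this
        by_contra hle
        push_neg at hle
        have : B * ((Y:ℤ) + 1) ≤ (p:ℤ) * ((Y:ℤ) + 1) := by
          apply mul_le_mul_of_nonneg_right hle
          positivity
        omega
    · -- h ≥ 3 : real bounds
      have hp4 : 4 ≤ p := by omega
      have hph : ¬ p ∣ h := fun hd => absurd (Nat.le_of_dvd (by omega) hd) (by omega)
      have key := cyclotomic_expand_eq_cyclotomic_mul hp hph ℝ
      have hev := congrArg (eval ((Y:ℕ) : ℝ)) key
      rw [expand_eval, eval_mul] at hev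
      set YR : ℝ := ((Y:ℕ) : ℝ) with hYR
      have h1YR : (1:ℝ) < YR := by
        rw [hYR]
        exact_mod_cast (show (1:ℕ) < Y by omega)
      have hApos : 0 < (cyclotomic h ℝ).eval YR := cyclotomic_pos' h h1YR
      have hA := cyclotomic_eval_lt_add_one_pow_totient (n := h) (q := YR) hh3 h1YR
      have hB2 := sub_one_pow_totient_lt_cyclotomic_eval (n := h) (q := YR ^ p)
        (by omega) (one_lt_pow₀ h1YR (by omega))
      have htot1 : 1 ≤ h.totient := Nat.totient_pos.mpr (by omega)
      have hineqR : (p:ℝ) * (YR + 1) ≤ YR ^ p - 1 := by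
        have := aux_ineq_main hp4 hY2
        have h' : (p:ℕ) * (Y + 1) + 1 ≤ Y ^ p := by omega
        have := (Nat.cast_le (α := ℝ)).mpr h'
        push_cast at this
        linarith
      have hchain : (p:ℝ) * ((YR + 1) ^ h.totient) ≤ ((p:ℝ) * (YR + 1)) ^ h.totient := by
        rw [mul_pow]
        apply mul_le_mul_of_nonneg_right
        · exact le_self_pow₀ (by exact_mod_cast hp.one_lt.le) (by omega)
        · positivity
      have hfinR : (p:ℝ) * (cyclotomic h ℝ).eval YR
          < (cyclotomic (h * p) ℝ).eval YR * (cyclotomic h ℝ).eval YR := by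
        calc (p:ℝ) * (cyclotomic h ℝ).eval YR
            < (p:ℝ) * (YR + 1) ^ h.totient := by
              apply mul_lt_mul_of_pos_left hA
              exact_mod_cast hp.pos
          _ ≤ ((p:ℝ) * (YR + 1)) ^ h.totient := hchain
          _ ≤ (YR ^ p - 1) ^ h.totient := by
              apply pow_le_pow_left₀ (by positivity) hineqR
          _ < (cyclotomic h ℝ).eval (YR ^ p) := hB2
          _ = (cyclotomic (h * p) ℝ).eval YR * (cyclotomic h ℝ).eval YR := hev
      have hBR : (p:ℝ) < (cyclotomic (h * p) ℝ).eval YR :=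
        lt_of_mul_lt_mul_right hfinR hApos.le
      have h0 := cyclotomic.eval_apply ((Y:ℕ) : ℤ) (h * p) (Int.castRingHom ℝ)
      simp only [eq_intCast, Int.cast_natCast] at h0
      have htrans : ((B : ℤ) : ℝ) = (cyclotomic (h * p) ℝ).eval YR := by
        rw [hBdef, mul_comm p h, hYR]
        exact h0.symm
      rw [← htrans] at hBR
      exact_mod_cast hBR
  omega

/-- `ω(2^k - 1) ≥ τ(k) - 2` for every positive integer `k`. -/
theorem omega_mersenne_ge (k : ℕ) (hk : 1 ≤ k) :
    (tau k : ℤ) - 2 ≤ (omega (2 ^ k - 1) : ℤ) := by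
  classical
  have hchoice : ∀ d : ℕ, ∃ p : ℕ, (2 ≤ d → d ≠ 6 → p.Prime ∧ orderOf (2 : ZMod p) = d) := by
    intro d
    by_cases hd : 2 ≤ d ∧ d ≠ 6
    · obtain ⟨p, hp⟩ := bang_two d hd.1 hd.2
      exact ⟨p, fun _ _ => hp⟩
    · exact ⟨0, fun h1 h2 => absurd ⟨h1, h2⟩ hd⟩
  choose f hf using hchoice
  set S := k.divisors.filter (fun d => d ≠ 1 ∧ d ≠ 6) with hS
  have hmer : 2 ^ k - 1 ≠ 0 := by
    have h2 : 2 ≤ 2 ^ k := by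
      calc (2:ℕ) = 2 ^ 1 := rfl
        _ ≤ 2 ^ k := Nat.pow_le_pow_right (by norm_num) hk
    omega
  have hdS : ∀ d ∈ S, 2 ≤ d ∧ d ≠ 6 ∧ d ∣ k := by
    intro d hd
    rw [hS, Finset.mem_filter, Nat.mem_divisors] at hd
    obtain ⟨⟨hdk, hk0⟩, hd1, hd6⟩ := hd
    have : d ≠ 0 := by rintro rfl; exact hk0 (zero_dvd_iff.mp hdk)
    exact ⟨by omega, hd6, hdk⟩
  have hcard : S.card ≤ (2 ^ k - 1).primeFactors.card := by
    apply Finset.card_le_card_of_injOn f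
    · intro d hd
      obtain ⟨hd2, hd6, hdk⟩ := hdS d hd
      obtain ⟨hp, hord⟩ := hf d hd2 hd6
      haveI : Fact (f d).Prime := ⟨hp⟩
      rw [Finset.mem_coe, Nat.mem_primeFactors]
      refine ⟨hp, ?_, hmer⟩
      rw [aux_dvd_iff]
      apply orderOf_dvd_iff_pow_eq_one.mp
      rw [hord]; exact hdk
    · intro d1 h1 d2 h2 heq
      obtain ⟨hd2a, hd6a, _⟩ := hdS d1 h1
      obtain ⟨hd2b, hd6b, _⟩ := hdS d2 h2
      obtain ⟨_, hord1⟩ := hf d1 hd2a hd6a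
      obtain ⟨_, hord2⟩ := hf d2 hd2b hd6b
      rw [heq] at hord1
      omega
  have hcard2 : k.divisors.card ≤ S.card + 2 := by
    have hsplit := Finset.card_filter_add_card_filter_not
      (s := k.divisors) (p := fun d => d ≠ 1 ∧ d ≠ 6)
    have hsub : k.divisors.filter (fun d => ¬(d ≠ 1 ∧ d ≠ 6)) ⊆ {1, 6} := by
      intro d hd
      rw [Finset.mem_filter] at hd
      simp only [Finset.mem_insert, Finset.mem_singleton]
      tauto
    have hle := Finset.card_le_card hsub
    have : ({1, 6} : Finset ℕ).card = 2 := by decide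
    rw [this] at hle
    rw [hS]
    omega
  rw [tau, omega]
  omega
end

section
/- For every positive integer k, one has 4·τ(2^k − 1) ≥ 2^{τ(k)}; equivalently, τ(2^k − 1) ≥ 2^{τ(k)}/4. -/
/-!  Auxiliary development: Bang's theorem (existence of primitive prime divisors
of `2^n - 1` for `n ∉ {1, 6}`), proved via cyclotomic polynomials, and the
resulting bound `τ(2^k-1) ≥ 2^{τ(k)}/4`.  -/

open Polynomial Finset ArithmeticFunction
open scoped ArithmeticFunction.Moebius

namespace BangAux

noncomputable def pc (n : ℕ) : ℕ := ((Polynomial.cyclotomic n ℤ).eval 2).natAbs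

lemma pc_cast (n : ℕ) : (pc n : ℤ) = (cyclotomic n ℤ).eval 2 :=
  Int.natAbs_of_nonneg (cyclotomic_nonneg n (by norm_num))

lemma pc_one : pc 1 = 1 := by simp [pc, cyclotomic_one]

lemma one_lt_pc {n : ℕ} (hn : 2 ≤ n) : 1 < pc n := by
  have := Polynomial.sub_one_lt_natAbs_cyclotomic_eval (n := n) (q := 2) hn (by norm_num)
  simpa [pc] using this

lemma pc_pos {n : ℕ} (hn : 0 < n) : 0 < pc n := by
  rcases eq_or_lt_of_le (Nat.one_le_iff_ne_zero.mpr hn.ne') with h | h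
  · simp [← h, pc_one]
  · exact lt_trans one_pos (one_lt_pc h)

lemma prod_pc {n : ℕ} (hn : 0 < n) : ∏ d ∈ n.divisors, pc d = 2 ^ n - 1 := by
  have h := congrArg (Polynomial.eval (2:ℤ)) (prod_cyclotomic_eq_X_pow_sub_one hn ℤ)
  rw [eval_prod, eval_sub, eval_pow, eval_X, eval_one] at h
  have h2 : ((∏ d ∈ n.divisors, pc d : ℕ) : ℤ) = (2:ℤ)^n - 1 := by
    push_cast
    rw [← h]
    exact Finset.prod_congr rfl fun d _ => pc_cast d
  have h1 : (1:ℕ) ≤ 2^n := Nat.one_le_two_pow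
  have h3 : ((2^n - 1 : ℕ) : ℤ) = (2:ℤ)^n - 1 := by push_cast [h1]; ring
  exact_mod_cast h2.trans h3.symm

lemma pc_dvd {n : ℕ} (hn : 0 < n) : pc n ∣ 2 ^ n - 1 := by
  rw [← prod_pc hn]
  exact Finset.dvd_prod_of_mem _ (Nat.mem_divisors_self n hn.ne')

lemma moebius_vals (a : ℕ) : μ a = 1 ∨ μ a = -1 ∨ μ a = 0 := by
  by_cases h : Squarefree a
  · rw [moebius_apply_of_squarefree h]
    rcases Nat.even_or_odd (cardFactors a) with he | ho
    · left; exact he.neg_one_pow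
    · right; left; exact ho.neg_one_pow
  · right; right; exact moebius_eq_zero_of_not_squarefree h

-- test the inversion lemmas' exact form
example (f g : ℕ → ℚ) (hf : ∀ n, 0 < n → f n ≠ 0) (hg : ∀ n, 0 < n → g n ≠ 0)
    (h : ∀ n > 0, ∏ i ∈ n.divisors, f i = g n) (n : ℕ) (hn : 0 < n) :
    ∏ x ∈ n.divisorsAntidiagonal, g x.snd ^ (μ x.fst : ℤ) = f n :=
  (prod_eq_iff_prod_pow_moebius_eq_of_nonzero hf hg).mp h n hn

example (f g : ℕ → ℤ) (h : ∀ n > 0, ∑ i ∈ n.divisors, f i = g n) (n : ℕ) (hn : 0 < n) :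
    ∑ x ∈ n.divisorsAntidiagonal, μ x.fst • g x.snd = f n :=
  sum_eq_iff_sum_smul_moebius_eq.mp h n hn

lemma prod_zpow_split (A : Finset (ℕ×ℕ)) (h : ℕ×ℕ → ℚ) (hh : ∀ x ∈ A, h x ≠ 0)
    (e : ℕ×ℕ → ℤ) (he : ∀ x, e x = 1 ∨ e x = -1 ∨ e x = 0) :
    (∏ x ∈ A, h x ^ e x) * ∏ x ∈ A.filter (fun x => e x = -1), h x
      = ∏ x ∈ A.filter (fun x => e x = 1), h x := by
  classical
  rw [← Finset.prod_filter_mul_prod_filter_not A (fun x => e x = 1) (fun x => h x ^ e x)]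
  have h1 : ∏ x ∈ A.filter (fun x => e x = 1), h x ^ e x
      = ∏ x ∈ A.filter (fun x => e x = 1), h x := by
    refine Finset.prod_congr rfl fun x hx => ?_
    rw [(Finset.mem_filter.mp hx).2, zpow_one]
  have h2 : ∏ x ∈ A.filter (fun x => ¬ e x = 1), h x ^ e x
      = (∏ x ∈ A.filter (fun x => e x = -1), h x)⁻¹ := by
    rw [← Finset.prod_filter_mul_prod_filter_not (A.filter (fun x => ¬ e x = 1))
      (fun x => e x = -1) (fun x => h x ^ e x), Finset.filter_filter, Finset.filter_filter]
    have hs : A.filter (fun x => ¬ e x = 1 ∧ e x = -1) = A.filter (fun x => e x = -1) := by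
      refine Finset.filter_congr fun x _ => ?_
      constructor
      · exact fun hx => hx.2
      · exact fun hx => ⟨by rw [hx]; decide, hx⟩
    rw [hs]
    have h3 : ∏ x ∈ A.filter (fun x => e x = -1), h x ^ e x
        = (∏ x ∈ A.filter (fun x => e x = -1), h x)⁻¹ := by
      rw [← Finset.prod_inv_distrib]
      refine Finset.prod_congr rfl fun x hx => ?_
      rw [(Finset.mem_filter.mp hx).2, zpow_neg, zpow_one]
    have h4 : ∏ x ∈ A.filter (fun x => ¬ e x = 1 ∧ ¬ e x = -1), h x ^ e x = 1 := by
      refine Finset.prod_eq_one fun x hx => ?_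
      rcases he x with h | h | h
      · exact absurd h (Finset.mem_filter.mp hx).2.1
      · exact absurd h (Finset.mem_filter.mp hx).2.2
      · rw [h, zpow_zero]
    rw [h3, h4, mul_one]
  rw [h1, h2, mul_assoc]
  have hne : ∏ x ∈ A.filter (fun x => e x = -1), h x ≠ 0 :=
    Finset.prod_ne_zero_iff.mpr fun x hx => hh x (Finset.mem_filter.mp hx).1
  rw [inv_mul_cancel₀ hne, mul_one]

lemma cast_mersenne (m : ℕ) : ((2^m - 1 : ℕ) : ℚ) = (2:ℚ)^m - 1 := by
  have : (1:ℕ) ≤ 2^m := Nat.one_le_two_pow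
  push_cast [this]; ring

lemma identity_I {n : ℕ} (hn : 0 < n) :
    pc n * ∏ x ∈ n.divisorsAntidiagonal.filter (fun x => μ x.1 = -1), (2^x.2 - 1)
      = ∏ x ∈ n.divisorsAntidiagonal.filter (fun x => μ x.1 = 1), (2^x.2 - 1) := by
  have hinv := (prod_eq_iff_prod_pow_moebius_eq_of_nonzero
      (f := fun d => (pc d : ℚ)) (g := fun d => ((2^d - 1 : ℕ) : ℚ))
      (fun d hd => by exact_mod_cast (pc_pos hd).ne')
      (fun d hd => by
        have : (1:ℕ) < 2^d := Nat.one_lt_two_pow_iff.mpr hd.ne'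
        exact_mod_cast (Nat.sub_pos_of_lt this).ne')).mp
      (fun d hd => by exact_mod_cast congrArg (Nat.cast (R := ℚ)) (prod_pc hd)) n hn
  have hsplit := prod_zpow_split n.divisorsAntidiagonal
      (fun x => ((2^x.2 - 1 : ℕ) : ℚ))
      (fun x hx => by
        have h2 : 0 < x.2 := Nat.snd_mem_divisors_of_mem_antidiagonal hx |> Nat.pos_of_mem_divisors
        have : (1:ℕ) < 2^x.2 := Nat.one_lt_two_pow_iff.mpr h2.ne'
        exact_mod_cast (Nat.sub_pos_of_lt this).ne')
      (fun x => μ x.1) (fun x => moebius_vals x.1)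
  rw [hinv] at hsplit
  exact_mod_cast hsplit

lemma identity_II {n : ℕ} (hn : 0 < n) :
    n.totient + ∑ x ∈ n.divisorsAntidiagonal.filter (fun x => μ x.1 = -1), x.2
      = ∑ x ∈ n.divisorsAntidiagonal.filter (fun x => μ x.1 = 1), x.2 := by
  have hinv := sum_eq_iff_sum_smul_moebius_eq
      (f := fun d => (d.totient : ℤ)) (g := fun d => (d : ℤ)) |>.mp
      (fun d hd => by exact_mod_cast congrArg (Nat.cast (R := ℤ)) (Nat.sum_totient d)) n hn
  -- split the sum
  have hsplit : ∑ x ∈ n.divisorsAntidiagonal, μ x.fst • (x.snd : ℤ)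
      = (∑ x ∈ n.divisorsAntidiagonal.filter (fun x => μ x.1 = 1), (x.2:ℤ))
        - ∑ x ∈ n.divisorsAntidiagonal.filter (fun x => μ x.1 = -1), (x.2:ℤ) := by
    rw [← Finset.sum_filter_add_sum_filter_not n.divisorsAntidiagonal (fun x => μ x.1 = 1)]
    have h1 : ∑ x ∈ n.divisorsAntidiagonal.filter (fun x => μ x.1 = 1), μ x.fst • (x.snd : ℤ)
        = ∑ x ∈ n.divisorsAntidiagonal.filter (fun x => μ x.1 = 1), (x.2:ℤ) := by
      refine Finset.sum_congr rfl fun x hx => ?_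
      rw [(Finset.mem_filter.mp hx).2, one_smul]
    have h2 : ∑ x ∈ n.divisorsAntidiagonal.filter (fun x => ¬ μ x.1 = 1), μ x.fst • (x.snd : ℤ)
        = - ∑ x ∈ n.divisorsAntidiagonal.filter (fun x => μ x.1 = -1), (x.2:ℤ) := by
      rw [← Finset.sum_filter_add_sum_filter_not
        (n.divisorsAntidiagonal.filter (fun x => ¬ μ x.1 = 1)) (fun x => μ x.1 = -1),
        Finset.filter_filter, Finset.filter_filter]
      have hs : n.divisorsAntidiagonal.filter (fun x => ¬ μ x.1 = 1 ∧ μ x.1 = -1)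
          = n.divisorsAntidiagonal.filter (fun x => μ x.1 = -1) := by
        refine Finset.filter_congr fun x _ => ?_
        constructor
        · exact fun hx => hx.2
        · exact fun hx => ⟨by rw [hx]; decide, hx⟩
      have h3 : ∑ x ∈ n.divisorsAntidiagonal.filter (fun x => μ x.1 = -1), μ x.fst • (x.snd : ℤ)
          = - ∑ x ∈ n.divisorsAntidiagonal.filter (fun x => μ x.1 = -1), (x.2:ℤ) := by
        rw [← Finset.sum_neg_distrib]
        refine Finset.sum_congr rfl fun x hx => ?_
        rw [(Finset.mem_filter.mp hx).2]
        simp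
      have h4 : ∑ x ∈ n.divisorsAntidiagonal.filter (fun x => ¬ μ x.1 = 1 ∧ ¬ μ x.1 = -1),
          μ x.fst • (x.snd : ℤ) = 0 := by
        refine Finset.sum_eq_zero fun x hx => ?_
        rcases moebius_vals x.1 with h | h | h
        · exact absurd h (Finset.mem_filter.mp hx).2.1
        · exact absurd h (Finset.mem_filter.mp hx).2.2
        · rw [h, zero_smul]
      rw [hs, h3, h4, add_zero]
    rw [h1, h2]; ring
  rw [hsplit] at hinv
  have e1 : ((∑ x ∈ n.divisorsAntidiagonal.filter (fun x => μ x.1 = 1), x.2 : ℕ) : ℤ)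
      = ∑ x ∈ n.divisorsAntidiagonal.filter (fun x => μ x.1 = 1), (x.2:ℤ) := by push_cast; rfl
  have e2 : ((∑ x ∈ n.divisorsAntidiagonal.filter (fun x => μ x.1 = -1), x.2 : ℕ) : ℤ)
      = ∑ x ∈ n.divisorsAntidiagonal.filter (fun x => μ x.1 = -1), (x.2:ℤ) := by push_cast; rfl
  omega

lemma weierstrass (S : Finset ℕ) (g : ℕ → ℚ) (h0 : ∀ e ∈ S, 0 ≤ g e) (h1 : ∀ e ∈ S, g e ≤ 1) :
    1 - ∑ e ∈ S, g e ≤ ∏ e ∈ S, (1 - g e) := by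
  classical
  induction S using Finset.induction_on with
  | empty => simp
  | @insert a s ha ih =>
    rw [Finset.sum_insert ha, Finset.prod_insert ha]
    have hga0 := h0 a (Finset.mem_insert_self a s)
    have hga1 := h1 a (Finset.mem_insert_self a s)
    have ihs := ih (fun e he => h0 e (Finset.mem_insert_of_mem he))
      (fun e he => h1 e (Finset.mem_insert_of_mem he))
    have hsum : (0:ℚ) ≤ ∑ e ∈ s, g e :=
      Finset.sum_nonneg fun e he => h0 e (Finset.mem_insert_of_mem he)
    nlinarith [ihs, hga0, hga1, hsum]

lemma geo : ∀ N : ℕ, 1 ≤ N → ∑ j ∈ Finset.Icc 2 N, ((2:ℚ)⁻¹)^j ≤ 1/2 - (2⁻¹:ℚ)^N := by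
  intro N hN
  induction N, hN using Nat.le_induction with
  | base => norm_num
  | succ n hn ih =>
    have h2 : 2 ≤ n + 1 := by omega
    have hins : Finset.Icc 2 (n+1) = insert (n+1) (Finset.Icc 2 n) := by
      ext j
      simp only [Finset.mem_Icc, Finset.mem_insert]
      omega
    rw [hins, Finset.sum_insert (by simp)]
    have hp : ((2:ℚ)⁻¹)^(n+1) = (2⁻¹:ℚ)^n * 2⁻¹ := by ring
    nlinarith [ih, pow_nonneg (by norm_num : (0:ℚ) ≤ (2:ℚ)⁻¹) n]

lemma quarter_le_prod (T : Finset ℕ) (hT : ∀ e ∈ T, 0 < e) :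
    (1/4 : ℚ) ≤ ∏ e ∈ T, (1 - (2⁻¹:ℚ)^e) := by
  classical
  set T' := T.erase 1 with hT'
  have hT'2 : ∀ e ∈ T', 2 ≤ e := by
    intro e he
    have h1 := Finset.mem_of_mem_erase he
    have h2 := Finset.ne_of_mem_erase he
    have := hT e h1
    omega
  have hsub : T' ⊆ Finset.Icc 2 (max (T'.sup _root_.id) 1) := by
    intro e he
    rw [Finset.mem_Icc]
    exact ⟨hT'2 e he, le_max_of_le_left (Finset.le_sup (f := _root_.id) he)⟩
  have hsum : ∑ e ∈ T', ((2:ℚ)⁻¹)^e ≤ 1/2 := by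
    calc ∑ e ∈ T', ((2:ℚ)⁻¹)^e ≤ ∑ j ∈ Finset.Icc 2 (max (T'.sup _root_.id) 1), ((2:ℚ)⁻¹)^j :=
          Finset.sum_le_sum_of_subset_of_nonneg hsub
            (fun j _ _ => pow_nonneg (by norm_num) j)
      _ ≤ 1/2 - (2⁻¹:ℚ)^(max (T'.sup _root_.id) 1) := geo _ (le_max_right _ _)
      _ ≤ 1/2 := by
          have : (0:ℚ) ≤ (2⁻¹:ℚ)^(max (T'.sup _root_.id) 1) := pow_nonneg (by norm_num) _
          linarith
  have hprod' : (1/2 : ℚ) ≤ ∏ e ∈ T', (1 - (2⁻¹:ℚ)^e) := by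
    have := weierstrass T' (fun e => ((2:ℚ)⁻¹)^e)
      (fun e _ => pow_nonneg (by norm_num) e)
      (fun e _ => by
        have : ((2:ℚ)⁻¹)^e ≤ (2⁻¹:ℚ)^0 := pow_le_pow_of_le_one (by norm_num) (by norm_num) (Nat.zero_le e)
        simpa using this)
    linarith
  by_cases h1 : 1 ∈ T
  · have : ∏ e ∈ T, (1 - (2⁻¹:ℚ)^e) = (1 - (2⁻¹:ℚ)^1) * ∏ e ∈ T', (1 - (2⁻¹:ℚ)^e) :=
      (Finset.mul_prod_erase T _ h1).symm
    rw [this]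
    norm_num
    linarith
  · rw [hT', Finset.erase_eq_of_notMem h1] at hprod'
    linarith

lemma K0 (T : Finset ℕ) (hT : ∀ e ∈ T, 0 < e) :
    2^(∑ e ∈ T, e) ≤ 4 * ∏ e ∈ T, (2^e - 1) := by
  classical
  have cast_m : ∀ m : ℕ, ((2^m - 1 : ℕ) : ℚ) = (2:ℚ)^m - 1 := by
    intro m
    have : (1:ℕ) ≤ 2^m := Nat.one_le_two_pow
    push_cast [this]; ring
  have hq : ((2:ℚ))^(∑ e ∈ T, e) ≤ 4 * ∏ e ∈ T, ((2:ℚ)^e - 1) := by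
    have hfac : ∀ e ∈ T, (2:ℚ)^e - 1 = 2^e * (1 - (2⁻¹:ℚ)^e) := by
      intro e _
      rw [mul_sub, mul_one, ← mul_pow]; norm_num
    rw [Finset.prod_congr rfl hfac, Finset.prod_mul_distrib, Finset.prod_pow_eq_pow_sum]
    have h4 := quarter_le_prod T hT
    have hpos : (0:ℚ) < (2:ℚ)^(∑ e ∈ T, e) := by positivity
    nlinarith [h4, hpos]
  have hcast : ((4 * ∏ e ∈ T, (2^e - 1) : ℕ) : ℚ) = 4 * ∏ e ∈ T, ((2:ℚ)^e - 1) := by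
    push_cast
    rw [Finset.prod_congr rfl (fun e _ => cast_m e)]
  have : ((2^(∑ e ∈ T, e) : ℕ) : ℚ) ≤ ((4 * ∏ e ∈ T, (2^e - 1) : ℕ) : ℚ) := by
    rw [hcast]; push_cast; exact hq
  exact_mod_cast this

lemma K_pairs (n : ℕ) (A : Finset (ℕ×ℕ)) (hA : A ⊆ n.divisorsAntidiagonal) :
    2^(∑ x ∈ A, x.2) ≤ 4 * ∏ x ∈ A, (2^x.2 - 1) := by
  classical
  have hinj : Set.InjOn Prod.snd (A : Set (ℕ×ℕ)) := by
    intro x hx y hy hxy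
    have hx' := (Nat.mem_divisorsAntidiagonal.mp (hA hx))
    have hy' := (Nat.mem_divisorsAntidiagonal.mp (hA hy))
    have h2 : 0 < x.2 := by
      rcases Nat.eq_zero_or_pos x.2 with h | h
      · exfalso; apply hx'.2; rw [← hx'.1, h, mul_zero]
      · exact h
    have : x.1 * x.2 = y.1 * x.2 := by rw [hx'.1, hxy, hy'.1]
    have h1 : x.1 = y.1 := Nat.eq_of_mul_eq_mul_right h2 this
    exact Prod.ext h1 hxy
  have hsum : ∑ x ∈ A, x.2 = ∑ e ∈ A.image Prod.snd, e :=
    (Finset.sum_image (f := fun e => e) (fun x hx y hy h => hinj hx hy h)).symm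
  have hprod : ∏ x ∈ A, (2^x.2 - 1) = ∏ e ∈ A.image Prod.snd, (2^e - 1) :=
    (Finset.prod_image (f := fun e => 2^e - 1) (fun x hx y hy h => hinj hx hy h)).symm
  rw [hsum, hprod]
  refine K0 _ fun e he => ?_
  rcases Finset.mem_image.mp he with ⟨x, hx, rfl⟩
  exact Nat.pos_of_mem_divisors (Nat.snd_mem_divisors_of_mem_antidiagonal (hA hx))

theorem pow_totient_le_four_pc {n : ℕ} (hn : 0 < n) : 2^n.totient ≤ 4 * pc n := by
  classical
  set A1 := n.divisorsAntidiagonal.filter (fun x => μ x.1 = 1) with hA1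
  set Am := n.divisorsAntidiagonal.filter (fun x => μ x.1 = -1) with hAm
  have hK : 2^(∑ x ∈ A1, x.2) ≤ 4 * ∏ x ∈ A1, (2^x.2 - 1) :=
    K_pairs n A1 (Finset.filter_subset _ _)
  have hT : ∏ x ∈ Am, (2^x.2 - 1) ≤ 2^(∑ x ∈ Am, x.2) := by
    rw [← Finset.prod_pow_eq_pow_sum]
    exact Finset.prod_le_prod' fun x _ => Nat.sub_le _ _
  have key : 2^n.totient * 2^(∑ x ∈ Am, x.2) ≤ (4 * pc n) * 2^(∑ x ∈ Am, x.2) := by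
    calc 2^n.totient * 2^(∑ x ∈ Am, x.2) = 2^(n.totient + ∑ x ∈ Am, x.2) := (pow_add 2 _ _).symm
      _ = 2^(∑ x ∈ A1, x.2) := by rw [identity_II hn]
      _ ≤ 4 * ∏ x ∈ A1, (2^x.2 - 1) := hK
      _ = 4 * (pc n * ∏ x ∈ Am, (2^x.2 - 1)) := by rw [identity_I hn]
      _ ≤ 4 * (pc n * 2^(∑ x ∈ Am, x.2)) := by
          exact Nat.mul_le_mul_left 4 (Nat.mul_le_mul_left (pc n) hT)
      _ = (4 * pc n) * 2^(∑ x ∈ Am, x.2) := by ring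
  exact Nat.le_of_mul_le_mul_right key (Nat.pow_pos (by norm_num))

lemma dvd_mersenne_iff (q m : ℕ) [NeZero q] : q ∣ 2^m - 1 ↔ (2:ZMod q)^m = 1 := by
  have h1 : (1:ℕ) ≤ 2^m := Nat.one_le_two_pow
  rw [← ZMod.natCast_eq_zero_iff]
  rw [Nat.cast_sub h1]
  push_cast
  exact sub_eq_zero

lemma isRoot_of_dvd_pc {q : ℕ} [Fact q.Prime] {n : ℕ} (h : q ∣ pc n) :
    (cyclotomic n (ZMod q)).IsRoot 2 := by
  have := cyclotomic.eval_apply (2:ℤ) n (Int.castRingHom (ZMod q))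
  rw [IsRoot.def]
  have h2 : (2 : ZMod q) = (Int.castRingHom (ZMod q)) (2:ℤ) := by simp
  rw [h2, this]
  have : ((pc n : ℤ) : ZMod q) = 0 := by
    rw [ZMod.intCast_zmod_eq_zero_iff_dvd]
    exact_mod_cast Int.natCast_dvd_natCast.mpr h
  rw [pc_cast] at this
  simpa using this

-- primitive prime existence in the "good" case
lemma primitive_of_not_dvd {q n : ℕ} (hq : q.Prime) (hn : 0 < n)
    (hpc : q ∣ pc n) (hqn : ¬ q ∣ n) :
    q ∣ 2^n - 1 ∧ ∀ m, 0 < m → m < n → ¬ q ∣ 2^m - 1 := by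
  haveI : Fact q.Prime := ⟨hq⟩
  haveI : NeZero ((n : ZMod q)) := ⟨by
    rw [Ne, ZMod.natCast_eq_zero_iff]
    exact hqn⟩
  have hroot := isRoot_of_dvd_pc (n := n) hpc
  have hprim : IsPrimitiveRoot (2 : ZMod q) n := (isRoot_cyclotomic_iff).mp hroot
  constructor
  · rw [dvd_mersenne_iff]
    exact hprim.pow_eq_one
  · intro m hm hmn hdvd
    rw [dvd_mersenne_iff] at hdvd
    have := hprim.dvd_of_pow_eq_one m hdvd
    exact absurd (Nat.le_of_dvd hm this) (not_le.mpr hmn)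

lemma one_add_pow {R : Type*} [CommRing R] (c : R) (hc : c * c = 0) :
    ∀ i : ℕ, (1 + c)^i = 1 + (i:R) * c := by
  intro i
  induction i with
  | zero => simp
  | succ k ih =>
    rw [pow_succ, ih]
    push_cast
    linear_combination (k : R) * hc

lemma sq_not_dvd_pc {q n : ℕ} (hq : q.Prime) (hn : 0 < n) (hqn : q ∣ n) (hpc : q ∣ pc n) :
    ¬ q^2 ∣ pc n := by
  haveI : Fact q.Prime := ⟨hq⟩
  haveI : NeZero q := ⟨hq.ne_zero⟩
  have hpow2 : (2:ℕ) ≤ 2^n := by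
    calc (2:ℕ) = 2^1 := (pow_one 2).symm
      _ ≤ 2^n := Nat.pow_le_pow_right (by norm_num) hn
  -- q is odd
  have hq2 : q ≠ 2 := by
    intro h
    have h1 : q ∣ 2^n - 1 := hpc.trans (pc_dvd hn)
    rw [h] at h1
    obtain ⟨c, hc⟩ := h1
    have h2 : (2:ℕ) ∣ 2^n := dvd_pow_self 2 hn.ne'
    omega
  have hqodd : q % 2 = 1 := by
    rcases Nat.mod_two_eq_zero_or_one q with h | h
    · exfalso
      exact hq2 ((Nat.prime_dvd_prime_iff_eq Nat.prime_two hq).mp (Nat.dvd_of_mod_eq_zero h)).symm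
    · exact h
  have hq3 : 3 ≤ q := by
    have := hq.two_le
    omega
  -- the order of 2 mod q
  set d := orderOf (2 : ZMod q) with hd
  have h2ne : (2 : ZMod q) ≠ 0 := by
    have : ((2:ℕ) : ZMod q) ≠ 0 := by
      rw [Ne, ZMod.natCast_eq_zero_iff]
      intro h
      exact hq2 ((Nat.prime_dvd_prime_iff_eq hq Nat.prime_two).mp h)
    simpa using this
  have hdq1 : d ∣ q - 1 := orderOf_dvd_of_pow_eq_one (ZMod.pow_card_sub_one_eq_one h2ne)
  have hdpos : 0 < d := by
    rcases Nat.eq_zero_or_pos d with h | h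
    · rw [h] at hdq1
      have := Nat.eq_zero_of_zero_dvd hdq1
      omega
    · exact h
  have hdn : d ∣ n := by
    apply orderOf_dvd_of_pow_eq_one
    rw [← dvd_mersenne_iff]
    exact hpc.trans (pc_dvd hn)
  have hqd : ¬ q ∣ d := by
    intro h
    have h1 : d ≤ q - 1 := Nat.le_of_dvd (by omega) hdq1
    have h2 : q ≤ d := Nat.le_of_dvd hdpos h
    omega
  set m := n / q with hm
  have hmn : m * q = n := Nat.div_mul_cancel hqn
  have hmpos : 0 < m := by
    rcases Nat.eq_zero_or_pos m with h | h
    · rw [h, zero_mul] at hmn; omega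
    · exact h
  have hmltn : m < n := by
    rw [hm]
    exact Nat.div_lt_self hn (by omega)
  have hdm : d ∣ m := by
    have hco : Nat.Coprime q d := (Nat.Prime.coprime_iff_not_dvd hq).mpr hqd
    have : d ∣ q * m := by rw [mul_comm q m, hmn]; exact hdn
    exact (Nat.Coprime.dvd_of_dvd_mul_left hco.symm) this
  have hq2m : q ∣ 2^m - 1 := by
    rw [dvd_mersenne_iff]
    exact orderOf_dvd_iff_pow_eq_one.mp hdm
  -- pc n * (2^m - 1) divides 2^n - 1
  have hdvd1 : pc n * (2^m - 1) ∣ 2^n - 1 := by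
    have hsub : insert n m.divisors ⊆ n.divisors := by
      intro e he
      rcases Finset.mem_insert.mp he with h | h
      · rw [h]; exact Nat.mem_divisors_self n hn.ne'
      · exact Nat.divisors_subset_of_dvd hn.ne' (hmn ▸ Dvd.intro q (mul_comm q m ▸ rfl)) h
    have hnm : n ∉ m.divisors := by
      intro h
      exact absurd (Nat.le_of_dvd hmpos (Nat.dvd_of_mem_divisors h)) (not_le.mpr hmltn)
    calc pc n * (2^m - 1) = ∏ e ∈ insert n m.divisors, pc e := by
          rw [Finset.prod_insert hnm, prod_pc hmpos]
      _ ∣ ∏ e ∈ n.divisors, pc e := Finset.prod_dvd_prod_of_subset _ _ _ hsub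
      _ = 2^n - 1 := prod_pc hn
  -- the geometric sum N
  set N := ∑ i ∈ Finset.range q, (2^m)^i with hN
  have hNid : (2^m - 1) * N = 2^n - 1 := by
    have h1 : (1:ℕ) ≤ 2^m := Nat.one_le_two_pow
    have hz : ((2:ℤ)^m - 1) * (N:ℤ) = 2^n - 1 := by
      have := geom_sum_mul ((2:ℤ)^m) q
      rw [← pow_mul, mul_comm m q, mul_comm q m, hmn] at this
      rw [mul_comm]
      push_cast [hN]
      exact this
    have : (((2^m - 1) * N : ℕ) : ℤ) = ((2^n - 1 : ℕ) : ℤ) := by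
      push_cast [h1, Nat.one_le_two_pow (n := n)]
      exact hz
    exact_mod_cast this
  have hpcN : pc n ∣ N := by
    have h1 : (0:ℕ) < 2^m - 1 := by
      have : (2:ℕ) ≤ 2^m := by
        calc (2:ℕ) = 2^1 := (pow_one 2).symm
          _ ≤ 2^m := Nat.pow_le_pow_right (by norm_num) hmpos
      omega
    have : pc n * (2^m - 1) ∣ N * (2^m - 1) := by
      rw [mul_comm N _, hNid]
      exact hdvd1
    exact (Nat.mul_dvd_mul_iff_right h1).mp this
  -- N ≡ q mod q^2
  have hNq : ¬ q^2 ∣ N := by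
    haveI : NeZero (q^2) := ⟨pow_ne_zero 2 hq.ne_zero⟩
    obtain ⟨t, ht⟩ := hq2m
    have h2m : (2:ℕ)^m = 1 + q * t := by
      have : (1:ℕ) ≤ 2^m := Nat.one_le_two_pow
      omega
    set R := ZMod (q^2)
    set c : R := (q : R) * (t : R) with hc
    have hcc : c * c = 0 := by
      rw [hc]
      have : ((q^2 : ℕ) : R) = 0 := ZMod.natCast_self (q^2)
      push_cast at this
      calc (q:R) * t * ((q:R) * t) = ((q:R) * (q:R)) * (t * t) := by ring
        _ = 0 := by rw [show (q:R) * (q:R) = (q:R)^2 by ring, this, zero_mul]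
    have hcast2m : ((2:R))^m = 1 + c := by
      have h' : (((2^m : ℕ)) : R) = 1 + c := by
        rw [h2m, hc, Nat.cast_add, Nat.cast_one, Nat.cast_mul]
      push_cast at h'
      exact h'
    -- Gauss sum: ∑ i ∈ range q, i = q * u with q - 1 = 2 * u
    obtain ⟨u, hu⟩ : ∃ u, q - 1 = 2 * u := ⟨(q-1)/2, by omega⟩
    have hgauss : ∑ i ∈ Finset.range q, i = q * u := by
      have h2g := Finset.sum_range_id_mul_two q
      have h3g : q * (q - 1) = (q * u) * 2 := by rw [hu]; ring
      rw [h3g] at h2g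
      exact Nat.eq_of_mul_eq_mul_right (by norm_num) h2g
    -- compute N mod q^2
    have hNR : (N : R) = (q : R) := by
      rw [hN]
      rw [Nat.cast_sum]; push_cast
      have hterm : ∀ i ∈ Finset.range q, ((2:R)^m)^i = 1 + (i:R) * c := by
        intro i _
        rw [hcast2m, one_add_pow c hcc i]
      rw [Finset.sum_congr rfl hterm, Finset.sum_add_distrib]
      have h1 : ∑ _i ∈ Finset.range q, (1:R) = (q:R) := by
        rw [Finset.sum_const, Finset.card_range]
        simp
      have h2 : ∑ i ∈ Finset.range q, (i:R) * c = 0 := by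
        rw [← Finset.sum_mul]
        have : (∑ i ∈ Finset.range q, (i:R)) = ((∑ i ∈ Finset.range q, i : ℕ) : R) := by
          rw [Nat.cast_sum]
        rw [this, hgauss, hc]
        rw [Nat.cast_mul]
        have hq20 : ((q:R) * (q:R)) = 0 := by
          have h0 : ((q^2 : ℕ) : R) = 0 := ZMod.natCast_self (q^2)
          push_cast at h0
          calc (q:R) * (q:R) = (q:R)^2 := by ring
            _ = 0 := h0
        calc (q:R) * (u:R) * ((q:R) * (t:R)) = ((q:R) * (q:R)) * ((u:R) * (t:R)) := by ring
          _ = 0 := by rw [hq20, zero_mul]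
      rw [h1, h2, add_zero]
    intro hdvdN
    have : (N : R) = 0 := by
      rw [show R = ZMod (q^2) from rfl] at *
      exact (ZMod.natCast_eq_zero_iff N (q^2)).mpr hdvdN
    rw [hNR] at this
    have hqq : q^2 ∣ q := (ZMod.natCast_eq_zero_iff q (q^2)).mp this
    have : q^2 ≤ q := Nat.le_of_dvd (by omega) hqq
    have : q < q^2 := by nlinarith
    omega
  intro h
  exact hNq (h.trans hpcN)

lemma odd_le_sq_totient : ∀ m : ℕ, Odd m → m ≤ m.totient ^ 2 := by
  intro m
  induction m using Nat.strong_induction_on with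
  | _ m ih =>
    intro hodd
    rcases eq_or_ne m 1 with rfl | hm1
    · simp
    have hm0 : m ≠ 0 := by rintro rfl; simp at hodd
    set p := m.minFac with hp
    have hpp : p.Prime := Nat.minFac_prime hm1
    have hpdvd : p ∣ m := Nat.minFac_dvd m
    have hp2 : p ≠ 2 := by
      intro h
      rw [Nat.odd_iff] at hodd
      obtain ⟨c, hc⟩ := h ▸ hpdvd
      omega
    have hp3 : 3 ≤ p := by
      have := hpp.two_le
      omega
    set k := m.factorization p with hk
    have hk1 : 1 ≤ k := hpp.factorization_pos_of_dvd hm0 hpdvd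
    set m' := m / p ^ k with hm'
    have hsplit : p ^ k * m' = m := Nat.ordProj_mul_ordCompl_eq_self m p
    have hco : Nat.Coprime (p ^ k) m' := (Nat.coprime_ordCompl hpp hm0).pow_left k
    have hm'dvd : m' ∣ m := Nat.ordCompl_dvd m p
    have hm'odd : Odd m' := by
      rcases hm'dvd with ⟨c, hc⟩
      exact (Nat.odd_mul.mp (hc ▸ hodd)).1
    have hm'pos : 0 < m' := Nat.ordCompl_pos p hm0
    have hm'lt : m' < m := by
      have hpk : 1 < p ^ k := Nat.one_lt_pow (by omega) (by omega)
      calc m' = 1 * m' := (one_mul m').symm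
        _ < p ^ k * m' := (Nat.mul_lt_mul_right hm'pos).mpr hpk
        _ = m := hsplit
    have ih' := ih m' hm'lt hm'odd
    have htot : m.totient = (p ^ k).totient * m'.totient := by
      rw [← hsplit]; exact Nat.totient_mul hco
    have htotpk : (p ^ k).totient = p ^ (k - 1) * (p - 1) := Nat.totient_prime_pow hpp hk1
    have hbound : p ^ k ≤ ((p ^ k).totient) ^ 2 := by
      rw [htotpk, mul_pow]
      have h1 : p ≤ (p - 1)^2 := by
        have hx : 2 ≤ p - 1 := by omega
        have hp' : p = (p - 1) + 1 := by omega
        nlinarith [hx, hp']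
      have h2 : p ^ (k - 1) ≤ (p ^ (k-1))^2 := Nat.le_self_pow (by norm_num) _
      calc p ^ k = p ^ (k - 1) * p := by
            rw [← pow_succ]; congr 1; omega
        _ ≤ (p ^ (k-1))^2 * (p-1)^2 := Nat.mul_le_mul h2 h1
    calc m = p ^ k * m' := hsplit.symm
      _ ≤ ((p ^ k).totient) ^ 2 * (m'.totient)^2 := Nat.mul_le_mul hbound ih'
      _ = m.totient ^ 2 := by rw [htot, mul_pow]

lemma le_two_mul_sq_totient (n : ℕ) (hn : 0 < n) : n ≤ 2 * n.totient ^ 2 := by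
  set a := n.factorization 2 with ha
  set m := n / 2 ^ a with hm
  have hsplit : 2 ^ a * m = n := Nat.ordProj_mul_ordCompl_eq_self n 2
  have hmodd : Odd m := by
    have h2 : ¬ 2 ∣ m := by
      rw [hm, ha]
      exact Nat.not_dvd_ordCompl Nat.prime_two hn.ne'
    rw [Nat.odd_iff]
    omega
  have hmbound := odd_le_sq_totient m hmodd
  rcases Nat.eq_zero_or_pos a with h0 | h1
  · have : n = m := by rw [← hsplit, h0]; ring
    rw [this]
    omega
  · have hco : Nat.Coprime (2 ^ a) m := (Nat.coprime_ordCompl Nat.prime_two hn.ne').pow_left a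
    have htot : n.totient = (2 ^ a).totient * m.totient := by
      rw [← hsplit]; exact Nat.totient_mul hco
    have htot2 : (2 ^ a).totient = 2 ^ (a - 1) := by
      rw [Nat.totient_prime_pow Nat.prime_two h1]
      norm_num
    have key : 2 ^ a ≤ 2 * (2 ^ (a-1))^2 := by
      have : 2 * (2 ^ (a-1))^2 = 2 ^ (2*a - 1) := by
        rw [← pow_mul]
        rw [← pow_succ']
        congr 1
        omega
      rw [this]
      exact Nat.pow_le_pow_right (by norm_num) (by omega)
    calc n = 2 ^ a * m := hsplit.symm
      _ ≤ (2 * (2 ^ (a-1))^2) * (m.totient ^ 2) := Nat.mul_le_mul key hmbound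
      _ = 2 * ((2 ^ (a-1)) * m.totient)^2 := by ring
      _ = 2 * n.totient ^ 2 := by rw [htot, htot2]

lemma eight_sq_lt : ∀ t : ℕ, 10 ≤ t → 8 * t ^ 2 < 2 ^ t := by
  intro t ht
  induction t, ht using Nat.le_induction with
  | base => norm_num
  | succ t ht ih =>
    have h1 : 8 * (t+1)^2 ≤ 8 * (2 * t^2) := by nlinarith
    calc 8 * (t+1)^2 ≤ 2 * (8 * t^2) := by omega
      _ < 2 * 2^t := by omega
      _ = 2 ^ (t+1) := by rw [pow_succ]; ring

lemma totient_large (n : ℕ) (hn : 0 < n)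
    (hE : n ∉ ({1,2,3,4,5,6,8,10,12,18} : Finset ℕ)) : 4 * n < 2 ^ n.totient := by
  rcases le_or_gt n 162 with hsmall | hlarge
  · have hdec : ∀ m : ℕ, m < 163 → (m ∉ ({1,2,3,4,5,6,8,10,12,18} : Finset ℕ)) → 0 < m →
        4 * m < 2 ^ m.totient := by set_option maxRecDepth 10000 in decide
    exact hdec n (by omega) hE hn
  · have h2 := le_two_mul_sq_totient n hn
    have hphi : 10 ≤ n.totient := by
      by_contra h
      push_neg at h
      have : n.totient ^ 2 ≤ 81 := by nlinarith
      omega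
    calc 4 * n ≤ 8 * n.totient ^ 2 := by omega
      _ < 2 ^ n.totient := eight_sq_lt _ hphi

abbrev IsPrim (n q : ℕ) : Prop := q.Prime ∧ q ∣ 2^n - 1 ∧ ∀ m < n, 0 < m → ¬ q ∣ 2^m - 1

theorem bang (n : ℕ) (hn : 0 < n) (h1 : n ≠ 1) (h6 : n ≠ 6) : ∃ q, IsPrim n q := by
  by_cases hsmall : n ∈ ({2,3,4,5,8,10,12,18} : Finset ℕ)
  · fin_cases hsmall
    · exact ⟨3, by refine ⟨by norm_num, by decide, ?_⟩; decide⟩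
    · exact ⟨7, by refine ⟨by norm_num, by decide, ?_⟩; decide⟩
    · exact ⟨5, by refine ⟨by norm_num, by decide, ?_⟩; decide⟩
    · exact ⟨31, by refine ⟨by norm_num, by decide, ?_⟩; decide⟩
    · exact ⟨17, by refine ⟨by norm_num, by decide, ?_⟩; decide⟩
    · exact ⟨11, by refine ⟨by norm_num, by decide, ?_⟩; decide⟩
    · exact ⟨13, by refine ⟨by norm_num, by decide, ?_⟩; decide⟩
    · exact ⟨19, by refine ⟨by norm_num, by decide, ?_⟩; decide⟩
  · by_contra hno
    push_neg at hno
    have hkey : ∀ q, q.Prime → q ∣ pc n → q ∣ n ∧ ¬ q^2 ∣ pc n := by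
      intro q hq hdvd
      have hqn : q ∣ n := by
        by_contra hqn
        obtain ⟨hd1, hd2⟩ := primitive_of_not_dvd hq hn hdvd hqn
        exact (hno q) ⟨hq, hd1, fun m hm hm0 => hd2 m hm0 hm⟩
      exact ⟨hqn, sq_not_dvd_pc hq hn hqn hdvd⟩
    have hsqf : Squarefree (pc n) := by
      rw [Nat.squarefree_iff_prime_squarefree]
      intro p hp hdvd
      exact (hkey p hp ((dvd_mul_right p p).trans hdvd)).2 (by rwa [pow_two])
    have hdvdn : pc n ∣ n := by
      have hsub : (pc n).primeFactors ⊆ n.primeFactors := by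
        intro p hp
        rw [Nat.mem_primeFactors] at *
        obtain ⟨hpp, hpdvd, _⟩ := hp
        exact ⟨hpp, (hkey p hpp hpdvd).1, hn.ne'⟩
      calc pc n = ∏ p ∈ (pc n).primeFactors, p :=
            (Nat.prod_primeFactors_of_squarefree hsqf).symm
        _ ∣ ∏ p ∈ n.primeFactors, p := Finset.prod_dvd_prod_of_subset _ _ _ hsub
        _ ∣ n := Nat.prod_primeFactors_dvd n
    have hle : pc n ≤ n := Nat.le_of_dvd hn hdvdn
    have hlow := pow_totient_le_four_pc hn
    have hE : n ∉ ({1,2,3,4,5,6,8,10,12,18} : Finset ℕ) := by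
      simp only [Finset.mem_insert, Finset.mem_singleton] at hsmall ⊢
      omega
    have hlarge := totient_large n hn hE
    omega

end BangAux

/-- `4 τ(2^k - 1) ≥ 2^{τ(k)}` for every positive integer `k`. -/
theorem four_mul_tau_mersenne_ge (k : ℕ) (hk : 1 ≤ k) :
    2 ^ tau k ≤ 4 * tau (2 ^ k - 1) := by
  classical
  set N := 2 ^ k - 1 with hN
  have h2k : 2 ≤ 2 ^ k := by
    calc (2:ℕ) = 2^1 := (pow_one 2).symm
      _ ≤ 2^k := Nat.pow_le_pow_right (by norm_num) hk
  have hN0 : N ≠ 0 := by omega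
  set D := (k.divisors.erase 1).erase 6 with hD
  have hDmem : ∀ d ∈ D, 0 < d ∧ d ≠ 1 ∧ d ≠ 6 ∧ d ∣ k := by
    intro d hd
    have h6 := Finset.ne_of_mem_erase hd
    have hd1 := Finset.mem_of_mem_erase hd
    have h1 := Finset.ne_of_mem_erase hd1
    have hdk := Finset.mem_of_mem_erase hd1
    exact ⟨Nat.pos_of_mem_divisors hdk, h1, h6, Nat.dvd_of_mem_divisors hdk⟩
  -- choose primitive primes
  let f : ℕ → ℕ := fun d =>
    if h : 0 < d ∧ d ≠ 1 ∧ d ≠ 6 then (BangAux.bang d h.1 h.2.1 h.2.2).choose else 0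
  have hf : ∀ d ∈ D, BangAux.IsPrim d (f d) := by
    intro d hd
    obtain ⟨h0, h1, h6, _⟩ := hDmem d hd
    simp only [f, dif_pos (⟨h0, h1, h6⟩ : 0 < d ∧ d ≠ 1 ∧ d ≠ 6)]
    exact (BangAux.bang d h0 h1 h6).choose_spec
  have hmaps : ∀ d ∈ D, f d ∈ N.primeFactors := by
    intro d hd
    obtain ⟨h0, _, _, hdk⟩ := hDmem d hd
    obtain ⟨hp, hdvd, _⟩ := hf d hd
    rw [Nat.mem_primeFactors]
    refine ⟨hp, hdvd.trans ?_, hN0⟩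
    obtain ⟨t, rfl⟩ := hdk
    have := Nat.sub_dvd_pow_sub_pow (2^d) 1 t
    simpa [← pow_mul] using this
  have hinj : Set.InjOn f (D : Set ℕ) := by
    intro d1 hd1 d2 hd2 heq
    by_contra hne
    rcases lt_or_gt_of_ne hne with hlt | hlt
    · exact ((hf d2 hd2).2.2 d1 hlt (hDmem d1 hd1).1) (heq ▸ (hf d1 hd1).2.1)
    · exact ((hf d1 hd1).2.2 d2 hlt (hDmem d2 hd2).1) (heq ▸ (hf d2 hd2).2.1)
  have hcard : D.card ≤ N.primeFactors.card := Finset.card_le_card_of_injOn f hmaps hinj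
  have hDcard : tau k - 2 ≤ D.card := by
    have h1 := Finset.pred_card_le_card_erase (s := k.divisors) (a := 1)
    have h2 := Finset.pred_card_le_card_erase (s := k.divisors.erase 1) (a := 6)
    simp only [tau, hD]
    omega
  -- tau N ≥ 2 ^ ω(N)
  have htau : 2 ^ N.primeFactors.card ≤ tau N := by
    have hcd : tau N = ∏ p ∈ N.primeFactors, (N.factorization p + 1) := by
      rw [tau, Nat.card_divisors hN0]
    rw [hcd]
    calc 2 ^ N.primeFactors.card = ∏ _p ∈ N.primeFactors, 2 := by
          rw [Finset.prod_const]
      _ ≤ ∏ p ∈ N.primeFactors, (N.factorization p + 1) := by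
          refine Finset.prod_le_prod' fun p hp => ?_
          have : N.factorization p ≠ 0 := by
            rw [← Finsupp.mem_support_iff, Nat.support_factorization]
            exact hp
          omega
  have htauN1 : 1 ≤ tau N := by
    have : N ∈ N.divisors := Nat.mem_divisors_self N hN0
    have := Finset.card_pos.mpr ⟨N, this⟩
    exact this
  rcases le_or_gt (tau k) 2 with hle | hlt
  · calc 2 ^ tau k ≤ 2 ^ 2 := Nat.pow_le_pow_right (by norm_num) hle
      _ ≤ 4 * tau N := by omega
  · have hsplit : tau k = (tau k - 2) + 2 := by omega
    calc 2 ^ tau k = 2 ^ (tau k - 2) * 4 := by rw [hsplit, pow_add]; norm_num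
      _ ≤ 2 ^ N.primeFactors.card * 4 := by
          have : (2:ℕ) ^ (tau k - 2) ≤ 2 ^ N.primeFactors.card :=
            Nat.pow_le_pow_right (by norm_num) (hDcard.trans hcard)
          omega
      _ ≤ tau N * 4 := by omega
      _ = 4 * tau N := by ring
end

section
/- For every positive integer n, 4·f(n) ≥ f'(n), where f(n) := ∑_{k=1}^{n} τ(2^k − 1) and f'(n) := ∑_{k=1}^{n} 2^{τ(k)}. -/
open Polynomial

lemma one_add_pow {R : Type*} [CommRing R] (x : R) (hx : x * x = 0) (i : ℕ) :
    (1 + x) ^ i = 1 + (i : R) * x := by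
  have hsq : x ^ 2 = 0 := by rw [pow_two]; exact hx
  induction i with
  | zero => simp
  | succ n ih =>
    rw [pow_succ, ih]
    push_cast
    ring_nf
    rw [hsq]
    ring

lemma geom_sum_mod_sq {p : ℕ} (hp : p.Prime) (hodd : p ≠ 2) {y : ℕ} (hy : 1 ≤ y)
    (hpy : p ∣ y - 1) : ¬ (p ^ 2 ∣ ∑ i ∈ Finset.range p, y ^ i) := by
  intro hdvd
  haveI : NeZero (p ^ 2) := ⟨pow_ne_zero _ hp.ne_zero⟩
  have h0 : ((∑ i ∈ Finset.range p, y ^ i : ℕ) : ZMod (p^2)) = 0 :=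
    (ZMod.natCast_eq_zero_iff _ _).mpr hdvd
  obtain ⟨s, hs⟩ := hpy
  set R := ZMod (p^2)
  set x : R := (p : R) * (s : R) with hxdef
  have hyR : (y : R) = 1 + x := by
    have : y = 1 + p * s := by omega
    rw [this, hxdef]; push_cast; rw [Nat.cast_mul]
  have hx2 : x * x = 0 := by
    have hz : ((p^2 : ℕ) : R) = 0 := ZMod.natCast_self _
    calc x * x = ((p^2 : ℕ) : R) * ((s : R) * (s : R)) := by rw [hxdef]; push_cast; ring
    _ = 0 := by rw [hz, zero_mul]
  have hsum : ((∑ i ∈ Finset.range p, y ^ i : ℕ) : R)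
      = (p : R) + ((∑ i ∈ Finset.range p, i : ℕ) : R) * x := by
    rw [Nat.cast_sum, Nat.cast_sum]
    push_cast
    calc ∑ i ∈ Finset.range p, (y : R) ^ i
        = ∑ i ∈ Finset.range p, (1 + (i : R) * x) := by
          refine Finset.sum_congr rfl fun i _ => ?_
          rw [hyR, one_add_pow x hx2 i]
      _ = (p : R) + (∑ i ∈ Finset.range p, (i : R)) * x := by
          rw [Finset.sum_add_distrib, Finset.sum_const, Finset.card_range, Finset.sum_mul]
          simp
  have hpS : p ∣ (∑ i ∈ Finset.range p, i) := by
    have h2 : (∑ i ∈ Finset.range p, i) * 2 = p * (p - 1) := Finset.sum_range_id_mul_two p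
    have hd2 : p ∣ (∑ i ∈ Finset.range p, i) * 2 := h2 ▸ Dvd.intro _ rfl
    rcases (Nat.Prime.dvd_mul hp).mp hd2 with h | h
    · exact h
    · exfalso
      have := Nat.le_of_dvd (by norm_num) h
      have := hp.two_le
      omega
  have hSx : ((∑ i ∈ Finset.range p, i : ℕ) : R) * x = 0 := by
    obtain ⟨t, ht⟩ := hpS
    have hz : ((p^2 : ℕ) : R) = 0 := ZMod.natCast_self _
    calc ((∑ i ∈ Finset.range p, i : ℕ) : R) * x
        = ((p^2 : ℕ) : R) * ((t : R) * (s : R)) := by rw [ht, hxdef]; push_cast; simp only [R, Nat.cast_mul]; ring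
      _ = 0 := by rw [hz, zero_mul]
  rw [hsum, hSx, add_zero] at h0
  have hdvd2 : p ^ 2 ∣ p := (ZMod.natCast_eq_zero_iff p (p^2)).mp h0
  have := Nat.le_of_dvd hp.pos hdvd2
  nlinarith [hp.two_le]

-- cast of integer eval to ZMod p
lemma eval_cyclotomic_zmod {d p : ℕ} :
    eval (2 : ZMod p) (cyclotomic d (ZMod p)) = (((cyclotomic d ℤ).eval 2 : ℤ) : ZMod p) := by
  rw [← map_cyclotomic d (Int.castRingHom (ZMod p)), eval_map]
  have : (2 : ZMod p) = (Int.castRingHom (ZMod p)) 2 := by simp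
  rw [this, eval₂_at_apply]
  rfl

-- F3 : p prime divides Φ_d(2), p ∤ d then orderOf 2 = d
lemma order_of_prime_dvd_cyclotomic {d p : ℕ} [hp : Fact p.Prime] (hd : 0 < d)
    (hdvd : (p : ℤ) ∣ (cyclotomic d ℤ).eval 2) (hpd : ¬ p ∣ d) :
    orderOf (2 : ZMod p) = d := by
  haveI : NeZero (d : ZMod p) := ⟨by
    rw [Ne, ZMod.natCast_eq_zero_iff]
    exact hpd⟩
  have hroot : (cyclotomic d (ZMod p)).IsRoot 2 := by
    rw [IsRoot.def, eval_cyclotomic_zmod]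
    exact (ZMod.intCast_zmod_eq_zero_iff_dvd _ p).mpr hdvd
  rw [isRoot_cyclotomic_iff] at hroot
  exact hroot.eq_orderOf.symm

-- F4 : p prime divides Φ_d(2), p ∣ d, d = p^j * m with p ∤ m, then orderOf 2 = m
lemma order_of_prime_dvd_cyclotomic' {m j p : ℕ} [hp : Fact p.Prime]
    (hdvd : (p : ℤ) ∣ (cyclotomic (p ^ j * m) ℤ).eval 2) (hpm : ¬ p ∣ m) (hm : 0 < m) :
    orderOf (2 : ZMod p) = m := by
  haveI : NeZero (m : ZMod p) := ⟨by
    rw [Ne, ZMod.natCast_eq_zero_iff]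
    exact hpm⟩
  have hroot : (cyclotomic (p ^ j * m) (ZMod p)).IsRoot 2 := by
    rw [IsRoot.def, eval_cyclotomic_zmod]
    exact (ZMod.intCast_zmod_eq_zero_iff_dvd _ p).mpr hdvd
  rw [isRoot_cyclotomic_prime_pow_mul_iff_of_charP] at hroot
  exact hroot.eq_orderOf.symm

lemma eval_cyclotomic_mul_pow {p n : ℕ} (hp : p.Prime) (hdvd : p ∣ n) (i : ℕ) (x : ℤ) :
    eval x (cyclotomic (n * p ^ i) ℤ) = eval (x ^ p ^ i) (cyclotomic n ℤ) := by
  induction i generalizing x with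
  | zero => simp
  | succ k ih =>
    have h1 : n * p ^ (k + 1) = (n * p ^ k) * p := by ring
    have h2 : p ∣ n * p ^ k := dvd_mul_of_dvd_left hdvd _
    rw [h1, ← cyclotomic_expand_eq_cyclotomic hp h2 ℤ, expand_eval, ih]
    congr 1
    rw [← pow_mul, pow_succ]
    ring_nf

lemma cyclotomic_eval_two_dvd {n : ℕ} : (cyclotomic n ℤ).eval 2 ∣ 2 ^ n - 1 := by
  have h := cyclotomic.dvd_X_pow_sub_one n ℤ
  have := Polynomial.eval_dvd (x := (2:ℤ)) h
  simpa using this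

-- Φ_d(2) divides the geometric sum (2^d-1)/(2^(d/p)-1)
lemma cyclotomic_eval_dvd_geom {d p : ℕ} (hp : p.Prime) (hpd : p ∣ d) (hd : 0 < d) :
    (cyclotomic d ℤ).eval 2 ∣ ∑ i ∈ Finset.range p, ((2:ℤ) ^ (d / p)) ^ i := by
  have hdp : d / p ∈ d.properDivisors := by
    rw [Nat.mem_properDivisors]
    constructor
    · exact Nat.div_dvd_of_dvd hpd
    · exact Nat.div_lt_self hd hp.one_lt
  have h := X_pow_sub_one_mul_cyclotomic_dvd_X_pow_sub_one_of_dvd ℤ hdp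
  have h2 := Polynomial.eval_dvd (x := (2:ℤ)) h
  simp only [eval_mul, eval_sub, eval_pow, eval_X, eval_one] at h2
  have hgeom : (∑ i ∈ Finset.range p, ((2:ℤ) ^ (d / p)) ^ i) * ((2:ℤ) ^ (d/p) - 1)
      = (2:ℤ) ^ d - 1 := by
    rw [geom_sum_mul, ← pow_mul, Nat.div_mul_cancel hpd]
  rw [← hgeom] at h2
  have hne : ((2:ℤ) ^ (d/p) - 1) ≠ 0 ∨ True := Or.inr trivial
  have hpos : 0 < d / p := Nat.div_pos (Nat.le_of_dvd hd hpd) hp.pos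
  have hne2 : ((2:ℤ) ^ (d/p) - 1) ≠ 0 := by
    have : (1:ℤ) < 2 ^ (d/p) := by
      calc (1:ℤ) < 2 := one_lt_two
      _ ≤ 2 ^ (d/p) := le_self_pow₀ one_le_two hpos.ne'
    linarith
  -- h2 : (2^(d/p) - 1) * Φ_d(2) ∣ (∑ ...) * (2^(d/p) - 1)
  rcases h2 with ⟨t, ht⟩
  refine ⟨t, mul_left_cancel₀ hne2 ?_⟩
  linear_combination ht

-- structure of a prime dividing both Φ_d(2) and d
lemma bad_prime_struct {d p : ℕ} (h2 : 2 ≤ d) (hp : p.Prime)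
    (hpc : (p:ℤ) ∣ (cyclotomic d ℤ).eval 2) (hpd : p ∣ d) :
    3 ≤ p ∧ 2 ≤ ordCompl[p] d ∧ ordCompl[p] d ∣ p - 1 ∧
      orderOf (2 : ZMod p) = ordCompl[p] d := by
  haveI : Fact p.Prime := ⟨hp⟩
  have hd0 : d ≠ 0 := by omega
  set m := ordCompl[p] d with hmdef
  have hfact : p ^ d.factorization p * m = d := Nat.ordProj_mul_ordCompl_eq_self d p
  have hpm : ¬ p ∣ m := Nat.not_dvd_ordCompl hp hd0
  have hm : 0 < m := Nat.ordCompl_pos p hd0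
  have horder : orderOf (2 : ZMod p) = m := by
    refine order_of_prime_dvd_cyclotomic' (j := d.factorization p) ?_ hpm hm
    rwa [hfact]
  -- p is odd: p divides 2^d - 1 which is odd
  have hcd : (p:ℤ) ∣ 2 ^ d - 1 := by
    refine hpc.trans ?_
    have h := cyclotomic.dvd_X_pow_sub_one d ℤ
    have := Polynomial.eval_dvd (x := (2:ℤ)) h
    simpa using this
  have hpodd : 3 ≤ p := by
    rcases hp.two_le.lt_or_eq with h | h
    · omega
    · exfalso
      rw [← h] at hcd
      have h4 : (2:ℤ) ∣ 2 ^ d := dvd_pow_self 2 hd0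
      rcases hcd with ⟨t, ht⟩
      rcases h4 with ⟨u, hu⟩
      omega
  have h2ne : (2 : ZMod p) ≠ 0 := by
    have : ((2:ℕ) : ZMod p) ≠ 0 := by
      rw [Ne, ZMod.natCast_eq_zero_iff]
      intro hdd
      have := Nat.le_of_dvd (by norm_num) hdd
      omega
    simpa using this
  have hFermat : m ∣ p - 1 := by
    rw [← horder]
    exact orderOf_dvd_of_pow_eq_one (ZMod.pow_card_sub_one_eq_one h2ne)
  have hm1 : m ≠ 1 := by
    intro h1
    rw [h1] at horder
    have h21 : (2 : ZMod p) = 1 := orderOf_eq_one_iff.mp horder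
    have : ((1:ℕ) : ZMod p) = 0 := by
      push_cast
      linear_combination h21
    rw [ZMod.natCast_eq_zero_iff] at this
    have := Nat.le_of_dvd one_pos this
    omega
  exact ⟨hpodd, by omega, hFermat, horder⟩

lemma nat_le_two_pow_pred : ∀ p : ℕ, p ≤ 2 ^ (p - 1) := by
  intro p
  induction p with
  | zero => simp
  | succ n ih =>
    rcases Nat.eq_zero_or_pos n with rfl | hn
    · simp
    · have h1 : n + 1 - 1 = (n - 1) + 1 := by omega
      rw [h1, pow_succ]
      have := Nat.one_le_two_pow (n := n - 1)
      omega

lemma nat_add_two_le_two_pow {p : ℕ} (hp : 2 ≤ p) : p + 2 ≤ 2 ^ p := by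
  induction p with
  | zero => omega
  | succ n ih =>
    rcases Nat.lt_or_ge n 2 with h | h
    · interval_cases n <;> simp_all <;> omega
    · have := ih h
      rw [pow_succ]
      omega

lemma nat_three_mul_le_two_pow {p : ℕ} (hp : 5 ≤ p) : 3 * p + 1 ≤ 2 ^ p := by
  induction p with
  | zero => omega
  | succ n ih =>
    rcases Nat.lt_or_ge n 5 with h | h
    · interval_cases n <;> simp_all <;> omega
    · have := ih h
      rw [pow_succ]
      omega

lemma size_contra {d p : ℕ} (h2 : 2 ≤ d) (h6 : d ≠ 6) (hp : p.Prime) (hp3 : 3 ≤ p)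
    (hpd : p ∣ d) (heval : (cyclotomic d ℤ).eval 2 = (p : ℤ))
    (he2 : 2 ≤ ordCompl[p] d) (hef : ordCompl[p] d ∣ p - 1) : False := by
  set e := ordCompl[p] d with hedef
  set j := d.factorization p with hjdef
  have hd0 : d ≠ 0 := by omega
  have hfact : p ^ j * e = d := Nat.ordProj_mul_ordCompl_eq_self d p
  have hpe : ¬ p ∣ e := Nat.not_dvd_ordCompl hp hd0
  have hj1 : 1 ≤ j := by
    rw [hjdef]
    exact (Nat.Prime.factorization_pos_of_dvd hp hd0 hpd)
  have hele : e ≤ p - 1 := Nat.le_of_dvd (by omega) hef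
  have htpos : e.totient ≠ 0 := (Nat.totient_pos.mpr (by omega)).ne'
  rcases Nat.lt_or_ge j 2 with hj | hj
  · -- j = 1 : d = e * p
    have hj' : j = 1 := by omega
    have hd' : e * p = d := by rw [← hfact, hj', pow_one, mul_comm]
    -- expand identity
    have hexp := cyclotomic_expand_eq_cyclotomic_mul hp hpe ℤ
    have heval2 : eval ((2:ℤ) ^ p) (cyclotomic e ℤ)
        = (p : ℤ) * eval 2 (cyclotomic e ℤ) := by
      have := congrArg (eval (2:ℤ)) hexp
      rw [expand_eval, eval_mul, hd', heval] at this
      exact this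
    set B : ℤ := eval 2 (cyclotomic e ℤ) with hBdef
    have hBpos : 0 < B := cyclotomic_pos' e one_lt_two
    have hBle : B ≤ 2 ^ e - 1 := by
      refine Int.le_of_dvd ?_ ?_
      · have : (1:ℤ) < 2 ^ e := by
          calc (1:ℤ) < 2 := one_lt_two
          _ ≤ 2 ^ e := le_self_pow₀ one_le_two (by omega)
        omega
      · have h := cyclotomic.dvd_X_pow_sub_one e ℤ
        have := Polynomial.eval_dvd (x := (2:ℤ)) h
        simpa using this
    -- lower bound
    have hlow : (2 ^ p - 1) ^ e.totient < ((cyclotomic e ℤ).eval (((2:ℕ)^p : ℕ) : ℤ)).natAbs := by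
      refine sub_one_pow_totient_lt_natAbs_cyclotomic_eval (by omega) ?_
      have := Nat.one_lt_two_pow_iff (n := p)
      omega
    have hcast : (((2:ℕ)^p : ℕ) : ℤ) = (2:ℤ)^p := by push_cast; ring
    rw [hcast, heval2] at hlow
    have hnat : ((p : ℤ) * B).natAbs = p * B.natAbs := by
      rw [Int.natAbs_mul, Int.natAbs_natCast]
    rw [hnat] at hlow
    have hBn : B.natAbs ≤ 2 ^ e - 1 := by
      have h1 : (B.natAbs : ℤ) ≤ ((2 ^ e - 1 : ℕ) : ℤ) := by
        rw [Int.natAbs_of_nonneg hBpos.le, Nat.cast_sub Nat.one_le_two_pow]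
        push_cast
        exact hBle
      exact_mod_cast h1
    -- arithmetic contradiction
    have harith : p * (2 ^ e - 1) ≤ (2 ^ p - 1) ^ e.totient := by
      rcases Nat.lt_or_ge e 3 with he3 | he3
      · -- e = 2
        have he' : e = 2 := by omega
        have hpne3 : p ≠ 3 := by
          intro h3
          apply h6
          rw [← hd', he', h3]
        have hp5 : 5 ≤ p := by
          have h4 : p ≠ 4 := by intro h; rw [h] at hp; norm_num at hp
          omega
        have := nat_three_mul_le_two_pow hp5
        have h2p : 2 ^ p ≥ 3 * p + 1 := this
        rw [he']
        have ht2 : Nat.totient 2 = 1 := Nat.totient_two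
        rw [ht2, pow_one]
        omega
      · -- e ≥ 3 : totient e ≥ 2
        have ht2 : 2 ≤ e.totient := by
          rcases Nat.lt_or_ge e.totient 2 with h | h
          · exfalso
            have h1 : e.totient = 1 := by omega
            rcases Nat.totient_eq_one_iff.mp h1 with h | h <;> omega
          · exact h
        have hstep1 : p * (2 ^ e - 1) ≤ 2 ^ (p-1) * 2 ^ (p-1) := by
          have h1 : p ≤ 2 ^ (p - 1) := nat_le_two_pow_pred p
          have h2 : 2 ^ e ≤ 2 ^ (p - 1) := Nat.pow_le_pow_right (by norm_num) hele
          exact Nat.mul_le_mul h1 (by omega)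
        have hstep2 : 2 ^ (p-1) * 2 ^ (p-1) ≤ (2 ^ p - 1) * (2 ^ p - 1) := by
          have : 2 ^ (p-1) ≤ 2 ^ p - 1 := by
            have h1 : 2 ^ p = 2 * 2 ^ (p - 1) := by
              rw [← pow_succ']
              congr 1
              omega
            have := Nat.one_le_two_pow (n := p - 1)
            omega
          exact Nat.mul_le_mul this this
        have hstep3 : (2 ^ p - 1) * (2 ^ p - 1) ≤ (2 ^ p - 1) ^ e.totient := by
          rw [← pow_two]
          apply Nat.pow_le_pow_right ?_ ht2
          have : 1 < 2 ^ p := Nat.one_lt_two_pow_iff.mpr (by omega)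
          omega
        omega
    have hfinal : p * B.natAbs ≤ p * (2 ^ e - 1) := Nat.mul_le_mul_left p hBn
    omega
  · -- j ≥ 2
    have hd' : (e * p) * p ^ (j - 1) = d := by
      have hpj : p ^ j = p ^ (j - 1) * p := by
        conv_lhs => rw [show j = (j - 1) + 1 by omega]
        rw [pow_succ]
      rw [← hfact, hpj]
      ring
    have heval2 : eval (2:ℤ) (cyclotomic d ℤ)
        = eval ((2:ℤ) ^ p ^ (j - 1)) (cyclotomic (e * p) ℤ) := by
      rw [← hd']
      exact eval_cyclotomic_mul_pow hp (dvd_mul_left p e) (j - 1) 2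
    have hlow : (2 ^ p ^ (j-1) - 1) ^ (e * p).totient
        < ((cyclotomic (e * p) ℤ).eval (((2:ℕ) ^ p ^ (j-1) : ℕ) : ℤ)).natAbs := by
      refine sub_one_pow_totient_lt_natAbs_cyclotomic_eval ?_ ?_
      · have := hp.two_le; nlinarith
      · have h1 : 1 < 2 ^ p ^ (j-1) := Nat.one_lt_two_pow_iff.mpr (pow_ne_zero _ (by omega))
        omega
    have hcast : (((2:ℕ) ^ p ^ (j-1) : ℕ) : ℤ) = (2:ℤ) ^ p ^ (j-1) := by push_cast; ring
    rw [hcast, ← heval2, heval, Int.natAbs_natCast] at hlow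
    -- but the left side is big
    have hT : p ≤ p ^ (j - 1) := Nat.le_self_pow (by omega) p
    have h2p : 2 ^ p ≤ 2 ^ p ^ (j - 1) := Nat.pow_le_pow_right (by norm_num) hT
    have hbig : p + 2 ≤ 2 ^ p := nat_add_two_le_two_pow (by omega)
    have hXX : 2 ^ p ^ (j-1) - 1 ≤ (2 ^ p ^ (j-1) - 1) ^ (e * p).totient :=
      Nat.le_self_pow (Nat.totient_pos.mpr (by positivity)).ne' _
    omega

/-- Zsigmondy for base 2: each `d ≥ 2`, `d ≠ 6`, has a prime with order exactly `d`. -/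
lemma exists_prime_orderOf_eq {d : ℕ} (h2 : 2 ≤ d) (h6 : d ≠ 6) :
    ∃ p : ℕ, p.Prime ∧ orderOf (2 : ZMod p) = d := by
  set cz : ℤ := (cyclotomic d ℤ).eval 2 with hczdef
  have hczpos : 0 < cz := cyclotomic_pos' d one_lt_two
  set c : ℕ := cz.natAbs with hcdef
  have hceq : (c : ℤ) = cz := Int.natAbs_of_nonneg hczpos.le
  have hc1 : 1 < c := by
    have h := sub_one_lt_natAbs_cyclotomic_eval (n := d) (q := 2) (by omega) (by norm_num)
    have h2' : (((2:ℕ)) : ℤ) = (2 : ℤ) := by norm_num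
    rw [h2'] at h
    omega
  have hdvdz : ∀ q : ℕ, q ∣ c → (q:ℤ) ∣ (cyclotomic d ℤ).eval 2 := by
    intro q hq
    have h1 : (q:ℤ) ∣ (c:ℤ) := Int.natCast_dvd_natCast.mpr hq
    rwa [hceq, hczdef] at h1
  -- helper: any prime divisor of c not dividing d gives the result
  have key : ∀ q : ℕ, q.Prime → q ∣ c → ¬ q ∣ d → orderOf (2 : ZMod q) = d := by
    intro q hq hqc hqd
    haveI : Fact q.Prime := ⟨hq⟩
    exact order_of_prime_dvd_cyclotomic (by omega) (hdvdz q hqc) hqd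
  -- uniqueness of bad primes
  have uniq : ∀ q r : ℕ, q.Prime → r.Prime → q ∣ c → r ∣ c → q ∣ d → r ∣ d → q = r := by
    intro q r hq hr hqc hrc hqd hrd
    by_contra hne
    have hqz := hdvdz q hqc
    have hrz := hdvdz r hrc
    obtain ⟨hq3, hqm2, hqmf, -⟩ := bad_prime_struct h2 hq hqz hqd
    obtain ⟨hr3, hrm2, hrmf, -⟩ := bad_prime_struct h2 hr hrz hrd
    -- r divides ordCompl[q] d : r ∣ d, r ≠ q
    have hrm : r ∣ ordCompl[q] d := by
      have hco : r.Coprime (q ^ d.factorization q) :=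
        Nat.Coprime.pow_right _ ((Nat.coprime_primes hr hq).mpr (Ne.symm hne))
      have : r ∣ q ^ d.factorization q * ordCompl[q] d := by
        rw [Nat.ordProj_mul_ordCompl_eq_self]; exact hrd
      exact (Nat.Coprime.dvd_of_dvd_mul_left hco this)
    have hqm : q ∣ ordCompl[r] d := by
      have hco : q.Coprime (r ^ d.factorization r) :=
        Nat.Coprime.pow_right _ ((Nat.coprime_primes hq hr).mpr hne)
      have : q ∣ r ^ d.factorization r * ordCompl[r] d := by
        rw [Nat.ordProj_mul_ordCompl_eq_self]; exact hqd
      exact (Nat.Coprime.dvd_of_dvd_mul_left hco this)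
    have h1 : r ≤ q - 1 := Nat.le_of_dvd (by omega) (hrm.trans hqmf)
    have h2 : q ≤ r - 1 := Nat.le_of_dvd (by omega) (hqm.trans hrmf)
    omega
  set p := c.minFac with hpdef
  have hp : p.Prime := Nat.minFac_prime (by omega)
  have hpc : p ∣ c := Nat.minFac_dvd c
  by_cases hpd : p ∣ d
  · -- bad case
    have hpz := hdvdz p hpc
    obtain ⟨hp3, hm2, hmf, horder⟩ := bad_prime_struct h2 hp hpz hpd
    set M := ordCompl[p] c with hMdef
    by_cases hM : M = 1
    · -- c is a power of p ; show c = p, then size contradiction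
      exfalso
      have hcp : c = p ^ c.factorization p := by
        conv_lhs => rw [← Nat.ordProj_mul_ordCompl_eq_self c p]
        rw [← hMdef, hM, mul_one]
      have hp2 : ¬ (p ^ 2 ∣ c) := by
        intro hdd
        -- p ∣ 2^(d/p) - 1 since orderOf 2 = ordCompl[p] d divides d/p
        have hmdvd : ordCompl[p] d ∣ d / p := by
          have hj1 : d.factorization p ≠ 0 :=
            (Nat.Prime.factorization_pos_of_dvd hp (by omega) hpd).ne'
          rw [Nat.dvd_div_iff_mul_dvd hpd]
          have h := mul_dvd_mul (dvd_pow_self p hj1) (dvd_refl (ordCompl[p] d))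
          rwa [Nat.ordProj_mul_ordCompl_eq_self d p] at h
        have hpy : p ∣ 2 ^ (d / p) - 1 := by
          have hpow : (2 : ZMod p) ^ (d / p) = 1 := by
            rw [← horder] at hmdvd
            exact orderOf_dvd_iff_pow_eq_one.mp hmdvd
          have : ((2 ^ (d / p) - 1 : ℕ) : ZMod p) = 0 := by
            rw [Nat.cast_sub Nat.one_le_two_pow]
            push_cast
            rw [hpow]
            ring
          rwa [ZMod.natCast_eq_zero_iff] at this
        -- p^2 divides the geometric sum
        refine geom_sum_mod_sq hp (by omega) (Nat.one_le_two_pow) hpy ?_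
        have hgz : cz ∣ ∑ i ∈ Finset.range p, ((2:ℤ) ^ (d / p)) ^ i :=
          cyclotomic_eval_dvd_geom hp hpd (by omega)
        have hcast : (((∑ i ∈ Finset.range p, (2 ^ (d/p)) ^ i : ℕ)) : ℤ)
            = ∑ i ∈ Finset.range p, ((2:ℤ) ^ (d / p)) ^ i := by push_cast; ring
        have : ((p^2 : ℕ) : ℤ) ∣ ((∑ i ∈ Finset.range p, (2 ^ (d/p)) ^ i : ℕ) : ℤ) := by
          rw [hcast]
          refine dvd_trans ?_ hgz
          have h1 : ((p^2 : ℕ) : ℤ) ∣ (c:ℤ) := Int.natCast_dvd_natCast.mpr hdd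
          rwa [hceq] at h1
        exact_mod_cast this
      have hvle : c.factorization p ≤ 1 := by
        by_contra hcon
        push_neg at hcon
        exact hp2 ((pow_dvd_pow p hcon).trans (hcp ▸ dvd_refl _))
      have hv1 : 1 ≤ c.factorization p := Nat.Prime.factorization_pos_of_dvd hp (by omega) hpc
      have hcp' : c = p := by
        rw [hcp, show c.factorization p = 1 by omega, pow_one]
      refine size_contra h2 h6 hp hp3 hpd ?_ hm2 hmf
      rw [← hczdef, ← hceq, hcp']
    · -- M ≠ 1 : a second prime exists
      have hq : M.minFac.Prime := Nat.minFac_prime hM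
      have hqc : M.minFac ∣ c := (Nat.minFac_dvd M).trans (Nat.ordCompl_dvd c p)
      have hqp : M.minFac ≠ p := by
        intro h
        exact Nat.not_dvd_ordCompl hp (by omega) (h ▸ Nat.minFac_dvd M)
      by_cases hqd : M.minFac ∣ d
      · exact absurd (uniq _ _ hq hp hqc hpc hqd hpd) hqp
      · exact ⟨M.minFac, hq, key _ hq hqc hqd⟩
  · exact ⟨p, hp, key p hp hpc hpd⟩

/-- a global choice function -/
noncomputable def zp (d : ℕ) : ℕ :=
  if h : 2 ≤ d ∧ d ≠ 6 then (exists_prime_orderOf_eq h.1 h.2).choose else 0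

lemma zp_spec {d : ℕ} (h2 : 2 ≤ d) (h6 : d ≠ 6) :
    (zp d).Prime ∧ orderOf (2 : ZMod (zp d)) = d := by
  rw [zp, dif_pos ⟨h2, h6⟩]
  exact (exists_prime_orderOf_eq h2 h6).choose_spec

lemma two_pow_card_primeFactors_le_tau {N : ℕ} (h : N ≠ 0) :
    2 ^ N.primeFactors.card ≤ tau N := by
  rw [tau, Nat.card_divisors h]
  calc 2 ^ N.primeFactors.card = ∏ _x ∈ N.primeFactors, 2 := by
        rw [Finset.prod_const]
    _ ≤ ∏ x ∈ N.primeFactors, (N.factorization x + 1) := by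
        apply Finset.prod_le_prod'
        intro i hi
        rw [Nat.mem_primeFactors] at hi
        have := Nat.Prime.factorization_pos_of_dvd hi.1 h hi.2.1
        omega

lemma term_ineq {k : ℕ} (hk : 1 ≤ k) : 2 ^ tau k ≤ 4 * tau (2 ^ k - 1) := by
  have hN : (2:ℕ) ^ k - 1 ≠ 0 := by
    have : (2:ℕ) ^ 1 ≤ 2 ^ k := Nat.pow_le_pow_right (by norm_num) hk
    omega
  set D := (k.divisors.erase 1).erase 6 with hD
  -- each d in D: 2 ≤ d, d ≠ 6, d ∣ k
  have hDmem : ∀ d ∈ D, 2 ≤ d ∧ d ≠ 6 ∧ d ∣ k := by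
    intro d hd
    rw [hD] at hd
    have h6 := Finset.ne_of_mem_erase hd
    have hd' := Finset.mem_of_mem_erase hd
    have h1 := Finset.ne_of_mem_erase hd'
    have hd'' := Finset.mem_of_mem_erase hd'
    rw [Nat.mem_divisors] at hd''
    have hpos : 0 < d := Nat.pos_of_dvd_of_pos hd''.1 (by omega)
    exact ⟨by omega, h6, hd''.1⟩
  -- injection into primeFactors of 2^k - 1
  have hcard : D.card ≤ (2 ^ k - 1).primeFactors.card := by
    apply Finset.card_le_card_of_injOn (fun d => zp d)
    · intro d hd
      obtain ⟨h2, h6, hdvd⟩ := hDmem d hd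
      obtain ⟨hp, hord⟩ := zp_spec h2 h6
      rw [Finset.mem_coe, Nat.mem_primeFactors]
      refine ⟨hp, ?_, hN⟩
      -- zp d ∣ 2^k - 1
      have hpow : (2 : ZMod (zp d)) ^ k = 1 := by
        rw [← orderOf_dvd_iff_pow_eq_one, hord]
        exact hdvd
      have : ((2 ^ k - 1 : ℕ) : ZMod (zp d)) = 0 := by
        rw [Nat.cast_sub Nat.one_le_two_pow]
        push_cast
        rw [hpow]
        ring
      rwa [ZMod.natCast_eq_zero_iff] at this
    · intro d1 h1 d2 h2 heq
      obtain ⟨h21, h61, _⟩ := hDmem d1 h1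
      obtain ⟨h22, h62, _⟩ := hDmem d2 h2
      have e1 := (zp_spec h21 h61).2
      have e2 := (zp_spec h22 h62).2
      rw [← e1, ← e2]
      simp only at heq
      rw [heq]
  have hDcard : tau k ≤ D.card + 2 := by
    rw [tau, hD]
    have key : ∀ (s : Finset ℕ) (a : ℕ), s.card ≤ (s.erase a).card + 1 := by
      intro s a
      by_cases hmem : a ∈ s
      · have := Finset.card_erase_of_mem hmem
        have := Finset.card_pos.mpr ⟨a, hmem⟩
        omega
      · rw [Finset.erase_eq_of_notMem hmem]
        omega
    have h1 := key k.divisors 1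
    have h2 := key (k.divisors.erase 1) 6
    omega
  calc 2 ^ tau k ≤ 2 ^ (D.card + 2) := Nat.pow_le_pow_right (by norm_num) hDcard
    _ = 4 * 2 ^ D.card := by ring
    _ ≤ 4 * 2 ^ (2 ^ k - 1).primeFactors.card := by
        have := Nat.pow_le_pow_right (show 1 ≤ 2 by norm_num) hcard
        omega
    _ ≤ 4 * tau (2 ^ k - 1) := by
        have := two_pow_card_primeFactors_le_tau hN
        omega

/-- `4 f(n) ≥ f'(n)` for every positive integer `n`. -/
theorem four_mul_f_ge_fprime (n : ℕ) (hn : 1 ≤ n) : f' n ≤ 4 * f n := by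
  rw [f', f, Finset.mul_sum]
  apply Finset.sum_le_sum
  intro k hk
  rw [Finset.mem_Icc] at hk
  exact term_ineq hk.1
end

section
/- For every positive integer n there exists an index N of a highly composite Mersenne number with n/2 < N ≤ n. (In particular, the largest such index not exceeding n is greater than n/2.) -/
lemma tau_lt_tau {a b : ℕ} (ha : 0 < a) (hab : a ∣ b) (h : a < b) : tau a < tau b := by
  apply Finset.card_lt_card
  have hsub : a.divisors ⊆ b.divisors := Nat.divisors_subset_of_dvd (by omega) hab
  rw [Finset.ssubset_iff_of_subset hsub]
  refine ⟨b, Nat.mem_divisors_self b (by omega), ?_⟩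
  intro hb
  have := Nat.le_of_dvd ha (Nat.mem_divisors.mp hb).1
  omega

/-- For every positive integer `n` there is an index `N` of a highly composite
Mersenne number with `n/2 < N ≤ n`. -/
theorem exists_hcmIndex_half (n : ℕ) (hn : 1 ≤ n) :
    ∃ N : ℕ, IsHCMIndex N ∧ n < 2 * N ∧ N ≤ n := by
  classical
  have hne : (Finset.Icc 1 n).Nonempty := ⟨1, by simp [hn]⟩
  obtain ⟨N0, hN0mem, hN0max⟩ :=
    Finset.exists_max_image (Finset.Icc 1 n) (fun m => tau (2 ^ m - 1)) hne
  have hP : ∃ N, N ∈ Finset.Icc 1 n ∧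
      ∀ m ∈ Finset.Icc 1 n, tau (2 ^ m - 1) ≤ tau (2 ^ N - 1) := ⟨N0, hN0mem, hN0max⟩
  obtain ⟨hNmem, hNmax⟩ := Nat.find_spec hP
  set N := Nat.find hP with hNdef
  rw [Finset.mem_Icc] at hNmem
  have h1N : 1 ≤ N := hNmem.1
  have hNn : N ≤ n := hNmem.2
  have hstrict : ∀ m, 1 ≤ m → m < N → tau (2 ^ m - 1) < tau (2 ^ N - 1) := by
    intro m h1 hm
    have hmle : tau (2 ^ m - 1) ≤ tau (2 ^ N - 1) :=
      hNmax m (Finset.mem_Icc.mpr ⟨h1, le_trans hm.le hNn⟩)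
    rcases lt_or_eq_of_le hmle with h | h
    · exact h
    · exfalso
      apply Nat.find_min hP hm
      refine ⟨Finset.mem_Icc.mpr ⟨h1, le_trans hm.le hNn⟩, ?_⟩
      intro k hk
      rw [h]
      exact hNmax k hk
  have h2N : n < 2 * N := by
    by_contra hc
    push_neg at hc
    have hdvd : 2 ^ N - 1 ∣ 2 ^ (2 * N) - 1 := by
      have := Nat.sub_dvd_pow_sub_pow (2 ^ N) 1 2
      simpa [← pow_mul, mul_comm] using this
    have hlt : 2 ^ N - 1 < 2 ^ (2 * N) - 1 := by
      have h1 : 2 ^ N < 2 ^ (2 * N) := Nat.pow_lt_pow_right (by norm_num) (by omega)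
      have h2 : 0 < 2 ^ N := Nat.pow_pos (by norm_num)
      omega
    have hpos : 0 < 2 ^ N - 1 := by
      have : (2 : ℕ) ^ 1 ≤ 2 ^ N := Nat.pow_le_pow_right (by norm_num) h1N
      simp at this; omega
    have h3 := tau_lt_tau hpos hdvd hlt
    have h4 := hNmax (2 * N) (Finset.mem_Icc.mpr ⟨by omega, hc⟩)
    omega
  exact ⟨N, ⟨by omega, hstrict⟩, h2N, hNn⟩
end
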